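/- arXiv:2106.00841 — 14 statements merged into one kernel-verified Lean document; each statement's English description precedes it below -/
import Mathlib

section
/- For subadditive valuations, any envy-free allocation with transfers (A,t) satisfies W^ρ(A,t) ≥ (1/n)·W^ρ(A*), where W^ρ denotes the ρ-mean welfare (ρ > 0) and A* is any allocation (in particular, the ρ-mean-welfare-maximizing one); all agent utilities v_i(A_i)+t_i are assumed nonnegative. -/
/-- For subadditive valuations, any envy-free allocation with transfers
satisfies `W^ρ(A,t) ≥ (1/n) · W^ρ(A*)` for every ρ > 0. -/
theorem stmt1 {n : ℕ} (hn : 0 < n) {ι : Type*} [Fintype ι] [DecidableEq ι]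
    (v : Fin n → Finset ι → ℝ)
    (hv0 : ∀ i, v i ∅ = 0)
    (hvnonneg : ∀ i S, 0 ≤ v i S)
    (hmono : ∀ i (S T : Finset ι), S ⊆ T → v i S ≤ v i T)
    (hsub : ∀ i (S T : Finset ι), v i (S ∪ T) ≤ v i S + v i T)
    (ρ : ℝ) (hρ : 0 < ρ)
    (A : Fin n → Finset ι) (hpart : ∀ x : ι, ∃! i, x ∈ A i)
    (t : Fin n → ℝ) (ht : ∑ i, t i = 0)
    (hEF : ∀ i j, v i (A i) + t i ≥ v i (A j) + t j)
    (hut : ∀ i, 0 ≤ v i (A i) + t i)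
    (Astar : Fin n → Finset ι) (hpartstar : ∀ x : ι, ∃! i, x ∈ Astar i) :
    ((1 / (n : ℝ)) * ∑ i, (v i (A i) + t i) ^ ρ) ^ (1 / ρ) ≥
      (1 / (n : ℝ)) * ((1 / (n : ℝ)) * ∑ i, (v i (Astar i)) ^ ρ) ^ (1 / ρ) := by
  have hnpos : (0 : ℝ) < n := by exact_mod_cast hn
  have hinv : (0 : ℝ) ≤ 1 / n := by positivity
  -- key pointwise bound: (1/n) * v i (Astar i) ≤ v i (A i) + t i
  have key : ∀ i, (1 / (n : ℝ)) * v i (Astar i) ≤ v i (A i) + t i := by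
    intro i
    have hUnion : ∀ s : Finset (Fin n), v i (s.biUnion A) ≤ ∑ j ∈ s, v i (A j) := by
      intro s
      induction s using Finset.induction_on with
      | empty => simp [hv0]
      | insert hnotmem ih =>
        rename_i hnotmem ih
        rw [Finset.biUnion_insert, Finset.sum_insert hnotmem]
        exact le_trans (hsub i _ _) (by linarith)
    have hcover : Astar i ⊆ Finset.univ.biUnion A := by
      intro x _
      obtain ⟨j, hj, _⟩ := hpart x
      exact Finset.mem_biUnion.2 ⟨j, Finset.mem_univ j, hj⟩
    have h1 : v i (Astar i) ≤ ∑ j, v i (A j) :=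
      le_trans (hmono i _ _ hcover) (hUnion Finset.univ)
    have h2 : ∑ j, v i (A j) = ∑ j, (v i (A j) + t j) := by
      rw [Finset.sum_add_distrib, ht, add_zero]
    have h3 : ∑ j, (v i (A j) + t j) ≤ ∑ _j : Fin n, (v i (A i) + t i) :=
      Finset.sum_le_sum fun j _ => hEF i j
    have h4 : ∑ _j : Fin n, (v i (A i) + t i) = n * (v i (A i) + t i) := by
      simp [Finset.sum_const, nsmul_eq_mul]; ring
    have : v i (Astar i) ≤ n * (v i (A i) + t i) := by
      rw [h2] at h1; linarith
    rw [div_mul_eq_mul_div, one_mul, div_le_iff₀ hnpos]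
    linarith [this]
  -- raise to power ρ and sum
  have hsum : (1 / (n : ℝ)) ^ ρ * ((1 / (n : ℝ)) * ∑ i, (v i (Astar i)) ^ ρ)
      ≤ (1 / (n : ℝ)) * ∑ i, (v i (A i) + t i) ^ ρ := by
    have hterm : ∀ i, (1 / (n : ℝ)) ^ ρ * (v i (Astar i)) ^ ρ ≤ (v i (A i) + t i) ^ ρ := by
      intro i
      rw [← Real.mul_rpow hinv (hvnonneg i _)]
      exact Real.rpow_le_rpow (mul_nonneg hinv (hvnonneg _ _)) (key i) hρ.le
    calc (1 / (n : ℝ)) ^ ρ * ((1 / (n : ℝ)) * ∑ i, (v i (Astar i)) ^ ρ)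
        = (1 / (n : ℝ)) * ∑ i, (1 / (n : ℝ)) ^ ρ * (v i (Astar i)) ^ ρ := by
          simp only [Finset.mul_sum]
          exact Finset.sum_congr rfl fun i _ => by ring
      _ ≤ (1 / (n : ℝ)) * ∑ i, (v i (A i) + t i) ^ ρ := by
          apply mul_le_mul_of_nonneg_left _ hinv
          exact Finset.sum_le_sum fun i _ => hterm i
  have hL : (0:ℝ) ≤ (1 / (n : ℝ)) ^ ρ * ((1 / (n : ℝ)) * ∑ i, (v i (Astar i)) ^ ρ) :=
    mul_nonneg (Real.rpow_nonneg hinv ρ)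
      (mul_nonneg hinv (Finset.sum_nonneg fun i _ => Real.rpow_nonneg (hvnonneg _ _) ρ))
  have hrpow := Real.rpow_le_rpow hL hsum (by positivity : (0:ℝ) ≤ 1 / ρ)
  have hfac : ((1 / (n : ℝ)) ^ ρ * ((1 / (n : ℝ)) * ∑ i, (v i (Astar i)) ^ ρ)) ^ (1 / ρ)
      = (1 / (n : ℝ)) * ((1 / (n : ℝ)) * ∑ i, (v i (Astar i)) ^ ρ) ^ (1 / ρ) := by
    rw [Real.mul_rpow (Real.rpow_nonneg hinv ρ)
        (mul_nonneg hinv (Finset.sum_nonneg fun i _ => Real.rpow_nonneg (hvnonneg _ _) ρ)),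
      ← Real.rpow_mul hinv, mul_one_div, div_self hρ.ne', Real.rpow_one]
  rw [hfac] at hrpow
  exact hrpow
end

section
/- An allocation A is envy-freeable (there exist payments p with v_i(A_i)+p_i ≥ v_i(A_j)+p_j for all i,j) if and only if A maximizes utilitarian welfare over all permutations of its bundles: for every permutation π of the agents, ∑_i v_i(A_i) ≥ ∑_i v_i(A_{π(i)}). -/
open Finset

/-- Weight of a walk starting at `i` visiting the vertices in `l` in order. -/
def wtAux {n : ℕ} (w : Fin n → Fin n → ℝ) : Fin n → List (Fin n) → ℝ
  | _, [] => 0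
  | i, j :: l => w i j + wtAux w j l

lemma wt_split {n : ℕ} (w : Fin n → Fin n → ℝ) (y : Fin n) :
    ∀ (a : List (Fin n)) (i : Fin n) (b : List (Fin n)),
      wtAux w i (a ++ y :: b) = wtAux w i (a ++ [y]) + wtAux w y b := by
  intro a
  induction a with
  | nil => intro i b; simp [wtAux]
  | cons c a ih => intro i b; simp only [List.cons_append, wtAux, List.append_eq]; rw [ih]; ring

lemma wt_zip {n : ℕ} (w : Fin n → Fin n → ℝ) (x : Fin n) :
    ∀ (l : List (Fin n)) (i : Fin n),
      wtAux w i (l ++ [x]) = (List.zipWith w (i :: l) (l ++ [x])).sum := by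
  intro l
  induction l with
  | nil => intro i; simp [wtAux]
  | cons j l ih => intro i; simp [wtAux, ih]

lemma cycle_nodup {n : ℕ} (w : Fin n → Fin n → ℝ)
    (H : ∀ π : Equiv.Perm (Fin n), ∑ i, w i (π i) ≤ 0)
    (hdiag : ∀ i, w i i = 0)
    (c : Fin n) (l : List (Fin n)) (hnd : (c :: l).Nodup) :
    wtAux w c (l ++ [c]) ≤ 0 := by
  set L : List (Fin n) := c :: l with hL
  have key : ∑ i, w i (L.formPerm i) = wtAux w c (l ++ [c]) := by
    rw [← Finset.sum_subset (Finset.subset_univ L.toFinset)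
      (fun x _ hx => by
        rw [List.formPerm_apply_of_notMem (by simpa using hx)]
        exact hdiag x)]
    rw [List.sum_toFinset _ hnd]
    have hmap : L.map (fun x => w x (L.formPerm x))
        = List.zipWith w L (L.rotate 1) := by
      apply List.ext_getElem
      · simp
      · intro k h1 h2
        rw [List.getElem_map, List.getElem_zipWith, List.getElem_rotate,
          List.formPerm_apply_getElem _ hnd]
    have hrot : L.rotate 1 = l ++ [c] := by
      have := List.rotate_cons_succ l c 0
      simp only [zero_add, List.rotate_zero] at this
      rw [hL]; exact this
    rw [hmap, hrot, ← wt_zip]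
  rw [← key]; exact H _

lemma not_nodup_split {n : ℕ} {l : List (Fin n)} (h : ¬ l.Nodup) :
    ∃ (y : Fin n) (a b₁ b₂ : List (Fin n)), l = a ++ y :: (b₁ ++ y :: b₂) := by
  obtain ⟨y, hy⟩ := List.exists_duplicate_iff_not_nodup.2 h
  rw [List.duplicate_iff_sublist, List.cons_sublist_iff] at hy
  obtain ⟨r₁, r₂, rfl, h1, h2⟩ := hy
  obtain ⟨s, t, rfl⟩ := List.append_of_mem h1
  obtain ⟨u, v, rfl⟩ := List.append_of_mem (List.singleton_sublist.mp h2)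
  exact ⟨y, s, t ++ u, v, by simp⟩

lemma closed_le {n : ℕ} (w : Fin n → Fin n → ℝ)
    (H : ∀ π : Equiv.Perm (Fin n), ∑ i, w i (π i) ≤ 0)
    (hdiag : ∀ i, w i i = 0) :
    ∀ (N : ℕ) (x : Fin n) (l : List (Fin n)), l.length ≤ N →
      wtAux w x (l ++ [x]) ≤ 0 := by
  intro N
  induction N with
  | zero =>
      intro x l h
      rw [List.length_eq_zero_iff.mp (Nat.le_zero.mp h)]
      simp [wtAux, hdiag]
  | succ N ih =>
      intro x l h
      by_cases hx : x ∈ l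
      · obtain ⟨a, b, rfl⟩ := List.append_of_mem hx
        have hlen := h; simp only [List.length_append, List.length_cons] at hlen
        have e : (a ++ x :: b) ++ [x] = a ++ x :: (b ++ [x]) := by simp
        rw [e, wt_split w x a x (b ++ [x])]
        have h1 := ih x a (by omega)
        have h2 := ih x b (by omega)
        linarith
      · by_cases hnd : l.Nodup
        · exact cycle_nodup w H hdiag x l (by simp [hx, hnd])
        · obtain ⟨y, a, b₁, b₂, rfl⟩ := not_nodup_split hnd
          have hlen := h
          simp only [List.length_append, List.length_cons] at hlen
          have e : (a ++ y :: (b₁ ++ y :: b₂)) ++ [x]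
              = a ++ y :: (b₁ ++ y :: (b₂ ++ [x])) := by simp
          rw [e, wt_split w y a x (b₁ ++ y :: (b₂ ++ [x])),
            wt_split w y b₁ y (b₂ ++ [x])]
          have h1 := ih y b₁ (by omega)
          have h2 := ih x (a ++ y :: b₂)
            (by simp only [List.length_append, List.length_cons]; omega)
          have e2 : (a ++ y :: b₂) ++ [x] = a ++ y :: (b₂ ++ [x]) := by simp
          rw [e2, wt_split w y a x (b₂ ++ [x])] at h2
          linarith

/-- Bellman–Ford style iterates. -/
def Lf {n : ℕ} (w : Fin n → Fin n → ℝ)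
    (hn : (Finset.univ : Finset (Fin n)).Nonempty) : ℕ → Fin n → ℝ
  | 0, _ => 0
  | (k + 1), i => Finset.univ.sup' hn (fun j => w i j + Lf w hn k j)

lemma Lf_zero {n : ℕ} (w : Fin n → Fin n → ℝ)
    (hn : (Finset.univ : Finset (Fin n)).Nonempty) (i : Fin n) :
    Lf w hn 0 i = 0 := rfl

lemma Lf_succ {n : ℕ} (w : Fin n → Fin n → ℝ)
    (hn : (Finset.univ : Finset (Fin n)).Nonempty) (k : ℕ) (i : Fin n) :
    Lf w hn (k + 1) i = Finset.univ.sup' hn (fun j => w i j + Lf w hn k j) := rfl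

lemma Lf_le_succ {n : ℕ} (w : Fin n → Fin n → ℝ) (hdiag : ∀ i, w i i = 0)
    (hn : (Finset.univ : Finset (Fin n)).Nonempty) :
    ∀ (k : ℕ) (i : Fin n), Lf w hn k i ≤ Lf w hn (k + 1) i := by
  intro k
  induction k with
  | zero =>
      intro i
      rw [Lf_zero, Lf_succ]
      refine le_trans (le_of_eq ?_)
        (Finset.le_sup' (fun j => w i j + Lf w hn 0 j) (Finset.mem_univ i))
      show (0 : ℝ) = w i i + Lf w hn 0 i
      rw [hdiag, Lf_zero, add_zero]
  | succ k ih =>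
      intro i
      rw [Lf_succ, Lf_succ]
      apply Finset.sup'_le
      intro j _
      calc w i j + Lf w hn k j ≤ w i j + Lf w hn (k + 1) j := by linarith [ih j]
        _ ≤ _ := Finset.le_sup' (fun j => w i j + Lf w hn (k + 1) j)
            (Finset.mem_univ j)

lemma Lf_mono {n : ℕ} (w : Fin n → Fin n → ℝ) (hdiag : ∀ i, w i i = 0)
    (hn : (Finset.univ : Finset (Fin n)).Nonempty)
    {k m : ℕ} (hkm : k ≤ m) (i : Fin n) : Lf w hn k i ≤ Lf w hn m i := by
  induction m, hkm using Nat.le_induction with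
  | base => exact le_refl _
  | succ m hm ih => exact le_trans ih (Lf_le_succ w hdiag hn m i)

lemma wt_le_Lf {n : ℕ} (w : Fin n → Fin n → ℝ)
    (hn : (Finset.univ : Finset (Fin n)).Nonempty) :
    ∀ (l : List (Fin n)) (i : Fin n), wtAux w i l ≤ Lf w hn l.length i := by
  intro l
  induction l with
  | nil => intro i; exact le_refl 0
  | cons j l ih =>
      intro i
      show w i j + wtAux w j l ≤ Lf w hn (l.length + 1) i
      rw [Lf_succ]
      calc w i j + wtAux w j l ≤ w i j + Lf w hn l.length j := by linarith [ih j]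
        _ ≤ _ := Finset.le_sup' (fun j => w i j + Lf w hn l.length j)
            (Finset.mem_univ j)

lemma exists_walk {n : ℕ} (w : Fin n → Fin n → ℝ)
    (hn : (Finset.univ : Finset (Fin n)).Nonempty) :
    ∀ (k : ℕ) (i : Fin n), ∃ l : List (Fin n),
      l.length ≤ k ∧ Lf w hn k i ≤ wtAux w i l := by
  intro k
  induction k with
  | zero => intro i; exact ⟨[], by simp [Lf_zero, wtAux]⟩
  | succ k ih =>
      intro i
      obtain ⟨j, _, hj⟩ := Finset.exists_mem_eq_sup' hn (fun j => w i j + Lf w hn k j)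
      obtain ⟨l, hl, hwl⟩ := ih j
      refine ⟨j :: l, by simpa using hl, ?_⟩
      show Lf w hn (k + 1) i ≤ w i j + wtAux w j l
      rw [Lf_succ, hj]
      linarith

lemma wt_le_top {n : ℕ} (w : Fin n → Fin n → ℝ)
    (H : ∀ π : Equiv.Perm (Fin n), ∑ i, w i (π i) ≤ 0)
    (hdiag : ∀ i, w i i = 0)
    (hn : (Finset.univ : Finset (Fin n)).Nonempty) :
    ∀ (N : ℕ) (l : List (Fin n)) (i : Fin n), l.length ≤ N →
      wtAux w i l ≤ Lf w hn n i := by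
  intro N
  induction N with
  | zero =>
      intro l i h
      have hn' : l.length ≤ n := by omega
      exact le_trans (wt_le_Lf w hn l i) (Lf_mono w hdiag hn hn' i)
  | succ N ih =>
      intro l i h
      by_cases hlong : l.length ≤ n
      · exact le_trans (wt_le_Lf w hn l i) (Lf_mono w hdiag hn hlong i)
      · have hnd : ¬ l.Nodup := fun hh => hlong (by simpa using hh.length_le_card)
        obtain ⟨y, a, b₁, b₂, rfl⟩ := not_nodup_split hnd
        have hlen := h
        simp only [List.length_append, List.length_cons] at hlen
        rw [wt_split w y a i (b₁ ++ y :: b₂), wt_split w y b₁ y b₂]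
        have h1 := closed_le w H hdiag b₁.length y b₁ le_rfl
        have h2 := ih (a ++ y :: b₂) i
          (by simp only [List.length_append, List.length_cons]; omega)
        rw [wt_split w y a i b₂] at h2
        linarith

lemma exists_potential {n : ℕ} (w : Fin n → Fin n → ℝ)
    (H : ∀ π : Equiv.Perm (Fin n), ∑ i, w i (π i) ≤ 0)
    (hdiag : ∀ i, w i i = 0) :
    ∃ p : Fin n → ℝ, ∀ i j, p i ≥ w i j + p j := by
  rcases Nat.eq_zero_or_pos n with h0 | hpos
  · subst h0; exact ⟨0, fun i => i.elim0⟩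
  · have hn : (Finset.univ : Finset (Fin n)).Nonempty :=
      ⟨⟨0, hpos⟩, Finset.mem_univ _⟩
    refine ⟨Lf w hn n, fun i j => ?_⟩
    obtain ⟨l, hl, hwl⟩ := exists_walk w hn n j
    have h1 : wtAux w i (j :: l) ≤ Lf w hn n i :=
      wt_le_top w H hdiag hn (j :: l).length (j :: l) i le_rfl
    simp only [wtAux] at h1
    linarith

/-- An allocation is envy-freeable iff it maximizes utilitarian welfare
over all permutations of its bundles. -/
theorem stmt2 {n : ℕ} {ι : Type*} [Fintype ι]
    (v : Fin n → Finset ι → ℝ)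
    (A : Fin n → Finset ι)
    (hpart : ∀ x : ι, ∃! i, x ∈ A i) :
    (∃ p : Fin n → ℝ, ∀ i j, v i (A i) + p i ≥ v i (A j) + p j) ↔
      ∀ π : Equiv.Perm (Fin n), ∑ i, v i (A i) ≥ ∑ i, v i (A (π i)) := by
  constructor
  · rintro ⟨p, hp⟩ π
    have h2 : ∑ i, (v i (A (π i)) + p (π i)) ≤ ∑ i, (v i (A i) + p i) :=
      Finset.sum_le_sum (fun i _ => hp i (π i))
    rw [Finset.sum_add_distrib, Finset.sum_add_distrib] at h2
    have h3 : ∑ i, p (π i) = ∑ i, p i := Equiv.sum_comp π p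
    linarith
  · intro hmax
    obtain ⟨p, hp⟩ := exists_potential (fun i j => v i (A j) - v i (A i))
      (fun π => by
        have h1 := hmax π
        have h2 : ∑ i, (v i (A (π i)) - v i (A i))
            = ∑ i, v i (A (π i)) - ∑ i, v i (A i) := Finset.sum_sub_distrib _ _
        linarith)
      (fun i => by ring)
    exact ⟨p, fun i j => by have h := hp i j; linarith⟩
end

section
/- An allocation A is envy-freeable if and only if its envy-graph G_A contains no directed cycle of positive total weight, where the arc (i,j) has weight w_A(i,j) = v_i(A_j) − v_i(A_i). -/
/-- Weight of a walk `f 0, f 1, …, f m` in a weighted digraph on `Fin n`. -/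
private def pwSum {n : ℕ} (w : Fin n → Fin n → ℝ) (f : ℕ → Fin n) (m : ℕ) : ℝ :=
  ∑ s ∈ Finset.range m, w (f s) (f (s + 1))

/-- Weights of injective paths starting at `i`. -/
private def pathSet {n : ℕ} (w : Fin n → Fin n → ℝ) (i : Fin n) : Set ℝ :=
  {W | ∃ (m : ℕ) (f : ℕ → Fin n),
    (∀ a b, a ≤ m → b ≤ m → f a = f b → a = b) ∧ f 0 = i ∧ pwSum w f m = W}

private lemma pathSet_zero_mem {n : ℕ} (w : Fin n → Fin n → ℝ) (i : Fin n) :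
    (0 : ℝ) ∈ pathSet w i :=
  ⟨0, fun _ => i, fun a b ha hb _ => by omega, rfl, by simp [pwSum]⟩

private lemma pathSet_bddAbove {n : ℕ} (w : Fin n → Fin n → ℝ) (hw0 : ∀ i, w i i = 0)
    (i : Fin n) : BddAbove (pathSet w i) := by
  obtain ⟨B, hB⟩ : ∃ B, ∀ p : Fin n × Fin n, w p.1 p.2 ≤ B := Finite.exists_le _
  have hB' : ∀ a b : Fin n, w a b ≤ B := fun a b => hB (a, b)
  have hBnn : (0 : ℝ) ≤ B := (hw0 i) ▸ hB' i i
  refine ⟨(n : ℝ) * B, ?_⟩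
  rintro W ⟨m, f, hinj, hf0, rfl⟩
  have hmn : m < n := by
    have hI : Function.Injective (fun k : Fin (m + 1) => f k.val) := fun a b hab =>
      Fin.ext (hinj _ _ (Nat.lt_succ_iff.mp a.isLt) (Nat.lt_succ_iff.mp b.isLt) hab)
    have := Fintype.card_le_of_injective _ hI
    simpa using this
  calc pwSum w f m ≤ ∑ _s ∈ Finset.range m, B :=
        Finset.sum_le_sum fun s _ => hB' _ _
    _ = (m : ℝ) * B := by simp [mul_comm]
    _ ≤ (n : ℝ) * B := by
        exact mul_le_mul_of_nonneg_right (by exact_mod_cast hmn.le) hBnn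

/-- Key lemma: if there is no positive-weight directed cycle, a potential exists. -/
private lemma exists_potential_s3 {n : ℕ} (w : Fin n → Fin n → ℝ) (hw0 : ∀ i, w i i = 0)
    (hcyc : ∀ (m : ℕ) (hm : 0 < m) (c : Fin m → Fin n), Function.Injective c →
      ∑ i : Fin m, w (c i) (c ⟨(i.val + 1) % m, Nat.mod_lt _ hm⟩) ≤ 0) :
    ∃ p : Fin n → ℝ, ∀ i j, p i ≥ w i j + p j := by
  classical
  refine ⟨fun i => sSup (pathSet w i), ?_⟩
  intro i j
  have key : ∀ W ∈ pathSet w j, w i j + W ≤ sSup (pathSet w i) := by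
    rintro W ⟨m, f, hinj, hf0, rfl⟩
    by_cases hex : ∃ t, t ≤ m ∧ f t = i
    · obtain ⟨t, htm, hft⟩ := hex
      -- the cycle f 0, …, f t (= i) with the closing edge i → f 0 = j
      have hcy : pwSum w f t + w i (f 0) ≤ 0 := by
        have hI : Function.Injective (fun k : Fin (t + 1) => f k.val) := fun a b hab =>
          Fin.ext (hinj _ _ (le_trans (Nat.lt_succ_iff.mp a.isLt) htm)
            (le_trans (Nat.lt_succ_iff.mp b.isLt) htm) hab)
        have h1 := hcyc (t + 1) (Nat.succ_pos t) (fun k => f k.val) hI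
        have h2 : ∑ k : Fin (t + 1), w (f k.val) (f ((k.val + 1) % (t + 1))) =
            ∑ s ∈ Finset.range (t + 1), w (f s) (f ((s + 1) % (t + 1))) :=
          Fin.sum_univ_eq_sum_range (fun s => w (f s) (f ((s + 1) % (t + 1)))) (t + 1)
        rw [h2] at h1
        rw [Finset.sum_range_succ, Nat.mod_self] at h1
        have h3 : ∑ s ∈ Finset.range t, w (f s) (f ((s + 1) % (t + 1))) = pwSum w f t := by
          refine Finset.sum_congr rfl fun s hs => ?_
          rw [Nat.mod_eq_of_lt (by simpa using Nat.succ_lt_succ (Finset.mem_range.mp hs))]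
        rw [h3, hft] at h1
        exact h1
      -- the tail path f t (= i), …, f m
      have htail : pwSum w (fun s => f (t + s)) (m - t) ∈ pathSet w i :=
        ⟨m - t, fun s => f (t + s),
          fun a b ha hb hab => by
            have := hinj (t + a) (t + b) (by omega) (by omega) hab; omega,
          hft, rfl⟩
      have htail' : pwSum w (fun s => f (t + s)) (m - t) ≤ sSup (pathSet w i) :=
        le_csSup (pathSet_bddAbove w hw0 i) htail
      have hsplit : pwSum w f m = pwSum w f t + pwSum w (fun s => f (t + s)) (m - t) := by
        have hm' : m = t + (m - t) := by omega
        unfold pwSum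
        conv_lhs => rw [hm']
        rw [Finset.sum_range_add]
        simp only
        exact congrArg _ (Finset.sum_congr rfl fun s _ => by rw [Nat.add_assoc])
      rw [hf0] at hcy
      linarith
    · push_neg at hex
      set g : ℕ → Fin n := fun s => if s = 0 then i else f (s - 1) with hg
      have hmem : pwSum w g (m + 1) ∈ pathSet w i := by
        refine ⟨m + 1, g, ?_, by simp [hg], rfl⟩
        intro a b ha hb hab
        match a, b with
        | 0, 0 => rfl
        | 0, b + 1 =>
          simp only [hg] at hab
          exact absurd hab.symm (hex b (by omega))
        | a + 1, 0 =>
          simp only [hg] at hab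
          exact absurd hab (hex a (by omega))
        | a + 1, b + 1 =>
          simp only [hg, Nat.succ_ne_zero, if_false, Nat.add_sub_cancel] at hab
          have := hinj a b (by omega) (by omega) hab; omega
      have heq : pwSum w g (m + 1) = w i (f 0) + pwSum w f m := by
        unfold pwSum
        rw [Finset.sum_range_succ']
        have hg0 : g 0 = i := by simp [hg]
        have hg1 : ∀ s : ℕ, g (s + 1) = f s := fun s => by simp [hg]
        rw [hg0, hg1 0]
        have : ∀ s ∈ Finset.range m, w (g (s + 1)) (g (s + 1 + 1)) = w (f s) (f (s + 1)) := by
          intro s _; rw [hg1 s, hg1 (s + 1)]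
        rw [Finset.sum_congr rfl this]
        ring
      have := le_csSup (pathSet_bddAbove w hw0 i) hmem
      rw [heq, hf0] at this
      linarith
  have h1 : sSup (pathSet w j) ≤ sSup (pathSet w i) - w i j :=
    csSup_le ⟨0, pathSet_zero_mem w j⟩ fun W hW => by linarith [key W hW]
  simp only [ge_iff_le]
  linarith

/-- An allocation is envy-freeable iff its envy-graph, with arc weights
`w(i,j) = v i (A j) - v i (A i)`, has no positive-weight directed cycle (a cycle is a
cyclic sequence of distinct agents). -/
theorem stmt3 {n : ℕ} {ι : Type*} [Fintype ι]
    (v : Fin n → Finset ι → ℝ)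
    (A : Fin n → Finset ι)
    (hpart : ∀ x : ι, ∃! i, x ∈ A i) :
    (∃ p : Fin n → ℝ, ∀ i j, v i (A i) + p i ≥ v i (A j) + p j) ↔
      ∀ (m : ℕ) (hm : 0 < m) (c : Fin m → Fin n), Function.Injective c →
        ∑ i : Fin m,
          (v (c i) (A (c ⟨(i.val + 1) % m, Nat.mod_lt _ hm⟩)) - v (c i) (A (c i))) ≤ 0 := by
  constructor
  · rintro ⟨p, hp⟩ m hm c hc
    haveI : NeZero m := ⟨hm.ne'⟩
    have key : ∀ i : Fin m, (⟨(i.val + 1) % m, Nat.mod_lt _ hm⟩ : Fin m) = i + 1 := by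
      intro i
      apply Fin.ext
      simp only [Fin.add_def, Fin.val_one']
      rw [Nat.add_mod i.val 1 m, Nat.mod_eq_of_lt i.isLt]
    calc ∑ i : Fin m, (v (c i) (A (c ⟨(i.val + 1) % m, Nat.mod_lt _ hm⟩)) - v (c i) (A (c i)))
        ≤ ∑ i : Fin m, (p (c i) - p (c (i + 1))) := by
          refine Finset.sum_le_sum fun i _ => ?_
          rw [key i]
          have := hp (c i) (c (i + 1))
          linarith
      _ = 0 := by
          rw [Finset.sum_sub_distrib]
          have : ∑ i : Fin m, p (c (i + 1)) = ∑ i : Fin m, p (c i) :=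
            Fintype.sum_equiv (Equiv.addRight 1) _ _ fun i => rfl
          rw [this, sub_self]
  · intro hcyc
    obtain ⟨p, hp⟩ := exists_potential_s3 (fun i j => v i (A j) - v i (A i))
      (fun i => sub_self _) hcyc
    exact ⟨p, fun i j => by have := hp i j; simp only [ge_iff_le] at this ⊢; linarith⟩
end

section
/- If A is an envy-freeable allocation and s_i is defined as the maximum weight of a directed path starting at vertex i in the envy-graph G_A (with s_i = 0 allowed via the empty path), then the allocation with subsidies (A, s) is envy-free, i.e., v_i(A_i) + s_i ≥ v_i(A_j) + s_j for all i, j. -/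
/-- Total weight of a directed path (given as a list of vertices). -/
def pathWeight {α : Type*} (w : α → α → ℝ) : List α → ℝ
  | [] => 0
  | [_] => 0
  | a :: b :: l => w a b + pathWeight w (b :: l)

lemma pathWeight_split {α : Type*} (w : α → α → ℝ) (a : α) :
    ∀ (l₁ l₂ : List α),
      pathWeight w (l₁ ++ a :: l₂) = pathWeight w (l₁ ++ [a]) + pathWeight w (a :: l₂)
  | [], l₂ => by simp [pathWeight]
  | [b], l₂ => by simp [pathWeight]
  | b :: c :: l₁, l₂ => by
      have ih := pathWeight_split w a (c :: l₁) l₂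
      show w b c + pathWeight w ((c :: l₁) ++ a :: l₂)
          = w b c + pathWeight w ((c :: l₁) ++ [a]) + pathWeight w (a :: l₂)
      rw [ih]; ring

lemma pathWeight_pot {α : Type*} (w : α → α → ℝ) (φ : α → ℝ)
    (hw : ∀ a b, w a b ≤ φ b - φ a) :
    ∀ (l : List α) (a b : α), pathWeight w (a :: (l ++ [b])) ≤ φ b - φ a
  | [], a, b => by simpa [pathWeight] using hw a b
  | c :: l, a, b => by
      have h1 := pathWeight_pot w φ hw l c b
      have h2 := hw a c
      show w a c + pathWeight w (c :: (l ++ [b])) ≤ φ b - φ a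
      linarith

/-- If `A` is envy-freeable and `s i` is the maximum weight of a directed
simple path starting at `i` in the envy-graph (the empty path, of weight 0, allowed),
then `(A, s)` is envy-free. -/
theorem stmt4 {n : ℕ} {ι : Type*} [Fintype ι]
    (v : Fin n → Finset ι → ℝ)
    (A : Fin n → Finset ι)
    (hpart : ∀ x : ι, ∃! i, x ∈ A i)
    (hfree : ∃ p : Fin n → ℝ, ∀ i j, v i (A i) + p i ≥ v i (A j) + p j)
    (s : Fin n → ℝ)
    (hub : ∀ (i : Fin n) (p : List (Fin n)), p.Nodup → p.head? = some i →
      pathWeight (fun i j => v i (A j) - v i (A i)) p ≤ s i)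
    (hach : ∀ i : Fin n, ∃ p : List (Fin n), p.Nodup ∧ p.head? = some i ∧
      pathWeight (fun i j => v i (A j) - v i (A i)) p = s i) :
    ∀ i j, v i (A i) + s i ≥ v i (A j) + s j := by
  obtain ⟨p, hp⟩ := hfree
  set w : Fin n → Fin n → ℝ := fun i j => v i (A j) - v i (A i) with hwdef
  have hw : ∀ a b : Fin n, w a b ≤ (fun x => -p x) b - (fun x => -p x) a := by
    intro a b
    have := hp a b
    simp only [hwdef]
    linarith
  intro i j
  by_cases hij : i = j
  · subst hij; linarith
  suffices h : w i j + s j ≤ s i by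
    simp only [hwdef] at h; linarith
  obtain ⟨q, hnd, hhd, hwt⟩ := hach j
  cases q with
  | nil => simp at hhd
  | cons j' t =>
    have hj : j = j' := by symm; simpa using hhd
    subst hj
    by_cases hi : i ∈ j :: t
    · obtain ⟨l₁, l₂, heq⟩ := List.append_of_mem hi
      cases l₁ with
      | nil =>
        simp only [List.nil_append, List.cons.injEq] at heq
        exact absurd heq.1.symm hij
      | cons c l₁' =>
        have hc : j = c := by
          have := heq
          simp only [List.cons_append, List.cons.injEq] at this
          exact this.1
        subst hc
        have hsplit : pathWeight w (j :: t)
            = pathWeight w ((j :: l₁') ++ [i]) + pathWeight w (i :: l₂) := by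
          rw [heq]; exact pathWeight_split w i (j :: l₁') l₂
        have h1 : pathWeight w (j :: (l₁' ++ [i])) ≤ (fun x => -p x) i - (fun x => -p x) j :=
          pathWeight_pot w _ hw l₁' j i
        have hsub : (i :: l₂).Sublist (j :: t) := by
          rw [heq]; exact List.sublist_append_right _ _
        have h2 : pathWeight w (i :: l₂) ≤ s i :=
          hub i _ (hnd.sublist hsub) rfl
        have h3 : w i j ≤ (fun x => -p x) j - (fun x => -p x) i := hw i j
        have : pathWeight w ((j :: l₁') ++ [i]) = pathWeight w (j :: (l₁' ++ [i])) := rfl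
        rw [← hwt, hsplit, this]
        simp only at h1 h3
        linarith
    · have hnd' : (i :: j :: t).Nodup := List.nodup_cons.mpr ⟨hi, hnd⟩
      have := hub i (i :: j :: t) hnd' rfl
      have he : pathWeight w (i :: j :: t) = w i j + pathWeight w (j :: t) := rfl
      rw [he, hwt] at this
      exact this
end

section
/- Given an allocation B with b-bounded envy among n agents, there exists an envy-free allocation with transfers (A,t), obtained by reassigning the bundles of B, such that the total transfer satisfies ∑_i |t_i| ≤ 2bn². -/
open Finset

/-- Cost of a path (list of vertices) with edge costs `c`. -/
private def pathCost {α : Type*} (c : α → α → ℝ) : List α → ℝ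
  | [] => 0
  | [_] => 0
  | a :: b :: l => c a b + pathCost c (b :: l)

private lemma pathCost_nil {α : Type*} (c : α → α → ℝ) : pathCost c [] = 0 := rfl

private lemma pathCost_singleton {α : Type*} (c : α → α → ℝ) (a : α) :
    pathCost c [a] = 0 := rfl

private lemma pathCost_cons_cons {α : Type*} (c : α → α → ℝ) (a b : α) (l : List α) :
    pathCost c (a :: b :: l) = c a b + pathCost c (b :: l) := rfl

private lemma pathCost_append_singleton {α : Type*} (c : α → α → ℝ) :
    ∀ (l : List α) (hl : l ≠ []) (y : α),
      pathCost c (l ++ [y]) = pathCost c l + c (l.getLast hl) y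
  | [], hl, y => absurd rfl hl
  | [a], _, y => by simp [pathCost]
  | a :: b :: t, _, y => by
      have ih := pathCost_append_singleton c (b :: t) (by simp) y
      have hgl : (a :: b :: t).getLast (by simp) = (b :: t).getLast (by simp) :=
        List.getLast_cons (by simp)
      simp only [List.cons_append] at *
      rw [pathCost_cons_cons, pathCost_cons_cons, ih, hgl]
      ring

private lemma pathCost_append {α : Type*} (c : α → α → ℝ) :
    ∀ (l₁ l₂ : List α) (h : l₂ ≠ []),
      pathCost c (l₁ ++ l₂) = pathCost c (l₁ ++ [l₂.head h]) + pathCost c l₂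
  | [], l₂, h => by
      cases l₂ with
      | nil => exact absurd rfl h
      | cons x t => simp [pathCost]
  | [a], l₂, h => by
      cases l₂ with
      | nil => exact absurd rfl h
      | cons x t => simp [pathCost]
  | a :: a' :: l₁, l₂, h => by
      have ih := pathCost_append c (a' :: l₁) l₂ h
      simp only [List.cons_append] at *
      rw [pathCost_cons_cons, pathCost_cons_cons, ih]
      ring

private lemma pathCost_eq_sum_getD {α : Type*} (c : α → α → ℝ) (x₀ : α) :
    ∀ l : List α,
      pathCost c l = ∑ i ∈ Finset.range (l.length - 1),
        c (l.getD i x₀) (l.getD (i + 1) x₀)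
  | [] => by simp [pathCost]
  | [a] => by simp [pathCost]
  | a :: b :: t => by
      have ih := pathCost_eq_sum_getD c x₀ (b :: t)
      rw [pathCost_cons_cons, ih]
      have hlen : (a :: b :: t).length - 1 = ((b :: t).length - 1) + 1 := by simp
      rw [hlen, Finset.sum_range_succ']
      simp only [List.getD_cons_succ, List.getD_cons_zero]
      ring

/-- The sum of edge costs along the cycle induced by `formPerm` of a nodup list. -/
private lemma cycle_sum {α : Type*} [Fintype α] [DecidableEq α] (c : α → α → ℝ)
    (hdiag : ∀ a, c a a = 0) (l : List α) (hl : l ≠ []) (hnd : l.Nodup) :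
    ∑ a, c a (l.formPerm a) = pathCost c l + c (l.getLast hl) (l.head hl) := by
  have hlpos : 0 < l.length := List.length_pos_iff.2 hl
  have x₀ : α := l.head hl
  calc ∑ a, c a (l.formPerm a)
      = ∑ a ∈ l.toFinset, c a (l.formPerm a) := by
        refine (Finset.sum_subset (Finset.subset_univ _) ?_).symm
        intro a _ ha
        rw [List.formPerm_apply_of_notMem (by simpa using ha)]
        exact hdiag a
    _ = (l.map (fun a => c a (l.formPerm a))).sum := List.sum_toFinset _ hnd
    _ = ∑ i : Fin l.length, c l[(i:ℕ)] (l.formPerm l[(i:ℕ)]) :=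
        (Fin.sum_univ_fun_getElem l _).symm
    _ = ∑ i : Fin l.length, c (l.getD i x₀) (l.getD ((i + 1) % l.length) x₀) := by
        refine Finset.sum_congr rfl fun i _ => ?_
        rw [List.formPerm_apply_getElem l hnd i i.2,
          List.getD_eq_getElem l x₀ i.2,
          List.getD_eq_getElem l x₀ (Nat.mod_lt _ hlpos)]
    _ = ∑ i ∈ Finset.range l.length, c (l.getD i x₀) (l.getD ((i + 1) % l.length) x₀) :=
        Fin.sum_univ_eq_sum_range (fun i => c (l.getD i x₀) (l.getD ((i + 1) % l.length) x₀)) l.length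
    _ = pathCost c l + c (l.getLast hl) (l.head hl) := by
        obtain ⟨m, hm⟩ : ∃ m, l.length = m + 1 := ⟨l.length - 1, (Nat.succ_pred_eq_of_pos hlpos).symm⟩
        rw [hm, Finset.sum_range_succ]
        have h1 : ∀ i ∈ Finset.range m, c (l.getD i x₀) (l.getD ((i + 1) % (m + 1)) x₀)
            = c (l.getD i x₀) (l.getD (i + 1) x₀) := by
          intro i hi
          rw [Finset.mem_range] at hi
          rw [Nat.mod_eq_of_lt (by omega)]
        rw [Finset.sum_congr rfl h1]
        have h2 : pathCost c l = ∑ i ∈ Finset.range m, c (l.getD i x₀) (l.getD (i + 1) x₀) := by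
          rw [pathCost_eq_sum_getD c x₀ l, hm, Nat.add_sub_cancel]
        rw [← h2]
        congr 1
        have hml : m < l.length := by omega
        have h3 : (m + 1) % (m + 1) = 0 := Nat.mod_self _
        rw [h3, List.getD_eq_getElem l x₀ hml, List.getD_eq_getElem l x₀ hlpos]
        congr 1
        · rw [List.getLast_eq_getElem]; congr 1; omega
        · rw [← List.head_eq_getElem_zero hl]

private lemma pathCost_lower {α : Type*} [DecidableEq α] (c : α → α → ℝ) (e : α → ℝ) (b : ℝ)
    (hce : ∀ a b', e a - b ≤ c a b') :
    ∀ l : List α, l.Nodup → ∑ a ∈ l.dropLast.toFinset, (e a - b) ≤ pathCost c l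
  | [], _ => by simp [pathCost]
  | [a], _ => by simp [pathCost]
  | a :: b' :: t, hnd => by
      have ih := pathCost_lower c e b hce (b' :: t) hnd.of_cons
      rw [pathCost_cons_cons, List.dropLast_cons₂, List.toFinset_cons]
      have ha : a ∉ (b' :: t).dropLast.toFinset := by
        rw [List.mem_toFinset]
        intro hmem
        exact (List.nodup_cons.1 hnd).1 ((List.dropLast_sublist _).mem hmem)
      rw [Finset.sum_insert ha]
      have := hce a b'
      linarith

/-- Given an allocation `B` with `b`-bounded envy, there is an envy-free
allocation with transfers `(A, t)`, obtained by reassigning the bundles of `B`, with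
total transfer at most `2 b n²`. -/
theorem stmt6 {n : ℕ} {ι : Type*} [Fintype ι]
    (v : Fin n → Finset ι → ℝ)
    (B : Fin n → Finset ι)
    (hpart : ∀ x : ι, ∃! i, x ∈ B i)
    (b : ℝ)
    (hbound : ∀ i j, v i (B j) - v i (B i) ≤ b) :
    ∃ (π : Equiv.Perm (Fin n)) (t : Fin n → ℝ),
      ∑ i, t i = 0 ∧
      (∀ i j, v i (B (π i)) + t i ≥ v i (B (π j)) + t j) ∧
      ∑ i, |t i| ≤ 2 * b * (n : ℝ) ^ 2 := by
  classical
  rcases Nat.eq_zero_or_pos n with hn | hn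
  · subst hn
    refine ⟨1, fun _ => 0, by simp, fun i => i.elim0, by norm_num⟩
  have hnR : (0 : ℝ) < n := by exact_mod_cast hn
  have hb : 0 ≤ b := by simpa using hbound ⟨0, hn⟩ ⟨0, hn⟩
  -- optimal permutation
  obtain ⟨π, hπ⟩ := Finite.exists_max (fun π : Equiv.Perm (Fin n) => ∑ i, v i (B (π i)))
  -- edge costs
  set c : Fin n → Fin n → ℝ := fun a b' => v (π.symm a) (B a) - v (π.symm a) (B b') with hc
  have hdiag : ∀ a, c a a = 0 := fun a => sub_self _
  -- cycle nonnegativity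
  have cyc : ∀ σ : Equiv.Perm (Fin n), 0 ≤ ∑ a, c a (σ a) := by
    intro σ
    have h1 : ∑ i, v i (B (π i)) = ∑ a, v (π.symm a) (B a) :=
      Fintype.sum_equiv π _ _ (fun i => by simp)
    have h2 : ∑ i, v i (B ((π.trans σ) i)) = ∑ a, v (π.symm a) (B (σ a)) :=
      Fintype.sum_equiv π _ _ (fun i => by simp)
    have h3 := hπ (π.trans σ)
    simp only [hc, Finset.sum_sub_distrib]
    rw [← h1, ← h2]
    linarith
  -- "gain" of each bundle's owner
  set ea : Fin n → ℝ := fun a => v (π.symm a) (B a) - v (π.symm a) (B (π.symm a)) with hea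
  have sum_ea : 0 ≤ ∑ a, ea a := by
    have h1 : ∑ i, v i (B (π i)) = ∑ a, v (π.symm a) (B a) :=
      Fintype.sum_equiv π _ _ (fun i => by simp)
    have h2 : ∑ i, v i (B i) = ∑ a, v (π.symm a) (B (π.symm a)) :=
      Fintype.sum_equiv π _ _ (fun i => by simp)
    have h3 := hπ 1
    simp only [Equiv.Perm.coe_one, id_eq] at h3
    simp only [hea, Finset.sum_sub_distrib]
    rw [← h1, ← h2]
    linarith
  have ea_le : ∀ a, ea a ≤ b := fun a => hbound (π.symm a) a
  have hce : ∀ a b', ea a - b ≤ c a b' := by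
    intro a b'
    have := hbound (π.symm a) b'
    simp only [hea, hc]
    linarith
  -- the set of nodup paths ending at x
  set T : Fin n → Set (List (Fin n)) :=
    fun x => {l | l.Nodup ∧ l ≠ [] ∧ l.getLast? = some x} with hT
  have hfin : ∀ x, (T x).Finite := by
    intro x
    refine (List.finite_length_le (Fin n) n).subset ?_
    intro l hl
    have := hl.1.length_le_card
    simpa using this
  have hTne : ∀ x, (T x).Nonempty := fun x => ⟨[x], by simp [hT]⟩
  have hmin : ∀ x, ∃ l ∈ T x, ∀ l' ∈ T x, pathCost c l ≤ pathCost c l' := fun x =>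
    Set.exists_min_image (T x) (pathCost c) (hfin x) (hTne x)
  choose L hLmem hLmin using hmin
  set d : Fin n → ℝ := fun x => pathCost c (L x) with hd
  have hLnd : ∀ x, (L x).Nodup := fun x => (hLmem x).1
  have hLne : ∀ x, L x ≠ [] := fun x => (hLmem x).2.1
  have hLlast : ∀ x, (L x).getLast (hLne x) = x := by
    intro x
    have := (hLmem x).2.2
    rw [List.getLast?_eq_getLast_of_ne_nil (hLne x)] at this
    exact Option.some_injective _ this
  -- d x ≤ 0
  have d_nonpos : ∀ x, d x ≤ 0 := by
    intro x
    have h1 : [x] ∈ T x := by simp [hT]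
    have := hLmin x [x] h1
    simpa [pathCost_singleton] using this
  -- d x ≥ -(n*b)
  have d_lower : ∀ x, -((n : ℝ) * b) ≤ d x := by
    intro x
    have h1 := pathCost_lower c ea b hce (L x) (hLnd x)
    have h2 : ∑ a, (ea a - b) ≤ ∑ a ∈ (L x).dropLast.toFinset, (ea a - b) := by
      have hsd := Finset.sum_sdiff ((L x).dropLast.toFinset.subset_univ)
        (f := fun a => ea a - b)
      have hnonpos : ∑ a ∈ Finset.univ \ (L x).dropLast.toFinset, (ea a - b) ≤ 0 :=
        Finset.sum_nonpos (fun a _ => by have := ea_le a; linarith)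
      linarith
    have h3 : -((n : ℝ) * b) ≤ ∑ a, (ea a - b) := by
      have : ∑ a : Fin n, (ea a - b) = (∑ a, ea a) - n * b := by
        rw [Finset.sum_sub_distrib, Finset.sum_const, Finset.card_univ, Fintype.card_fin,
          nsmul_eq_mul]
      rw [this]
      linarith
    exact h3.trans (h2.trans h1)
  -- triangle inequality
  have tri : ∀ x y, d y ≤ d x + c x y := by
    intro x y
    by_cases hy : y ∈ L x
    · obtain ⟨l₁, l₂, hsplit⟩ := List.append_of_mem hy
      have hnd : (l₁ ++ y :: l₂).Nodup := hsplit ▸ hLnd x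
      have hndc : (y :: l₂).Nodup := (List.nodup_append.1 hnd).2.1
      have hnd1 : (l₁ ++ [y]).Nodup := by
        refine (List.Sublist.append_left ?_ l₁).nodup hnd
        exact (List.nil_sublist l₂).cons₂ y
      have hlast : (y :: l₂).getLast (by simp) = x := by
        have h : (L x).getLast? = some x := (hLmem x).2.2
        rw [hsplit, List.getLast?_append_of_ne_nil l₁ (by simp),
          List.getLast?_eq_getLast_of_ne_nil (l := y :: l₂) (by simp)] at h
        exact Option.some_injective _ h
      have hmem1 : (l₁ ++ [y]) ∈ T y := by
        refine ⟨hnd1, by simp, ?_⟩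
        rw [List.getLast?_eq_getLast_of_ne_nil (by simp)]
        simp [List.getLast_append_singleton]
      have hsplitcost : pathCost c (l₁ ++ y :: l₂)
          = pathCost c (l₁ ++ [y]) + pathCost c (y :: l₂) := by
        have := pathCost_append c l₁ (y :: l₂) (by simp)
        simpa using this
      have hcyc : 0 ≤ pathCost c (y :: l₂) + c x y := by
        have h1 := cyc ((y :: l₂).formPerm)
        rw [cycle_sum c hdiag (y :: l₂) (by simp) hndc] at h1
        rw [hlast] at h1
        simpa using h1
      have h2 : d y ≤ pathCost c (l₁ ++ [y]) := hLmin y _ hmem1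
      have h3 : d x = pathCost c (l₁ ++ y :: l₂) := by rw [hd]; simp only; rw [hsplit]
      rw [h3, hsplitcost]
      linarith
    · have hmem1 : (L x ++ [y]) ∈ T y := by
        refine ⟨?_, by simp, ?_⟩
        · rw [List.nodup_append]
          exact ⟨hLnd x, List.nodup_singleton y, by simp only [List.mem_singleton]; rintro a ha _ rfl rfl; exact hy ha⟩
        · rw [List.getLast?_eq_getLast_of_ne_nil (by simp)]
          simp [List.getLast_append_singleton]
      have h2 := hLmin y _ hmem1
      rw [pathCost_append_singleton c (L x) (hLne x) y, hLlast x] at h2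
      exact h2
  -- define transfers
  set A : ℝ := (∑ a, d a) / n with hA
  refine ⟨π, fun i => d (π i) - A, ?_, ?_, ?_⟩
  · have h1 : ∑ i, d (π i) = ∑ a, d a := Equiv.sum_comp π d
    rw [Finset.sum_sub_distrib, h1, Finset.sum_const, Finset.card_univ, Fintype.card_fin,
      nsmul_eq_mul, hA]
    field_simp
    ring
  · intro i j
    have h1 := tri (π i) (π j)
    have h2 : c (π i) (π j) = v i (B (π i)) - v i (B (π j)) := by
      simp [hc]
    rw [h2] at h1
    simp only [ge_iff_le]
    linarith
  · have hAle : -((n : ℝ) * b) ≤ A ∧ A ≤ 0 := by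
      constructor
      · rw [hA, le_div_iff₀ hnR]
        have : ∑ a : Fin n, (-((n:ℝ) * b)) ≤ ∑ a, d a := Finset.sum_le_sum fun a _ => d_lower a
        rw [Finset.sum_const, Finset.card_univ, Fintype.card_fin, nsmul_eq_mul] at this
        nlinarith
      · rw [hA, div_nonpos_iff]
        right
        exact ⟨Finset.sum_nonpos fun a _ => d_nonpos a, le_of_lt hnR⟩
    have habs : ∀ i, |d (π i) - A| ≤ (n : ℝ) * b := by
      intro i
      have h1 := d_lower (π i)
      have h2 := d_nonpos (π i)
      rw [abs_le]
      constructor <;> [linarith [hAle.2]; linarith [hAle.1]]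
    calc ∑ i, |d (π i) - A| ≤ ∑ _i : Fin n, (n : ℝ) * b :=
          Finset.sum_le_sum fun i _ => habs i
      _ = (n : ℝ) * ((n : ℝ) * b) := by
          rw [Finset.sum_const, Finset.card_univ, Fintype.card_fin, nsmul_eq_mul]
      _ ≤ 2 * b * (n : ℝ) ^ 2 := by nlinarith
end

section
/- For general monotone valuations, there exists an envy-free allocation with transfers (A,t) whose Nash social welfare satisfies NSW(A,t) ≥ e^{−1/e} · NSW(A*), where A* is an allocation maximizing Nash social welfare; moreover A can be taken to be the welfare-maximizing reassignment of the bundles of A*. -/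
open Finset

lemma Stmt8Aux.log_le_div_e {y : ℝ} (hy : 0 < y) : Real.log y ≤ y / Real.exp 1 := by
  have h := Real.log_le_sub_one_of_pos (x := y / Real.exp 1) (by positivity)
  rw [Real.log_div (ne_of_gt hy) (ne_of_gt (Real.exp_pos 1)), Real.log_exp] at h
  linarith

lemma Stmt8Aux.alpha_log_alpha {α : ℝ} (h0 : 0 < α) : -(1 / Real.exp 1) ≤ α * Real.log α := by
  have h := Stmt8Aux.log_le_div_e (y := 1 / α) (by positivity)
  rw [Real.log_div one_ne_zero (ne_of_gt h0), Real.log_one] at h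
  have : α * (0 - Real.log α) ≤ α * (1 / α / Real.exp 1) :=
    mul_le_mul_of_nonneg_left h (le_of_lt h0)
  have hcancel : α * (1 / α / Real.exp 1) = 1 / Real.exp 1 := by field_simp
  nlinarith [this]

lemma Stmt8Aux.lemL {n : ℕ} (hn : 0 < n) (x y e : Fin n → ℝ) (E : ℝ)
    (hx : ∀ i, 0 ≤ x i) (hsum : ∑ i, e i = 0) (heE : ∀ i, e i ≤ E)
    (hy1 : ∀ i, x i + e i ≤ y i) (hy2 : ∀ i, E ≤ y i) :
    Real.exp (-(n : ℝ) / Real.exp 1) * ∏ i, x i ≤ ∏ i, y i := by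
  have hE0 : 0 ≤ E := by
    by_contra h
    push_neg at h
    have h1 : ∑ i : Fin n, e i ≤ (Finset.univ : Finset (Fin n)).card • E :=
      Finset.sum_le_card_nsmul _ _ _ (fun i _ => heE i)
    rw [Finset.card_univ, Fintype.card_fin, hsum, nsmul_eq_mul] at h1
    nlinarith [h1, (Nat.cast_pos (α := ℝ)).2 hn]
  have hy0 : ∀ i, 0 ≤ y i := fun i => le_trans hE0 (hy2 i)
  by_cases hxz : ∃ i, x i = 0
  · obtain ⟨i, hi⟩ := hxz
    have : ∏ i, x i = 0 := Finset.prod_eq_zero (Finset.mem_univ i) hi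
    rw [this, mul_zero]
    exact Finset.prod_nonneg fun i _ => hy0 i
  push_neg at hxz
  have hxp : ∀ i, 0 < x i := fun i => lt_of_le_of_ne (hx i) (Ne.symm (hxz i))
  set S := Finset.univ.filter (fun i : Fin n => e i < 0) with hS
  by_cases hSe : S = ∅
  · -- all e ≥ 0
    have hy3 : ∀ i, x i ≤ y i := by
      intro i
      have : ¬ e i < 0 := by
        intro h
        have : i ∈ S := by simp [hS, h]
        simp [hSe] at this
      push_neg at this
      linarith [hy1 i]
    have h1 : ∏ i, x i ≤ ∏ i, y i :=
      Finset.prod_le_prod (fun i _ => hx i) (fun i _ => hy3 i)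
    have h2 : Real.exp (-(n : ℝ) / Real.exp 1) ≤ 1 := by
      rw [Real.exp_le_one_iff, neg_div]
      have : (0:ℝ) ≤ (n:ℝ) / Real.exp 1 := by positivity
      linarith
    calc Real.exp (-(n : ℝ) / Real.exp 1) * ∏ i, x i
        ≤ 1 * ∏ i, x i :=
          mul_le_mul_of_nonneg_right h2 (Finset.prod_nonneg fun i _ => hx i)
      _ = ∏ i, x i := one_mul _
      _ ≤ ∏ i, y i := h1
  have hSne : S.Nonempty := Finset.nonempty_iff_ne_empty.2 hSe
  have hEpos : 0 < E := by
    rcases lt_or_eq_of_le hE0 with h | h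
    · exact h
    · exfalso
      have hnp : ∀ i ∈ (Finset.univ : Finset (Fin n)), e i ≤ 0 := fun i _ => h ▸ heE i
      have := (Finset.sum_eq_zero_iff_of_nonpos hnp).1 hsum
      obtain ⟨i, hi⟩ := hSne
      rw [hS, Finset.mem_filter] at hi
      linarith [this i (Finset.mem_univ i), hi.2]
  set k := S.card with hk
  have hk1 : 0 < k := Finset.card_pos.2 hSne
  have hkn : k ≤ n := by
    calc k ≤ (Finset.univ : Finset (Fin n)).card := Finset.card_filter_le _ _
      _ = n := by rw [Finset.card_univ, Fintype.card_fin]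
  have hkR : (0:ℝ) < (k:ℝ) := Nat.cast_pos.2 hk1
  have hnR : (0:ℝ) < (n:ℝ) := Nat.cast_pos.2 hn
  set c : Fin n → ℝ := fun i => if e i < 0 then E / (E - e i) else 1 with hc
  have hc0 : ∀ i, 0 ≤ c i := by
    intro i
    rw [hc]
    by_cases h : e i < 0 <;> simp only [h, if_pos, if_neg, if_true, if_false]
    · have hden : 0 < E - e i := by linarith
      positivity
    · exact zero_le_one
  have hb : ∀ i, x i * c i ≤ y i := by
    intro i
    simp only [hc]
    by_cases h : e i < 0
    · rw [if_pos h]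
      have hden : 0 < E - e i := by linarith
      by_cases hxi : x i ≤ E - e i
      · have : x i * (E / (E - e i)) ≤ (E - e i) * (E / (E - e i)) :=
          mul_le_mul_of_nonneg_right hxi (by positivity)
        have heq : (E - e i) * (E / (E - e i)) = E := by field_simp
        calc x i * (E / (E - e i)) ≤ E := by rw [heq] at this; exact this
          _ ≤ y i := hy2 i
      · push_neg at hxi
        have h2 : x i * (E / (E - e i)) ≤ x i + e i := by
          rw [← mul_div_assoc, div_le_iff₀ hden]
          nlinarith
        linarith [hy1 i]
    · rw [if_neg h, mul_one]
      have : 0 ≤ e i := le_of_not_gt h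
      linarith [hy1 i]
  have step1 : ∏ i, (x i * c i) ≤ ∏ i, y i :=
    Finset.prod_le_prod (fun i _ => mul_nonneg (hx i) (hc0 i)) (fun i _ => hb i)
  rw [Finset.prod_mul_distrib] at step1
  have hprodc : ∏ i, c i = ∏ i ∈ S, E / (E - e i) := by
    rw [hS, Finset.prod_filter]
  -- now bound ∏_{i∈S} E/(E - e i) from below
  have hfacpos : ∀ i ∈ S, 0 < E / (E - e i) := by
    intro i hi
    rw [hS, Finset.mem_filter] at hi
    have : 0 < E - e i := by linarith [hi.2]
    positivity
  have hsumS : ∑ i ∈ S, (E - e i) ≤ (n:ℝ) * E := by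
    have h1 : ∑ i ∈ S, (E - e i) = k * E - ∑ i ∈ S, e i := by
      rw [Finset.sum_sub_distrib, Finset.sum_const, nsmul_eq_mul]
    have h2 : ∑ i ∈ S, e i + ∑ i ∈ Sᶜ, e i = 0 := by
      rw [Finset.sum_add_sum_compl]; exact hsum
    have h3 : ∑ i ∈ Sᶜ, e i ≤ (Sᶜ).card • E :=
      Finset.sum_le_card_nsmul _ _ _ (fun i _ => heE i)
    have hcard : ((Sᶜ).card : ℝ) = (n:ℝ) - (k:ℝ) := by
      rw [Finset.card_compl, Fintype.card_fin, Nat.cast_sub hkn]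
    rw [nsmul_eq_mul, hcard] at h3
    linarith [h1, h2, h3]
  -- log bound for each element of S
  set cst : ℝ := (n:ℝ) * E / k with hcst
  have hcstpos : 0 < cst := by rw [hcst]; positivity
  have hlog : ∀ i ∈ S, Real.log (E - e i) ≤ (E - e i) / cst + Real.log cst - 1 := by
    intro i hi
    rw [hS, Finset.mem_filter] at hi
    have hden : 0 < E - e i := by linarith [hi.2]
    have h := Real.log_le_sub_one_of_pos (x := (E - e i) / cst) (by positivity)
    rw [Real.log_div (ne_of_gt hden) (ne_of_gt hcstpos)] at h
    linarith
  have hsumlog : ∑ i ∈ S, Real.log (E - e i) ≤ (k:ℝ) * Real.log cst := by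
    have h1 : ∑ i ∈ S, Real.log (E - e i)
        ≤ ∑ i ∈ S, ((E - e i) / cst + Real.log cst - 1) :=
      Finset.sum_le_sum hlog
    have h2 : ∑ i ∈ S, ((E - e i) / cst + Real.log cst - 1)
        = (∑ i ∈ S, (E - e i)) / cst + (k:ℝ) * (Real.log cst - 1) := by
      calc ∑ i ∈ S, ((E - e i) / cst + Real.log cst - 1)
          = ∑ i ∈ S, ((E - e i) / cst + (Real.log cst - 1)) := by
            apply Finset.sum_congr rfl; intros; ring
        _ = (∑ i ∈ S, (E - e i)) / cst + (k:ℝ) * (Real.log cst - 1) := by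
            rw [Finset.sum_add_distrib, Finset.sum_const, nsmul_eq_mul, Finset.sum_div]
    have h3 : (∑ i ∈ S, (E - e i)) / cst ≤ (k:ℝ) := by
      rw [div_le_iff₀ hcstpos]
      calc (∑ i ∈ S, (E - e i)) ≤ (n:ℝ) * E := hsumS
        _ = (k:ℝ) * cst := by rw [hcst]; field_simp
    linarith [h1, h2, h3]
  have hprodS : Real.exp (-(n:ℝ) / Real.exp 1) ≤ ∏ i ∈ S, E / (E - e i) := by
    have hppos : 0 < ∏ i ∈ S, E / (E - e i) := Finset.prod_pos hfacpos
    rw [← Real.exp_log hppos, Real.exp_le_exp]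
    rw [Real.log_prod (fun i hi => ne_of_gt (hfacpos i hi))]
    have hlogfac : ∀ i ∈ S, Real.log (E / (E - e i))
        = Real.log E - Real.log (E - e i) := by
      intro i hi
      rw [hS, Finset.mem_filter] at hi
      have hden : 0 < E - e i := by linarith [hi.2]
      exact Real.log_div (ne_of_gt hEpos) (ne_of_gt hden)
    rw [Finset.sum_congr rfl hlogfac, Finset.sum_sub_distrib, Finset.sum_const,
      nsmul_eq_mul]
    have hEcst : E / cst = (k:ℝ) / (n:ℝ) := by
      rw [hcst]
      field_simp
    have hkey : (k:ℝ) * Real.log E - (k:ℝ) * Real.log cst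
        = (k:ℝ) * Real.log ((k:ℝ) / (n:ℝ)) := by
      rw [← mul_sub, ← Real.log_div (ne_of_gt hEpos) (ne_of_gt hcstpos), hEcst]
    have halpha : -(n:ℝ) / Real.exp 1 ≤ (k:ℝ) * Real.log ((k:ℝ) / (n:ℝ)) := by
      have h := Stmt8Aux.alpha_log_alpha (α := (k:ℝ) / (n:ℝ)) (by positivity)
      have h2 := mul_le_mul_of_nonneg_left h (le_of_lt hnR)
      have e1 : (n:ℝ) * -(1 / Real.exp 1) = -(n:ℝ) / Real.exp 1 := by ring
      have e2 : (n:ℝ) * ((k:ℝ) / (n:ℝ) * Real.log ((k:ℝ) / (n:ℝ)))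
          = (k:ℝ) * Real.log ((k:ℝ) / (n:ℝ)) := by
        field_simp
      rw [e1, e2] at h2
      exact h2
    linarith [hsumlog]
  have hc' : Real.exp (-(n:ℝ) / Real.exp 1) ≤ ∏ i, c i := by
    rw [hprodc]; exact hprodS
  calc Real.exp (-(n:ℝ) / Real.exp 1) * ∏ i, x i
      ≤ (∏ i, c i) * ∏ i, x i :=
        mul_le_mul_of_nonneg_right hc' (Finset.prod_nonneg fun i _ => hx i)
    _ = (∏ i, x i) * (∏ i, c i) := mul_comm _ _
    _ ≤ ∏ i, y i := step1


/-- Weights of "paths" (injective walks) starting at `i` in the complete digraph on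
`Fin n` with edge weights `w`. -/
def Stmt8Aux.PW {n : ℕ} (w : Fin n → Fin n → ℝ) (i : Fin n) : Set ℝ :=
  { r : ℝ | ∃ (m : ℕ) (c : ℕ → Fin n), c 0 = i ∧
      (∀ p q, p ≤ m → q ≤ m → c p = c q → p = q) ∧
      r = ∑ k ∈ Finset.range m, w (c k) (c (k + 1)) }

namespace Stmt8Aux

lemma zero_mem_PW {n : ℕ} (w : Fin n → Fin n → ℝ) (i : Fin n) : (0 : ℝ) ∈ PW w i := by
  refine ⟨0, fun _ => i, rfl, ?_, by simp⟩
  intro p q hp hq _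
  omega

lemma bddAbove_PW {n : ℕ} (w : Fin n → Fin n → ℝ) (i : Fin n) : BddAbove (PW w i) := by
  classical
  set M : ℝ := ∑ a : Fin n, ∑ b : Fin n, |w a b| with hM
  have hM0 : 0 ≤ M := Finset.sum_nonneg fun a _ =>
    Finset.sum_nonneg fun b _ => abs_nonneg _
  have hwM : ∀ a b : Fin n, w a b ≤ M := by
    intro a b
    have h1 : |w a b| ≤ ∑ b' : Fin n, |w a b'| :=
      Finset.single_le_sum (f := fun b' => |w a b'|) (fun b' _ => abs_nonneg _)
        (Finset.mem_univ b)
    have h2 : (∑ b' : Fin n, |w a b'|) ≤ M := by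
      rw [hM]
      exact Finset.single_le_sum (f := fun a' => ∑ b' : Fin n, |w a' b'|)
        (fun a' _ => Finset.sum_nonneg fun b' _ => abs_nonneg _) (Finset.mem_univ a)
    calc w a b ≤ |w a b| := le_abs_self _
      _ ≤ _ := h1
      _ ≤ M := h2
  refine ⟨(n : ℝ) * M, ?_⟩
  rintro r ⟨m, c, hc0, hinj, rfl⟩
  -- m ≤ n
  have hmn : m + 1 ≤ n := by
    have : (Finset.range (m + 1)).card ≤ (Finset.univ : Finset (Fin n)).card := by
      apply Finset.card_le_card_of_injOn c (fun a _ => Finset.mem_univ _)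
      intro p hp q hq hpq
      rw [Finset.mem_coe, Finset.mem_range] at hp hq
      exact hinj p q (by omega) (by omega) hpq
    simpa using this
  calc (∑ k ∈ Finset.range m, w (c k) (c (k + 1)))
      ≤ ∑ _k ∈ Finset.range m, M := Finset.sum_le_sum fun k _ => hwM _ _
    _ = (m : ℝ) * M := by rw [Finset.sum_const, Finset.card_range, nsmul_eq_mul]
    _ ≤ (n : ℝ) * M := by
        apply mul_le_mul_of_nonneg_right _ hM0
        exact_mod_cast Nat.le_of_succ_le hmn

lemma cycle_nonpos {n : ℕ} (w : Fin n → Fin n → ℝ) (hw0 : ∀ i, w i i = 0)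
    (hperm : ∀ ρ : Equiv.Perm (Fin n), ∑ i, w i (ρ i) ≤ 0)
    (a : ℕ) (c : ℕ → Fin n) (hinj : ∀ p q, p ≤ a → q ≤ a → c p = c q → p = q) :
    (∑ k ∈ Finset.range a, w (c k) (c (k + 1))) + w (c a) (c 0) ≤ 0 := by
  classical
  set l : List (Fin n) := (List.range (a + 1)).map c with hl
  have hlen : l.length = a + 1 := by simp [hl]
  have hget : ∀ (k : ℕ) (h : k < l.length), l[k] = c k := by
    intro k h
    simp [hl]
  have hnd : l.Nodup := by
    apply List.Nodup.map_on _ List.nodup_range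
    intro p hp q hq hpq
    rw [List.mem_range] at hp hq
    exact hinj p q (by omega) (by omega) hpq
  set ρ : Equiv.Perm (Fin n) := l.formPerm with hρ
  have hkey : ∀ k : ℕ, k ≤ a → ρ (c k) = c ((k + 1) % (a + 1)) := by
    intro k hk
    have hklt : k < l.length := by omega
    have h2 := List.formPerm_apply_getElem l hnd k hklt
    simp only [hget] at h2
    rw [hρ, h2, hlen]
  have hfix : ∀ x : Fin n, x ∉ l → ρ x = x := fun x hx =>
    List.formPerm_apply_of_notMem hx
  have h0 := hperm ρ
  have htf : l.toFinset = (Finset.range (a + 1)).image c := by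
    ext x
    simp [hl]
  have hsplit : ∑ i : Fin n, w i (ρ i) = ∑ i ∈ l.toFinset, w i (ρ i) := by
    symm
    apply Finset.sum_subset (Finset.subset_univ _)
    intro x _ hx
    rw [List.mem_toFinset] at hx
    rw [hfix x hx, hw0]
  have himg : ∑ i ∈ l.toFinset, w i (ρ i)
      = ∑ k ∈ Finset.range (a + 1), w (c k) (ρ (c k)) := by
    rw [htf]
    apply Finset.sum_image
    intro p hp q hq hpq
    rw [Finset.mem_coe, Finset.mem_range] at hp hq
    exact hinj p q (by omega) (by omega) hpq
  have hterm : ∀ k ∈ Finset.range (a + 1), w (c k) (ρ (c k))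
      = w (c k) (c ((k + 1) % (a + 1))) := by
    intro k hk
    rw [Finset.mem_range] at hk
    rw [hkey k (by omega)]
  rw [hsplit, himg, Finset.sum_congr rfl hterm, Finset.sum_range_succ] at h0
  have e1 : (a + 1) % (a + 1) = 0 := Nat.mod_self _
  have e2 : ∀ k ∈ Finset.range a, w (c k) (c ((k + 1) % (a + 1)))
      = w (c k) (c (k + 1)) := by
    intro k hk
    rw [Finset.mem_range] at hk
    rw [Nat.mod_eq_of_lt (by omega)]
  rw [e1, Finset.sum_congr rfl e2] at h0
  exact h0

lemma pot_key {n : ℕ} (w : Fin n → Fin n → ℝ) (hw0 : ∀ i, w i i = 0)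
    (hperm : ∀ ρ : Equiv.Perm (Fin n), ∑ i, w i (ρ i) ≤ 0) (i j : Fin n) :
    w i j + sSup (PW w j) ≤ sSup (PW w i) := by
  have hkey : sSup (PW w j) ≤ sSup (PW w i) - w i j := by
    apply csSup_le ⟨0, zero_mem_PW w j⟩
    rintro r ⟨m, c, hc0, hinj, rfl⟩
    rw [le_sub_iff_add_le, add_comm]
    set r := ∑ k ∈ Finset.range m, w (c k) (c (k + 1)) with hr
    by_cases hmem : ∃ a, a ≤ m ∧ c a = i
    · obtain ⟨a, ham, hca⟩ := hmem
      -- suffix path from i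
      have hsuf : (∑ k ∈ Finset.range (m - a), w (c (a + k)) (c (a + k + 1))) ∈ PW w i := by
        refine ⟨m - a, fun k => c (a + k), by simpa using hca, ?_, ?_⟩
        · intro p q hp hq hpq
          have := hinj (a + p) (a + q) (by omega) (by omega) hpq
          omega
        · apply Finset.sum_congr rfl
          intro k _
          rfl
      have hsufle : (∑ k ∈ Finset.range (m - a), w (c (a + k)) (c (a + k + 1)))
          ≤ sSup (PW w i) := le_csSup (bddAbove_PW w i) hsuf
      -- cycle prefix
      have hcyc := cycle_nonpos w hw0 hperm a c
        (fun p q hp hq h => hinj p q (by omega) (by omega) h)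
      rw [hca, hc0] at hcyc
      -- split r
      have hsplit : r = (∑ k ∈ Finset.range a, w (c k) (c (k + 1)))
          + ∑ k ∈ Finset.range (m - a), w (c (a + k)) (c (a + k + 1)) := by
        have h1 := Finset.sum_Ico_consecutive (f := fun k => w (c k) (c (k + 1)))
          (Nat.zero_le a) ham
        have h2 := Finset.sum_Ico_eq_sum_range (f := fun k => w (c k) (c (k + 1)))
          (m := a) (n := m)
        rw [hr, Finset.range_eq_Ico, ← h1, h2, ← Finset.range_eq_Ico]
      rw [hsplit]
      linarith
    · push_neg at hmem
      set c' : ℕ → Fin n := fun k => if k = 0 then i else c (k - 1) with hc'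
      have hmem' : (w i j + r) ∈ PW w i := by
        refine ⟨m + 1, c', by simp [hc'], ?_, ?_⟩
        · intro p q hp hq hpq
          simp only [hc'] at hpq
          by_cases hp0 : p = 0 <;> by_cases hq0 : q = 0
          · omega
          · rw [if_pos hp0, if_neg hq0] at hpq
            exact absurd hpq.symm (hmem (q - 1) (by omega))
          · rw [if_neg hp0, if_pos hq0] at hpq
            exact absurd hpq (hmem (p - 1) (by omega))
          · rw [if_neg hp0, if_neg hq0] at hpq
            have := hinj (p - 1) (q - 1) (by omega) (by omega) hpq
            omega
        · rw [Finset.sum_range_succ']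
          have e0 : w (c' 0) (c' (0 + 1)) = w i j := by
            simp [hc', hc0]
          have ek : ∀ k ∈ Finset.range m,
              w (c' (k + 1)) (c' (k + 1 + 1)) = w (c k) (c (k + 1)) := by
            intro k _
            simp [hc', Nat.succ_sub_one]
          rw [Finset.sum_congr rfl ek, e0, add_comm]
      exact le_csSup (bddAbove_PW w i) hmem'
  linarith

lemma pot_nonneg {n : ℕ} (w : Fin n → Fin n → ℝ) (i : Fin n) : 0 ≤ sSup (PW w i) :=
  le_csSup (bddAbove_PW w i) (zero_mem_PW w i)

end Stmt8Aux


/-- For general monotone valuations there is an envy-free allocation with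
transfers, obtained as the welfare-maximizing reassignment of the bundles of a
Nash-welfare-maximizing allocation `A*`, whose Nash social welfare is at least
`e^{-1/e}` times the optimal Nash social welfare. -/
theorem stmt8 {n : ℕ} (hn : 0 < n) {ι : Type*} [Fintype ι]
    (v : Fin n → Finset ι → ℝ)
    (hv0 : ∀ i, v i ∅ = 0)
    (hvnonneg : ∀ i S, 0 ≤ v i S)
    (hmono : ∀ i (S T : Finset ι), S ⊆ T → v i S ≤ v i T)
    (Astar : Fin n → Finset ι)
    (hpart : ∀ x : ι, ∃! i, x ∈ Astar i)
    (hopt : ∀ B : Fin n → Finset ι, (∀ x : ι, ∃! i, x ∈ B i) →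
      (∏ i, v i (B i)) ^ ((1 : ℝ) / n) ≤ (∏ i, v i (Astar i)) ^ ((1 : ℝ) / n)) :
    ∃ (π : Equiv.Perm (Fin n)) (t : Fin n → ℝ),
      (∀ σ : Equiv.Perm (Fin n), ∑ i, v i (Astar (σ i)) ≤ ∑ i, v i (Astar (π i))) ∧
      ∑ i, t i = 0 ∧
      (∀ i j, v i (Astar (π i)) + t i ≥ v i (Astar (π j)) + t j) ∧
      (∀ i, 0 ≤ v i (Astar (π i)) + t i) ∧
      (∏ i, (v i (Astar (π i)) + t i)) ^ ((1 : ℝ) / n) ≥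
        Real.exp (-1 / Real.exp 1) * (∏ i, v i (Astar i)) ^ ((1 : ℝ) / n) := by
  classical
  have hnR : (0 : ℝ) < (n : ℝ) := by exact_mod_cast hn
  obtain ⟨π, -, hπ⟩ := Finset.exists_max_image (Finset.univ : Finset (Equiv.Perm (Fin n)))
    (fun σ => ∑ i, v i (Astar (σ i))) ⟨1, Finset.mem_univ 1⟩
  have hπmax : ∀ σ : Equiv.Perm (Fin n),
      ∑ i, v i (Astar (σ i)) ≤ ∑ i, v i (Astar (π i)) :=
    fun σ => hπ σ (Finset.mem_univ σ)
  set u : Fin n → ℝ := fun i => v i (Astar (π i)) with hu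
  set w : Fin n → Fin n → ℝ := fun i j => v i (Astar (π j)) - u i with hw
  have hw0 : ∀ i, w i i = 0 := by intro i; simp [hw, hu]
  have hperm : ∀ ρ : Equiv.Perm (Fin n), ∑ i, w i (ρ i) ≤ 0 := by
    intro ρ
    have h := hπmax (ρ.trans π)
    simp only [Equiv.trans_apply] at h
    simp only [hw]
    rw [Finset.sum_sub_distrib]
    simp only [hu]
    linarith
  set ℓ : Fin n → ℝ := fun i => sSup (Stmt8Aux.PW w i) with hℓ
  have hkey : ∀ i j, w i j + ℓ j ≤ ℓ i := fun i j => Stmt8Aux.pot_key w hw0 hperm i j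
  have hℓ0 : ∀ i, 0 ≤ ℓ i := fun i => Stmt8Aux.pot_nonneg w i
  set Lbar : ℝ := (∑ i, ℓ i) / n with hLbar
  set t : Fin n → ℝ := fun i => ℓ i - Lbar with ht
  -- envy-freeness
  have hEF : ∀ i j, v i (Astar (π j)) + t j ≤ v i (Astar (π i)) + t i := by
    intro i j
    have h := hkey i j
    simp only [hw, hu] at h
    simp only [ht]
    linarith
  -- max potential agent
  obtain ⟨jm, -, hjm⟩ := Finset.exists_max_image (Finset.univ : Finset (Fin n)) ℓ
    ⟨⟨0, hn⟩, Finset.mem_univ _⟩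
  have hjm' : ∀ i, ℓ i ≤ ℓ jm := fun i => hjm i (Finset.mem_univ i)
  have hLbarle : Lbar ≤ ℓ jm := by
    rw [hLbar, div_le_iff₀ hnR]
    calc ∑ i, ℓ i ≤ (Finset.univ : Finset (Fin n)).card • ℓ jm :=
          Finset.sum_le_card_nsmul _ _ _ (fun i _ => hjm' i)
      _ = ℓ jm * (n : ℝ) := by
          rw [Finset.card_univ, Fintype.card_fin, nsmul_eq_mul]
          exact mul_comm _ _
  have htjm : 0 ≤ t jm := by simp only [ht]; linarith
  have hy0 : ∀ i, 0 ≤ v i (Astar (π i)) + t i := by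
    intro i
    calc (0:ℝ) ≤ v i (Astar (π jm)) + t jm := add_nonneg (hvnonneg _ _) htjm
      _ ≤ v i (Astar (π i)) + t i := hEF i jm
  refine ⟨π, t, hπmax, ?_, fun i j => hEF i j, hy0, ?_⟩
  · simp only [ht]
    rw [Finset.sum_sub_distrib, Finset.sum_const, Finset.card_univ, Fintype.card_fin,
      nsmul_eq_mul, hLbar]
    field_simp
    ring
  -- NSW bound
  have hprod := Stmt8Aux.lemL hn (fun i => v i (Astar i)) (fun i => v i (Astar (π i)) + t i)
    (fun i => ℓ (π.symm i) - Lbar) (ℓ jm - Lbar)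
    (fun i => hvnonneg _ _)
    (by
      rw [Finset.sum_sub_distrib, Equiv.sum_comp π.symm ℓ, Finset.sum_const,
        Finset.card_univ, Fintype.card_fin, nsmul_eq_mul, hLbar]
      field_simp
      ring)
    (fun i => by
      show ℓ (π.symm i) - Lbar ≤ ℓ jm - Lbar
      linarith [hjm' (π.symm i)])
    (by
      intro i
      show v i (Astar i) + (ℓ (π.symm i) - Lbar) ≤ v i (Astar (π i)) + t i
      have h := hkey i (π.symm i)
      have hww : w i (π.symm i) = v i (Astar i) - u i := by
        simp only [hw, Equiv.apply_symm_apply]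
      rw [hww] at h
      simp only [ht, hu] at h ⊢
      linarith)
    (by
      intro i
      show ℓ jm - Lbar ≤ v i (Astar (π i)) + t i
      have h := hEF i jm
      calc ℓ jm - Lbar = t jm := by simp only [ht]
        _ ≤ v i (Astar (π jm)) + t jm := le_add_of_nonneg_left (hvnonneg _ _)
        _ ≤ v i (Astar (π i)) + t i := h)
  have hx0 : (0:ℝ) ≤ ∏ i, v i (Astar i) := Finset.prod_nonneg fun i _ => hvnonneg _ _
  have h1 : (Real.exp (-(n : ℝ) / Real.exp 1) * ∏ i, v i (Astar i)) ^ ((1:ℝ)/n)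
      ≤ (∏ i, (v i (Astar (π i)) + t i)) ^ ((1:ℝ)/n) := by
    apply Real.rpow_le_rpow (by positivity) hprod (by positivity)
  have h2 : (Real.exp (-(n : ℝ) / Real.exp 1) * ∏ i, v i (Astar i)) ^ ((1:ℝ)/n)
      = Real.exp (-1 / Real.exp 1) * (∏ i, v i (Astar i)) ^ ((1:ℝ)/n) := by
    rw [Real.mul_rpow (le_of_lt (Real.exp_pos _)) hx0]
    congr 1
    rw [← Real.exp_mul]
    congr 1
    field_simp
  rw [ge_iff_le, ← h2]
  exact h1
end

section
/- There exist instances with additive valuations such that every allocation with b-bounded envy has utilitarian social welfare at most (2√(b/m) + 1/n) times the optimal welfare: in the instance where agent n values each of the m items at 1 and every other agent values each item at ε = √(b/m), any allocation A with v_i(A_j) − v_i(A_i) ≤ b for all i,j satisfies SW(A)/SW(A*) ≤ 2√(b/m) + 1/n. -/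
set_option maxHeartbeats 800000


/-- In the instance where agent `n` values every item at 1 and all other
agents value every item at `ε = √(b/m)`, every allocation with `b`-bounded envy has
social welfare at most `(2√(b/m) + 1/n)` times the optimal welfare `m`. -/
theorem stmt10 (n m : ℕ) (hn : 0 < n) (hm : 0 < m)
    (b : ℝ) (hb : 0 < b) (hbm : b ≤ m)
    {ι : Type*} [Fintype ι] (hcard : Fintype.card ι = m)
    (i₀ : Fin n) (hi₀ : (i₀ : ℕ) = n - 1)
    (v : Fin n → Finset ι → ℝ)
    (hvn : ∀ S : Finset ι, v i₀ S = (S.card : ℝ))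
    (hvi : ∀ (i : Fin n) (S : Finset ι), i ≠ i₀ →
      v i S = Real.sqrt (b / m) * (S.card : ℝ))
    (A : Fin n → Finset ι)
    (hpart : ∀ x : ι, ∃! i, x ∈ A i)
    (hbound : ∀ i j, v i (A j) - v i (A i) ≤ b) :
    ∑ i, v i (A i) ≤ (2 * Real.sqrt (b / m) + 1 / (n : ℝ)) * m := by
  classical
  set ε := Real.sqrt (b / m) with hεdef
  have hmR : (0:ℝ) < m := by exact_mod_cast hm
  have hnR : (0:ℝ) < n := by exact_mod_cast hn
  have hdiv : (0:ℝ) < b / m := div_pos hb hmR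
  have hε0 : 0 < ε := Real.sqrt_pos.2 hdiv
  have hε2 : ε ^ 2 = b / m := Real.sq_sqrt hdiv.le
  have hεb : b = ε ^ 2 * m := by
    rw [hε2]; field_simp
  have hε1 : ε ≤ 1 := by
    rw [hεdef, show (1:ℝ) = Real.sqrt 1 by simp]
    exact Real.sqrt_le_sqrt (by rw [div_le_one hmR]; exact hbm)
  choose f hf hfu using hpart
  have hAeq : ∀ i, A i = Finset.univ.filter (fun x => f x = i) := by
    intro i; ext x
    simp only [Finset.mem_filter, Finset.mem_univ, true_and]
    constructor
    · intro hx; exact (hfu x i hx).symm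
    · rintro rfl; exact hf x
  have hsumN : ∑ i, (A i).card = m := by
    have := Finset.card_eq_sum_card_fiberwise
      (f := f) (s := (Finset.univ : Finset ι)) (t := (Finset.univ : Finset (Fin n)))
      (fun x _ => Finset.mem_univ _)
    rw [Finset.card_univ, hcard] at this
    rw [this]
    exact Finset.sum_congr rfl fun i _ => by rw [hAeq i]
  have hsum : ∑ i, ((A i).card : ℝ) = m := by exact_mod_cast hsumN
  set c : Fin n → ℝ := fun i => ((A i).card : ℝ) with hc
  have hc0 : ∀ i, 0 ≤ c i := fun i => Nat.cast_nonneg _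
  have hmem : i₀ ∈ (Finset.univ : Finset (Fin n)) := Finset.mem_univ _
  have hsplit : ∑ i, c i = c i₀ + ∑ i ∈ Finset.univ \ {i₀}, c i := by
    rw [Finset.sum_eq_sum_sdiff_singleton_add hmem]; ring
  have hdiffsum : ∑ i ∈ Finset.univ \ {i₀}, c i = m - c i₀ := by
    have := hsplit; rw [hsum] at this; linarith
  -- social welfare
  have hSW : ∑ i, v i (A i) = c i₀ + ε * (m - c i₀) := by
    rw [Finset.sum_eq_sum_sdiff_singleton_add hmem, hvn]
    have : ∑ i ∈ Finset.univ \ {i₀}, v i (A i)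
        = ∑ i ∈ Finset.univ \ {i₀}, ε * c i := by
      refine Finset.sum_congr rfl fun i hi => ?_
      have hiine : i ≠ i₀ := by
        simpa [Finset.mem_sdiff] using hi
      rw [hvi i (A i) hiine]
    rw [this, ← Finset.mul_sum, hdiffsum]; ring
  -- envy bound for i ≠ i₀
  have henvy : ∀ i ∈ Finset.univ \ {i₀}, c i₀ ≤ c i + ε * m := by
    intro i hi
    have hiine : i ≠ i₀ := by simpa [Finset.mem_sdiff] using hi
    have h := hbound i i₀
    rw [hvi i (A i₀) hiine, hvi i (A i) hiine] at h
    have h2 : ε * c i₀ - ε * c i ≤ ε * (ε * m) := by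
      rw [hεb] at h; nlinarith
    nlinarith
  -- sum envy bounds
  have hk : ((Finset.univ \ {i₀} : Finset (Fin n)).card : ℝ) = (n:ℝ) - 1 := by
    rw [Finset.card_sdiff_of_subset (by simp)]
    simp only [Finset.card_singleton, Finset.card_univ, Fintype.card_fin]
    have : 1 ≤ n := hn
    push_cast [Nat.cast_sub this]
    ring
  have hsumenvy : ((n:ℝ) - 1) * c i₀ ≤ (m - c i₀) + ((n:ℝ) - 1) * (ε * m) := by
    have := Finset.sum_le_sum henvy
    rw [Finset.sum_const, Finset.sum_add_distrib, hdiffsum, Finset.sum_const,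
      nsmul_eq_mul, nsmul_eq_mul, hk] at this
    linarith
  have hεm : 0 ≤ ε * m := mul_nonneg hε0.le hmR.le
  have hc₀ : (n:ℝ) * c i₀ ≤ m + (n:ℝ) * (ε * m) := by nlinarith [hεm]
  rw [hSW]
  have hεc : 0 ≤ ε * c i₀ := mul_nonneg hε0.le (hc0 i₀)
  have h2 : c i₀ ≤ m / n + ε * m := by
    rw [← mul_le_mul_iff_of_pos_left hnR, mul_add, mul_div_cancel₀ _ (ne_of_gt hnR)]
    exact hc₀
  rw [show (2 * ε + 1 / (n:ℝ)) * m = 2 * (ε * m) + m / n by ring,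
    show ε * ((m:ℝ) - c i₀) = ε * m - ε * c i₀ by ring]
  linarith
end

section
/- For any α ∈ [1/n, 1], there exists an instance with additive valuations such that every envy-free allocation with transfers (A,t) achieving SW(A,t) ≥ α·SW(A*) has total transfer ∑_i |t_i| ≥ (1/4)(α − 1/n)²·m. -/
set_option maxHeartbeats 1000000

lemma aux_sum_unique {k : ℕ} (p : Fin k → Prop) [DecidablePred p] (h : ∃! i, p i) :
    ∑ i, (if p i then (1:ℝ) else 0) = 1 := by
  obtain ⟨i0, h0, hu⟩ := h
  have he : ∀ i, (if p i then (1:ℝ) else 0) = if i = i0 then 1 else 0 := by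
    intro i
    by_cases hpi : p i
    · rw [if_pos hpi, if_pos (hu i hpi)]
    · have : i ≠ i0 := fun he => hpi (he ▸ h0)
      simp [hpi, this]
  simp only [he]
  simp

lemma aux_card_sum {n m : ℕ} (B : Fin n → Finset (Fin m)) (hB : ∀ x, ∃! i, x ∈ B i) :
    ∑ i, ((B i).card : ℝ) = m := by
  have h1 : ∀ i : Fin n, ((B i).card : ℝ) = ∑ x : Fin m, if x ∈ B i then (1:ℝ) else 0 := by
    intro i
    rw [Finset.sum_boole]
    congr 1
    rw [Finset.filter_mem_eq_inter, Finset.univ_inter]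
  rw [Finset.sum_congr rfl (fun i _ => h1 i), Finset.sum_comm,
    Finset.sum_congr rfl (fun x _ => aux_sum_unique _ (hB x))]
  simp

/-- For any `α ∈ [1/n, 1]` there is an additive instance in which every
envy-free allocation with transfers achieving an `α` fraction of the optimal social
welfare needs total transfer at least `(1/4)(α - 1/n)² m`. -/
theorem stmt11 (n m : ℕ) (hn : 2 ≤ n) (hm : 0 < m)
    (α : ℝ) (hα1 : 1 / (n : ℝ) ≤ α) (hα2 : α ≤ 1) :
    ∃ (v : Fin n → Fin m → ℝ) (Astar : Fin n → Finset (Fin m)),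
      (∀ x : Fin m, ∃! i, x ∈ Astar i) ∧
      (∀ B : Fin n → Finset (Fin m), (∀ x : Fin m, ∃! i, x ∈ B i) →
        ∑ i, ∑ g ∈ B i, v i g ≤ ∑ i, ∑ g ∈ Astar i, v i g) ∧
      ∀ (A : Fin n → Finset (Fin m)) (t : Fin n → ℝ),
        (∀ x : Fin m, ∃! i, x ∈ A i) →
        ∑ i, t i = 0 →
        (∀ i j, (∑ g ∈ A i, v i g) + t i ≥ (∑ g ∈ A j, v i g) + t j) →
        (∑ i, ∑ g ∈ A i, v i g) ≥ α * ∑ i, ∑ g ∈ Astar i, v i g →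
        ∑ i, |t i| ≥ (1 / 4) * (α - 1 / (n : ℝ)) ^ 2 * m := by
  have hN2 : (2:ℝ) ≤ (n:ℝ) := by exact_mod_cast hn
  set N : ℝ := (n:ℝ) with hNdef
  have hN0 : (0:ℝ) < N := by linarith
  have hN1 : (0:ℝ) < N - 1 := by linarith
  have hαN : 1 ≤ α * N := by
    rw [div_le_iff₀ hN0] at hα1; linarith
  set ε : ℝ := (α * N - 1) / (2 * (N - 1)) with hεdef
  have hε0 : 0 ≤ ε := div_nonneg (by linarith) (by linarith)
  have hεh : ε ≤ 1/2 := by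
    rw [hεdef, div_le_iff₀ (by linarith)]
    nlinarith
  have hkey : 2 * ε * (N - 1) = α * N - 1 := by
    rw [hεdef]; field_simp
  have hsp0 : 0 < n := by omega
  set sp : Fin n := ⟨0, hsp0⟩ with hspdef
  refine ⟨fun i _ => if i = sp then 1 else ε, fun i => if i = sp then Finset.univ else ∅,
    ?_, ?_, ?_⟩
  · -- Astar is a partition
    intro x
    refine ⟨sp, by simp, ?_⟩
    intro i hi
    by_contra h
    simp [h] at hi
  · -- Astar maximizes welfare
    intro B hB
    have hR : ∑ i, ∑ _g ∈ (if i = sp then Finset.univ else (∅ : Finset (Fin m))),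
        (if i = sp then (1:ℝ) else ε) = m := by
      rw [Finset.sum_eq_single_of_mem sp (Finset.mem_univ sp)]
      · simp
      · intro i _ hi; simp [hi]
    rw [hR]
    calc ∑ i, ∑ _g ∈ B i, (if i = sp then (1:ℝ) else ε)
        ≤ ∑ i, ((B i).card : ℝ) := by
          refine Finset.sum_le_sum fun i _ => ?_
          rw [Finset.sum_const, nsmul_eq_mul]
          by_cases h : i = sp
          · simp [h]
          · simp only [h, if_false]
            nlinarith [Nat.cast_nonneg (α := ℝ) (B i).card]
      _ = m := aux_card_sum B hB
  · -- main bound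
    intro A t hA ht0 hEF hSW
    set k : ℝ := ((A sp).card : ℝ) with hkdef
    have hMsum : ∑ i, ((A i).card : ℝ) = m := aux_card_sum A hA
    have hswA : ∀ i : Fin n, ∑ _g ∈ A i, (if i = sp then (1:ℝ) else ε)
        = (if i = sp then (1:ℝ) else ε) * (A i).card := by
      intro i; rw [Finset.sum_const, nsmul_eq_mul, mul_comm]
    have hsp_mem : sp ∈ (Finset.univ : Finset (Fin n)) := Finset.mem_univ sp
    have hcard_erase : ((Finset.univ : Finset (Fin n)).erase sp).card = n - 1 := by
      rw [Finset.card_erase_of_mem hsp_mem, Finset.card_univ, Fintype.card_fin]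
    have hterase : ∑ i ∈ Finset.univ.erase sp, t i = - t sp := by
      have h := Finset.add_sum_erase Finset.univ t hsp_mem
      rw [ht0] at h; linarith
    have hkerase : ∑ i ∈ Finset.univ.erase sp, ((A i).card : ℝ) = m - k := by
      have h := Finset.add_sum_erase Finset.univ (fun i => ((A i).card : ℝ)) hsp_mem
      rw [hMsum] at h
      linarith [h]
    -- social welfare of A
    have hL : ∑ i, ∑ _g ∈ A i, (if i = sp then (1:ℝ) else ε) = k + ε * (m - k) := by
      rw [← Finset.add_sum_erase _ _ hsp_mem, hswA sp, if_pos rfl,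
        Finset.sum_congr rfl (fun i hi => by
          rw [hswA i, if_neg (Finset.ne_of_mem_erase hi)]),
        ← Finset.mul_sum, hkerase]
      ring
    have hR : ∑ i, ∑ _g ∈ (if i = sp then Finset.univ else (∅ : Finset (Fin m))),
        (if i = sp then (1:ℝ) else ε) = m := by
      rw [Finset.sum_eq_single_of_mem sp (Finset.mem_univ sp)]
      · simp
      · intro i _ hi; simp [hi]
    rw [hL, hR] at hSW
    -- envy-freeness summed over non-special agents
    have hEFsum : (N - 1) * (ε * k + t sp) ≤ ε * (m - k) + (- t sp) := by
      have h1 : ∀ i ∈ Finset.univ.erase sp,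
          ε * k + t sp ≤ ε * ((A i).card : ℝ) + t i := by
        intro i hi
        have hi' : i ≠ sp := Finset.ne_of_mem_erase hi
        have h := hEF i sp
        have e1 : ∑ _g ∈ A i, (if i = sp then (1:ℝ) else ε) = ε * ((A i).card : ℝ) := by
          rw [hswA i, if_neg hi']
        have e2 : ∑ _g ∈ A sp, (if i = sp then (1:ℝ) else ε) = ε * k := by
          rw [Finset.sum_const, nsmul_eq_mul, if_neg hi', mul_comm, hkdef]
        rw [e1, e2] at h
        linarith
      have h2 := Finset.sum_le_sum h1
      rw [Finset.sum_const, hcard_erase, nsmul_eq_mul, Finset.sum_add_distrib,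
        ← Finset.mul_sum, hkerase, hterase] at h2
      have hc : ((n - 1 : ℕ) : ℝ) = N - 1 := by
        push_cast [Nat.cast_sub (by omega : 1 ≤ n)]; ring
      rw [hc] at h2
      exact h2
    have hu : ε * (N * k - m) ≤ N * (- t sp) := by nlinarith [hEFsum]
    -- from welfare constraint
    have h2 : ε * (N - 1) * (m:ℝ) ≤ (1 - ε) * (N * k - m) := by nlinarith [hSW, hkey]
    have h3 : 0 ≤ N * k - m := by
      nlinarith [h2, mul_nonneg (mul_nonneg hε0 hN1.le) (Nat.cast_nonneg (α := ℝ) m)]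
    have hkm : ε * (N - 1) * (m:ℝ) ≤ N * k - m := by nlinarith [h2, h3, hε0]
    have h4 : ε * (ε * (N - 1) * (m:ℝ)) ≤ N * (- t sp) := by
      nlinarith [hu, mul_le_mul_of_nonneg_left hkm hε0]
    have hq2 : (α - 1/N)^2 * N^2 = 4 * ε^2 * (N-1)^2 := by
      have hq : (α - 1/N) * N = 2 * ε * (N - 1) := by
        rw [hkey]; field_simp
      calc (α - 1/N)^2 * N^2 = ((α - 1/N) * N)^2 := by ring
        _ = (2 * ε * (N-1))^2 := by rw [hq]
        _ = 4 * ε^2 * (N-1)^2 := by ring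
    have hfinal : (1/4) * (α - 1/N)^2 * m ≤ - 2 * t sp := by
      nlinarith [h4, hq2, mul_nonneg (mul_nonneg (sq_nonneg ε) hN1.le)
        (Nat.cast_nonneg (α := ℝ) m), hN0, hN2]
    have habs : 2 * |t sp| ≤ ∑ i, |t i| := by
      calc 2 * |t sp| = |t sp| + |t sp| := by ring
        _ = |t sp| + |∑ i ∈ Finset.univ.erase sp, t i| := by rw [hterase, abs_neg]
        _ ≤ |t sp| + ∑ i ∈ Finset.univ.erase sp, |t i| := by
            gcongr; exact Finset.abs_sum_le_sum_abs _ _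
        _ = ∑ i, |t i| := Finset.add_sum_erase _ (fun i => |t i|) hsp_mem
    have := neg_abs_le (t sp)
    have h5 : - 2 * t sp ≤ 2 * |t sp| := by
      have := neg_abs_le (t sp); linarith [le_abs_self (t sp)]
    linarith
end

section
/- In the instance of Corollary on budgets (agent n values all items at 1, others at ε), for any envy-free allocation with transfers (A,t) in which agent n receives x·m items, the transfer to agent n satisfies −t_n ≥ εm(x − 1/n). -/
/-- In the instance where agent `n` values all items at 1 and the others
at `ε`, for any envy-free allocation with transfers in which agent `n` receives an
`x` fraction of the items, the transfer to agent `n` satisfies `-t_n ≥ εm(x - 1/n)`. -/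
theorem stmt12 (n m : ℕ) (hn : 0 < n) (hm : 0 < m)
    (ε : ℝ) (hε0 : 0 < ε) (hε1 : ε < 1)
    (i₀ : Fin n) (hi₀ : (i₀ : ℕ) = n - 1)
    (v : Fin n → Finset (Fin m) → ℝ)
    (hvn : ∀ S : Finset (Fin m), v i₀ S = (S.card : ℝ))
    (hvi : ∀ (i : Fin n) (S : Finset (Fin m)), i ≠ i₀ → v i S = ε * (S.card : ℝ))
    (A : Fin n → Finset (Fin m))
    (hpart : ∀ x : Fin m, ∃! i, x ∈ A i)
    (t : Fin n → ℝ) (ht : ∑ i, t i = 0)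
    (hEF : ∀ i j, v i (A i) + t i ≥ v i (A j) + t j)
    (x : ℝ) (hx : x = ((A i₀).card : ℝ) / m) :
    -(t i₀) ≥ ε * m * (x - 1 / (n : ℝ)) := by
  classical
  have hnR : (0:ℝ) < n := by exact_mod_cast hn
  have hmR : (0:ℝ) < m := by exact_mod_cast hm
  -- partition: total card = m
  have huniv : (Finset.univ : Finset (Fin m)) = Finset.univ.biUnion A := by
    ext y
    simp only [Finset.mem_univ, Finset.mem_biUnion, true_iff]
    obtain ⟨i, hi, -⟩ := hpart y
    exact ⟨i, by simp, hi⟩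
  have hcard : ∑ i, (A i).card = m := by
    have := Finset.card_biUnion (s := (Finset.univ : Finset (Fin n))) (t := A)
      (fun i _ j _ hij => Finset.disjoint_left.mpr (fun y hyi hyj =>
        hij ((hpart y).unique hyi hyj)))
    rw [← huniv] at this
    simpa using this.symm
  have hcardR : ∑ i, ((A i).card : ℝ) = m := by exact_mod_cast hcard
  set c : ℝ := ((A i₀).card : ℝ) with hc
  -- envy-freeness summed over i ≠ i₀
  have hkey : ∀ i ∈ Finset.univ.erase i₀,
      ε * c + t i₀ ≤ ε * ((A i).card : ℝ) + t i := by
    intro i hi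
    have hne := Finset.ne_of_mem_erase hi
    have h := hEF i i₀
    rw [hvi i _ hne, hvi i _ hne] at h
    linarith
  have hsum := Finset.sum_le_sum hkey
  have hcarderase : ((Finset.univ.erase i₀).card : ℝ) = (n : ℝ) - 1 := by
    rw [Finset.card_erase_of_mem (Finset.mem_univ i₀), Finset.card_univ, Fintype.card_fin]
    have : 1 ≤ n := hn
    push_cast [Nat.cast_sub this]
    ring
  have hL : ∑ _i ∈ Finset.univ.erase i₀, (ε * c + t i₀) = ((n:ℝ) - 1) * (ε * c + t i₀) := by
    rw [Finset.sum_const, nsmul_eq_mul, hcarderase]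
  have hR : ∑ i ∈ Finset.univ.erase i₀, (ε * ((A i).card : ℝ) + t i)
      = ε * ((m:ℝ) - c) - t i₀ := by
    rw [Finset.sum_add_distrib, ← Finset.mul_sum]
    have h1 : ∑ i ∈ Finset.univ.erase i₀, ((A i).card : ℝ) = (m:ℝ) - c := by
      have := Finset.sum_erase_add Finset.univ (fun i => ((A i).card : ℝ)) (Finset.mem_univ i₀)
      rw [hcardR] at this
      linarith
    have h2 : ∑ i ∈ Finset.univ.erase i₀, t i = -t i₀ := by
      have := Finset.sum_erase_add Finset.univ t (Finset.mem_univ i₀)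
      rw [ht] at this
      linarith
    rw [h1, h2]; ring
  rw [hL, hR] at hsum
  -- now (n-1)(εc + t i₀) ≤ ε(m-c) - t i₀, hence n(εc + t i₀) ≤ εm
  have hmain : (ε * c + t i₀) * (n:ℝ) ≤ ε * m := by nlinarith
  have hdiv : ε * c + t i₀ ≤ ε * m / n := (le_div_iff₀ hnR).mpr hmain
  have hrw : ε * m * (x - 1 / (n:ℝ)) = ε * c - ε * m / n := by
    rw [hx]
    field_simp
  rw [hrw]
  linarith
end

section
/- There exist instances with constant-sum additive valuations (every agent values the grand bundle equally) such that any envy-free allocation with transfers (A,t) achieving SW(A,t) ≥ α·SW(A*) requires total transfer ∑_i |t_i| ≥ (α − 2/√n)·m/√n, for any α ∈ [2/√n, 1]. -/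
open Finset

namespace Stmt13

variable (r q : ℕ)

noncomputable def vv (i : Fin (r ^ 2)) (g : Fin r × Fin q) : ℝ :=
  if (i : ℕ) < r then (if (g.1 : ℕ) = (i : ℕ) then 1 else 0) else 1 / r

def As (i : Fin (r ^ 2)) : Finset (Fin r × Fin q) :=
  univ.filter (fun g => (g.1 : ℕ) = (i : ℕ))

lemma mem_As {i : Fin (r ^ 2)} {x : Fin r × Fin q} :
    x ∈ As r q i ↔ (x.1 : ℕ) = (i : ℕ) := by
  simp [As]

lemma vv_nonneg (i : Fin (r ^ 2)) (g : Fin r × Fin q) : 0 ≤ vv r q i g := by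
  unfold vv; split_ifs <;> positivity

lemma vv_le_one (hr : 0 < r) (i : Fin (r ^ 2)) (g : Fin r × Fin q) : vv r q i g ≤ 1 := by
  have hrR : (1:ℝ) ≤ (r:ℝ) := by exact_mod_cast hr
  unfold vv; split_ifs
  · norm_num
  · norm_num
  · rw [div_le_one (by linarith)]; exact hrR

lemma sum_partition {ι : Type*} [Fintype ι] [DecidableEq ι] {n : ℕ}
    (B : Fin n → Finset ι) (hB : ∀ x : ι, ∃! i, x ∈ B i) (f : ι → ℝ) :
    ∑ i, ∑ g ∈ B i, f g = ∑ g, f g := by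
  have h1 : ∀ i, ∑ g ∈ B i, f g = ∑ g : ι, if g ∈ B i then f g else 0 := by
    intro i
    rw [← Finset.sum_filter]
    congr 1
    ext g; simp
  simp_rw [h1]
  rw [Finset.sum_comm]
  refine Finset.sum_congr rfl fun g _ => ?_
  obtain ⟨i₀, hi₀, huniq⟩ := hB g
  rw [Finset.sum_eq_single i₀]
  · simp [hi₀]
  · intro j _ hj
    exact if_neg (fun hmem => hj (huniq j hmem))
  · exact fun h => absurd (mem_univ i₀) h

lemma sum_block {m : ℕ} (hi : m < r) :
    ∑ g : Fin r × Fin q, (if (g.1 : ℕ) = m then (1:ℝ) else 0) = q := by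
  rw [Fintype.sum_prod_type]
  calc ∑ b : Fin r, ∑ _k : Fin q, (if (b : ℕ) = m then (1:ℝ) else 0)
      = ∑ b : Fin r, (if b = ⟨m, hi⟩ then (q:ℝ) else 0) := by
        refine Finset.sum_congr rfl fun b _ => ?_
        have h : ((b:ℕ) = m) ↔ (b = ⟨m, hi⟩) := by simp [Fin.ext_iff]
        rw [Finset.sum_const, card_univ, Fintype.card_fin, nsmul_eq_mul]
        by_cases hb : (b:ℕ) = m
        · rw [if_pos hb, if_pos (h.mp hb)]; ring
        · rw [if_neg hb, if_neg (fun hc => hb (h.mpr hc))]; ring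
    _ = q := by simp

lemma grand_sum (hr : 0 < r) (i : Fin (r ^ 2)) :
    ∑ g : Fin r × Fin q, vv r q i g = q := by
  have hrR : (0:ℝ) < (r:ℝ) := by exact_mod_cast hr
  by_cases hi : (i:ℕ) < r
  · simp only [vv, if_pos hi]
    exact sum_block r q hi
  · simp only [vv, if_neg hi, Finset.sum_const, card_univ, Fintype.card_prod,
      Fintype.card_fin, nsmul_eq_mul]
    push_cast
    field_simp

lemma sum_ind (c : ℝ) :
    ∑ i : Fin (r ^ 2), (if (i : ℕ) < r then c else 0) = r * c := by
  rw [Fin.sum_univ_eq_sum_range (fun k => if k < r then c else 0) (r ^ 2)]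
  have hsub : Finset.range r ⊆ Finset.range (r ^ 2) := by
    apply Finset.range_subset_range.mpr
    nlinarith
  rw [← Finset.sum_subset hsub (fun x _ hx => by
    rw [if_neg (by simpa using hx)])]
  rw [Finset.sum_congr rfl (fun x hx => if_pos (Finset.mem_range.mp hx))]
  rw [Finset.sum_const, Finset.card_range, nsmul_eq_mul]

lemma As_sum (hr : 0 < r) :
    ∑ i, ∑ g ∈ As r q i, vv r q i g = (r : ℝ) * q := by
  have hterm : ∀ i : Fin (r ^ 2),
      ∑ g ∈ As r q i, vv r q i g = if (i : ℕ) < r then (q : ℝ) else 0 := by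
    intro i
    by_cases hi : (i : ℕ) < r
    · rw [if_pos hi]
      have h1 : ∑ g ∈ As r q i, vv r q i g = ∑ g ∈ As r q i, (1:ℝ) := by
        refine Finset.sum_congr rfl fun g hg => ?_
        rw [mem_As] at hg
        simp [vv, hi, hg]
      rw [h1, As, Finset.sum_filter]
      exact sum_block r q hi
    · rw [if_neg hi]
      have h0 : As r q i = ∅ := by
        apply Finset.eq_empty_of_forall_notMem
        intro g hg
        rw [mem_As] at hg
        have := g.1.isLt
        omega
      simp [h0]
  simp_rw [hterm]
  exact sum_ind r (q : ℝ)

lemma Hs_card : ((univ.filter (fun i : Fin (r ^ 2) => (i : ℕ) < r)).card : ℝ) = r := by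
  rw [Finset.card_filter]
  push_cast
  have h := sum_ind r (1:ℝ)
  rw [mul_one] at h
  exact h

end Stmt13

/-- There are constant-sum additive instances (`n = r²` agents,
`m = r·q` items arranged in `√n = r` blocks of size `q = m/√n`) in which every
envy-free allocation with transfers achieving an `α` fraction of the optimal social
welfare requires total transfer at least `(α - 2/√n)·m/√n`, for `α ∈ [2/√n, 1]`. -/
theorem stmt13 (r q : ℕ) (hr : 0 < r) (hq : 0 < q)
    (α : ℝ) (hα1 : 2 / (r : ℝ) ≤ α) (hα2 : α ≤ 1) :
    ∃ (v : Fin (r ^ 2) → (Fin r × Fin q) → ℝ) (Astar : Fin (r ^ 2) → Finset (Fin r × Fin q)),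
      -- the valuations are constant-sum: every agent values the grand bundle at m/√n = q
      (∀ i, ∑ g : Fin r × Fin q, v i g = (q : ℝ)) ∧
      (∀ x : Fin r × Fin q, ∃! i, x ∈ Astar i) ∧
      (∀ B : Fin (r ^ 2) → Finset (Fin r × Fin q), (∀ x, ∃! i, x ∈ B i) →
        ∑ i, ∑ g ∈ B i, v i g ≤ ∑ i, ∑ g ∈ Astar i, v i g) ∧
      ∀ (A : Fin (r ^ 2) → Finset (Fin r × Fin q)) (t : Fin (r ^ 2) → ℝ),
        (∀ x, ∃! i, x ∈ A i) →
        ∑ i, t i = 0 →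
        (∀ i j, (∑ g ∈ A i, v i g) + t i ≥ (∑ g ∈ A j, v i g) + t j) →
        (∑ i, ∑ g ∈ A i, v i g) ≥ α * ∑ i, ∑ g ∈ Astar i, v i g →
        ∑ i, |t i| ≥ (α - 2 / (r : ℝ)) * ((r * q : ℕ) : ℝ) / r := by
  classical
  have hrR : (0:ℝ) < (r:ℝ) := by exact_mod_cast hr
  have hr1 : (1:ℝ) ≤ (r:ℝ) := by exact_mod_cast hr
  have hqR : (0:ℝ) < (q:ℝ) := by exact_mod_cast hq
  have hle : r ≤ r ^ 2 := by nlinarith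
  refine ⟨Stmt13.vv r q, Stmt13.As r q, ?_, ?_, ?_, ?_⟩
  · exact Stmt13.grand_sum r q hr
  · intro x
    refine ⟨⟨(x.1 : ℕ), lt_of_lt_of_le x.1.isLt hle⟩, ?_, ?_⟩
    · exact (Stmt13.mem_As r q).mpr rfl
    · intro j hj
      rw [Stmt13.mem_As] at hj
      exact Fin.ext hj.symm
  · intro B hB
    rw [Stmt13.As_sum r q hr]
    calc ∑ i, ∑ g ∈ B i, Stmt13.vv r q i g
        ≤ ∑ i, ∑ g ∈ B i, (1:ℝ) :=
          Finset.sum_le_sum fun i _ => Finset.sum_le_sum fun g _ => Stmt13.vv_le_one r q hr i g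
      _ = ∑ _g : Fin r × Fin q, (1:ℝ) := Stmt13.sum_partition B hB (fun _ => (1:ℝ))
      _ = (r:ℝ) * q := by
          rw [Finset.sum_const, Finset.card_univ, Fintype.card_prod, Fintype.card_fin,
            Fintype.card_fin, nsmul_eq_mul]
          push_cast
          ring
  · intro A t hpart hts hEF hSW
    set Hs := Finset.univ.filter (fun i : Fin (r ^ 2) => (i : ℕ) < r) with hHs
    set Ls := Finset.univ.filter (fun i : Fin (r ^ 2) => ¬ (i : ℕ) < r) with hLs
    set cA : Fin (r ^ 2) → ℝ := fun i => ((A i).card : ℝ) with hcA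
    -- total number of items
    have hcards : ∑ i, cA i = (r:ℝ) * q := by
      have h := Stmt13.sum_partition A hpart (fun _ => (1:ℝ))
      simp only [Finset.sum_const, nsmul_eq_mul, mul_one, Finset.card_univ,
        Fintype.card_prod, Fintype.card_fin] at h
      rw [hcA]
      push_cast at h ⊢
      exact h
    -- low agent valuations
    have hlowval : ∀ ℓ j : Fin (r ^ 2), ¬ (ℓ:ℕ) < r →
        ∑ g ∈ A j, Stmt13.vv r q ℓ g = cA j / r := by
      intro ℓ j hℓ
      simp only [Stmt13.vv, if_neg hℓ, Finset.sum_const, nsmul_eq_mul]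
      rw [hcA]
      ring
    have hgrand : ∀ ℓ, ∑ j, ∑ g ∈ A j, Stmt13.vv r q ℓ g = q := fun ℓ => by
      rw [Stmt13.sum_partition A hpart (Stmt13.vv r q ℓ)]
      exact Stmt13.grand_sum r q hr ℓ
    -- EF lower bound on low agents' transfers
    have hlowt : ∀ ℓ ∈ Ls, (q:ℝ) / (r:ℝ)^2 - cA ℓ / r ≤ t ℓ := by
      intro ℓ hℓ
      have hℓ' : ¬ (ℓ:ℕ) < r := by simpa [hLs] using hℓ
      have h1 : ∀ j, ∑ g ∈ A j, Stmt13.vv r q ℓ g + t j ≤ cA ℓ / r + t ℓ := by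
        intro j
        have h := hEF ℓ j
        rw [hlowval ℓ ℓ hℓ'] at h
        linarith
      have h2 := Finset.sum_le_sum (fun j (_ : j ∈ Finset.univ) => h1 j)
      rw [Finset.sum_add_distrib, hgrand ℓ, hts, Finset.sum_const, Finset.card_univ,
        Fintype.card_fin, nsmul_eq_mul] at h2
      have hr2 : (0:ℝ) < (r:ℝ)^2 := by positivity
      rw [sub_le_iff_le_add, div_le_iff₀ hr2]
      push_cast at h2
      nlinarith [h2]
    -- split total cards
    have hsplit : ∑ i ∈ Hs, cA i + ∑ i ∈ Ls, cA i = (r:ℝ) * q := by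
      rw [hHs, hLs, Finset.sum_filter_add_sum_filter_not]
      exact hcards
    set L := ∑ i ∈ Ls, cA i with hLdef
    have hHnn : 0 ≤ ∑ i ∈ Hs, cA i :=
      Finset.sum_nonneg fun i _ => by rw [hcA]; positivity
    have hLnn : 0 ≤ L := Finset.sum_nonneg fun i _ => by rw [hcA]; positivity
    have hLle : L ≤ (r:ℝ) * q := by linarith
    -- social welfare bound
    have hSW' : α * ((r:ℝ) * q) ≤ ∑ i, ∑ g ∈ A i, Stmt13.vv r q i g := by
      rw [Stmt13.As_sum r q hr] at hSW
      exact hSW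
    have hswsplit : ∑ i, ∑ g ∈ A i, Stmt13.vv r q i g
        = ∑ i ∈ Hs, ∑ g ∈ A i, Stmt13.vv r q i g + ∑ i ∈ Ls, ∑ g ∈ A i, Stmt13.vv r q i g := by
      rw [hHs, hLs, Finset.sum_filter_add_sum_filter_not]
    have hhigh : ∑ i ∈ Hs, ∑ g ∈ A i, Stmt13.vv r q i g ≤ ∑ i ∈ Hs, cA i := by
      refine Finset.sum_le_sum fun i _ => ?_
      calc ∑ g ∈ A i, Stmt13.vv r q i g ≤ ∑ g ∈ A i, (1:ℝ) :=
            Finset.sum_le_sum fun g _ => Stmt13.vv_le_one r q hr i g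
        _ = cA i := by rw [hcA]; simp
    have hlow : ∑ i ∈ Ls, ∑ g ∈ A i, Stmt13.vv r q i g = L / r := by
      rw [hLdef, Finset.sum_div]
      refine Finset.sum_congr rfl fun ℓ hℓ => ?_
      have hℓ' : ¬ (ℓ:ℕ) < r := by simpa [hLs] using hℓ
      exact hlowval ℓ ℓ hℓ'
    have hkey : α * ((r:ℝ) * q) ≤ (r:ℝ) * q - L + L / r := by
      rw [hswsplit, hlow] at hSW'
      linarith
    have hLr : L / r ≤ (q:ℝ) := by
      rw [div_le_iff₀ hrR]
      nlinarith
    have hLbound : L ≤ (1 - α) * ((r:ℝ) * q) + q := by linarith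
    -- cardinality of Ls
    have hLscard : ((Ls.card : ℝ)) = (r:ℝ)^2 - r := by
      have h : Hs.card + Ls.card = r ^ 2 := by
        rw [hHs, hLs, Finset.card_filter_add_card_filter_not, Finset.card_univ,
          Fintype.card_fin]
      have hHc : ((Hs.card : ℝ)) = r := by rw [hHs]; exact Stmt13.Hs_card r
      have h' : ((Hs.card : ℝ)) + ((Ls.card : ℝ)) = ((r:ℝ))^2 := by exact_mod_cast h
      linarith
    -- sum transfers on low agents
    have h3 : ((Ls.card : ℝ)) * ((q:ℝ) / (r:ℝ)^2) - L / r ≤ ∑ ℓ ∈ Ls, t ℓ := by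
      have := Finset.sum_le_sum hlowt
      rw [Finset.sum_sub_distrib, Finset.sum_const, nsmul_eq_mul, ← Finset.sum_div,
        ← hLdef] at this
      exact this
    have h4 : ∑ ℓ ∈ Ls, t ℓ ≤ ∑ i, |t i| := by
      calc ∑ ℓ ∈ Ls, t ℓ ≤ ∑ ℓ ∈ Ls, |t ℓ| := Finset.sum_le_sum fun ℓ _ => le_abs_self _
        _ ≤ ∑ i, |t i| := Finset.sum_le_sum_of_subset_of_nonneg (Finset.subset_univ _)
            (fun i _ _ => abs_nonneg _)
    clear_value L
    have hfinal : (α - 2 / (r:ℝ)) * ((r:ℝ) * q) / r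
        ≤ ((r:ℝ)^2 - r) * ((q:ℝ) / (r:ℝ)^2) - L / r := by
      have e1 : (α - 2 / (r:ℝ)) * ((r:ℝ) * q) / r = α * q - 2 * q / r := by
        field_simp
      have e2 : ((r:ℝ)^2 - r) * ((q:ℝ) / (r:ℝ)^2) = q - q / r := by
        field_simp
      rw [e1, e2]
      have h5 : L / r ≤ ((1 - α) * ((r:ℝ) * q) + q) / r :=
        (div_le_div_iff_of_pos_right hrR).mpr hLbound
      have e3 : ((1 - α) * ((r:ℝ) * q) + q) / r = (1 - α) * q + q / r := by
        field_simp
      rw [e3] at h5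
      have hgoal : α * (q:ℝ) - 2 * q / r ≤ q - q / r - L / r := by
        ring_nf
        ring_nf at h5
        linarith
      exact hgoal
    push_cast
    rw [ge_iff_le]
    calc (α - 2 / (r:ℝ)) * ((r:ℝ) * q) / r
        ≤ ((r:ℝ)^2 - r) * ((q:ℝ) / (r:ℝ)^2) - L / r := hfinal
      _ ≤ ∑ ℓ ∈ Ls, t ℓ := by rw [← hLscard]; exact h3
      _ ≤ ∑ i, |t i| := h4
end

section
/- For additive valuations and any α ∈ (0,1], there exists an envy-free allocation with transfers (A,t) such that SW(A,t) ≥ α·SW(A*) and the total transfer satisfies ∑_i |t_i| ≤ n(α·max_i v_i(A*_i) + 2), where A* is a welfare-maximizing allocation; the marginal value of every item to every agent is at most 1. -/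
namespace Stmt14
set_option linter.unusedSectionVars false
set_option linter.unusedVariables false
set_option maxHeartbeats 1000000


variable {β : Type*}

/-- Sum of edge weights along a path (list of vertices). -/
def pw (w : β → β → ℝ) : List β → ℝ
  | [] => 0
  | [_] => 0
  | a :: b :: l => w a b + pw w (b :: l)

@[simp] lemma pw_nil (w : β → β → ℝ) : pw w [] = 0 := rfl
@[simp] lemma pw_single (w : β → β → ℝ) (a : β) : pw w [a] = 0 := rfl
@[simp] lemma pw_cons₂ (w : β → β → ℝ) (a b : β) (l : List β) :
    pw w (a :: b :: l) = w a b + pw w (b :: l) := rfl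

lemma pw_concat (w : β → β → ℝ) :
    ∀ (L : List β) (h : L ≠ []) (j : β), pw w (L ++ [j]) = pw w L + w (L.getLast h) j
  | [], h, _ => absurd rfl h
  | [a], _, j => by simp
  | a :: b :: l, _, j => by
    have ih := pw_concat w (b :: l) (by simp) j
    simp only [List.cons_append] at ih ⊢
    rw [pw_cons₂, pw_cons₂, ih, List.getLast_cons (by simp : (b :: l) ≠ [])]
    ring

lemma pw_add (w₁ w₂ : β → β → ℝ) :
    ∀ L : List β, pw (fun i j => w₁ i j + w₂ i j) L = pw w₁ L + pw w₂ L
  | [] => by simp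
  | [a] => by simp
  | a :: b :: l => by
    have ih := pw_add w₁ w₂ (b :: l)
    simp only [pw_cons₂] at *
    rw [ih]; ring

lemma pw_congr {w₁ w₂ : β → β → ℝ} (h : ∀ i j, w₁ i j = w₂ i j) :
    ∀ L : List β, pw w₁ L = pw w₂ L
  | [] => by simp
  | [a] => by simp
  | a :: b :: l => by
    have ih := pw_congr h (b :: l)
    simp only [pw_cons₂] at *
    rw [ih, h]

lemma pw_zero {w : β → β → ℝ} (h : ∀ i j, w i j = 0) : ∀ L : List β, pw w L = 0
  | [] => by simp
  | [a] => by simp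
  | a :: b :: l => by
    have ih := pw_zero h (b :: l)
    simp only [pw_cons₂] at *
    rw [ih, h]; ring

lemma pw_sub_dropLast (f : β → β → ℝ) (b : β → ℝ) :
    ∀ L : List β, pw (fun i j => f i j - b i) L = pw f L - (L.dropLast.map b).sum
  | [] => by simp
  | [a] => by simp
  | a :: c :: l => by
    have ih := pw_sub_dropLast f b (c :: l)
    simp only [pw_cons₂, List.dropLast_cons₂, List.map_cons, List.sum_cons] at *
    rw [ih]; ring


variable {β : Type*}
lemma pw_cons (w : β → β → ℝ) (a : β) (l : List β) (h : l ≠ []) :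
    pw w (a :: l) = w a (l.head h) + pw w l := by
  cases l with
  | nil => exact absurd rfl h
  | cons b m => rfl

lemma pw_append_cons (w : β → β → ℝ) :
    ∀ (A : List β) (b : β) (C : List β), pw w (A ++ b :: C) = pw w (A ++ [b]) + pw w (b :: C)
  | [], b, C => by simp
  | a :: A', b, C => by
    have ih := pw_append_cons w A' b C
    rw [List.cons_append, List.cons_append,
      pw_cons w a (A' ++ b :: C) (by simp), pw_cons w a (A' ++ [b]) (by simp), ih]
    have hh : (A' ++ b :: C).head (by simp) = (A' ++ [b]).head (by simp) := by
      cases A' with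
      | nil => simp
      | cons x m => simp
    rw [hh]; ring

variable {β : Type*}

lemma exists_potential [Fintype β] [DecidableEq β]
    (w : β → β → ℝ) (B : β → ℝ)
    (hcyc : ∀ (L : List β) (h : L ≠ []), L.Nodup → pw w (L ++ [L.head h]) ≤ 0)
    (hpath : ∀ (L : List β) (h : L ≠ []), L.Nodup → pw w L ≤ B (L.getLast h)) :
    ∃ d : β → ℝ, (∀ i, 0 ≤ d i ∧ d i ≤ B i) ∧ ∀ i j, i ≠ j → w i j ≤ d j - d i := by
  classical
  set univL : List β := (Finset.univ : Finset β).toList with huL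
  have hund : univL.Nodup := Finset.nodup_toList _
  have humem : ∀ x : β, x ∈ univL := fun x => by simp [huL]
  have hpool : ∀ L : List β, L ∈ (univL.sublists.flatMap List.permutations) ↔ L.Nodup := by
    intro L
    constructor
    · intro hL
      rw [List.mem_flatMap] at hL
      obtain ⟨s, hs, hLs⟩ := hL
      rw [List.mem_sublists] at hs
      exact ((List.mem_permutations.1 hLs).symm.nodup ((hs.nodup) hund))
    · intro hnd
      rw [List.mem_flatMap]
      refine ⟨univL.filter (· ∈ L), List.mem_sublists.2 List.filter_sublist, ?_⟩
      rw [List.mem_permutations]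
      apply List.perm_of_nodup_nodup_toFinset_eq hnd (hund.filter _)
      ext x
      simp [List.mem_filter, humem x]
  let C : β → Finset (List β) := fun j =>
    (univL.sublists.flatMap List.permutations).toFinset.filter (fun L => L.getLast? = some j)
  have hCmem : ∀ (j : β) (L : List β), L ∈ C j ↔ (L.Nodup ∧ L.getLast? = some j) := by
    intro j L
    simp only [C, Finset.mem_filter, List.mem_toFinset, hpool]
  have hCne : ∀ (j : β) (L : List β), L ∈ C j → L ≠ [] := by
    intro j L hL
    rcases (hCmem j L).1 hL with ⟨-, h2⟩
    intro he; rw [he] at h2; simp at h2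
  have hCgl : ∀ (j : β) (L : List β) (hL : L ∈ C j) , L.getLast (hCne j L hL) = j := by
    intro j L hL
    rcases (hCmem j L).1 hL with ⟨-, h2⟩
    rw [List.getLast?_eq_getLast_of_ne_nil (hCne j L hL)] at h2
    exact Option.some_injective _ h2
  have hsing : ∀ j : β, [j] ∈ C j := by
    intro j
    rw [hCmem]
    exact ⟨List.nodup_singleton j, rfl⟩
  have hCnem : ∀ j : β, (C j).Nonempty := fun j => ⟨[j], hsing j⟩
  refine ⟨fun j => (C j).sup' (hCnem j) (pw w), ?_, ?_⟩
  · intro i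
    constructor
    · have := Finset.le_sup' (pw w) (hsing i)
      exact le_trans (le_of_eq (pw_single w i).symm) this
    · apply Finset.sup'_le
      intro L hL
      have := hpath L (hCne i L hL) ((hCmem i L).1 hL).1
      rwa [hCgl i L hL] at this
  · intro i j hij
    obtain ⟨L, hLC, hLval⟩ := Finset.exists_mem_eq_sup' (hCnem i) (pw w)
    have hLnd : L.Nodup := ((hCmem i L).1 hLC).1
    have hLne : L ≠ [] := hCne i L hLC
    have hLgl : L.getLast hLne = i := hCgl i L hLC
    simp only []
    rw [hLval]
    by_cases hjL : j ∈ L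
    · -- split L = L₁ ++ j :: L₂ ; use the cycle hypothesis
      obtain ⟨L₁, L₂, rfl⟩ := List.append_of_mem hjL
      have hL₂ne : (j :: L₂ : List β) ≠ [] := by simp
      have hgl₂ : (j :: L₂).getLast hL₂ne = i := by
        rw [← hLgl]
        exact (List.getLast_append_of_right_ne_nil L₁ (j :: L₂) hL₂ne).symm
      have hnd₂ : (j :: L₂).Nodup := ((List.sublist_append_right L₁ _).nodup) hLnd
      have hcyc₂ := hcyc (j :: L₂) hL₂ne hnd₂
      rw [List.head_cons] at hcyc₂
      have hconc : pw w ((j :: L₂) ++ [j]) = pw w (j :: L₂) + w i j := by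
        rw [pw_concat w (j :: L₂) hL₂ne j, hgl₂]
      have hsplit : pw w (L₁ ++ j :: L₂) = pw w (L₁ ++ [j]) + pw w (j :: L₂) :=
        pw_append_cons w L₁ j L₂
      have hmem₁ : (L₁ ++ [j]) ∈ C j := by
        rw [hCmem]
        constructor
        · exact ((List.append_sublist_append_left _).2 (by
            simpa using List.sublist_cons_self j L₂ ) ).nodup hLnd
        · simp
      have hle : pw w (L₁ ++ [j]) ≤ (C j).sup' (hCnem j) (pw w) :=
        Finset.le_sup' (pw w) hmem₁
      have : pw w (L₁ ++ j :: L₂) + w i j ≤ pw w (L₁ ++ [j]) := by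
        rw [hsplit]; linarith [hconc ▸ hcyc₂]
      linarith
    · -- extend the path by j
      have hmem : (L ++ [j]) ∈ C j := by
        rw [hCmem]
        constructor
        · rw [List.nodup_append]
          refine ⟨hLnd, List.nodup_singleton j, ?_⟩
          intro a ha b hb hab
          rw [List.mem_singleton] at hb
          subst hb; subst hab; exact hjL ha
        · simp
      have := Finset.le_sup' (pw w) hmem
      rw [pw_concat w L hLne j, hLgl] at this
      linarith

variable {n : ℕ} {ι : Type*} [Fintype ι] [DecidableEq ι]


variable {n : ℕ} {ι : Type*} [Fintype ι] [DecidableEq ι]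

/-- weight of a partial assignment -/
def Wt (v : Fin n → ι → ℝ) (F : Fin n → Option ι) : ℝ := ∑ i, (F i).elim 0 (v i)

/-- valid partial matching into R -/
def ValidM (R : Finset ι) (F : Fin n → Option ι) : Prop :=
  (∀ i g, F i = some g → g ∈ R) ∧ ∀ i j g, F i = some g → F j = some g → i = j

/-- shift items along a path, giving `e` to the last agent -/
def shiftG (μ : Fin n → Option ι) (e : Option ι) : List (Fin n) → Fin n → Option ι
  | [] => μ
  | [a] => Function.update μ a e
  | a :: b :: l => Function.update (shiftG μ e (b :: l)) a (μ b)

lemma shiftG_notmem (μ : Fin n → Option ι) (e : Option ι) :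
    ∀ (L : List (Fin n)) (i : Fin n), i ∉ L → shiftG μ e L i = μ i
  | [], i, _ => rfl
  | [a], i, hi => by
    have : i ≠ a := by simp at hi; exact hi
    simp [shiftG, Function.update_of_ne this]
  | a :: b :: l, i, hi => by
    have hia : i ≠ a := fun h => hi (h ▸ List.mem_cons_self)
    have hibl : i ∉ b :: l := fun h => hi (List.mem_cons_of_mem _ h)
    simp only [shiftG, Function.update_of_ne hia]
    exact shiftG_notmem μ e (b :: l) i hibl

lemma shiftG_vchar (μ : Fin n → Option ι) (e : Option ι) :
    ∀ (L : List (Fin n)) (h : L ≠ []) (j : Fin n) (g : ι), shiftG μ e L j = some g →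
      (j ∉ L ∧ μ j = some g) ∨ (j = L.getLast h ∧ e = some g) ∨
      (∃ (k : ℕ) (hk : k + 1 < L.length),
        j = L[k]'(Nat.lt_of_succ_lt hk) ∧ μ (L[k+1]'hk) = some g)
  | [], h, _, _, _ => absurd rfl h
  | [a], _, j, g, hj => by
    by_cases hja : j = a
    · subst hja
      simp only [shiftG, Function.update_self] at hj
      exact Or.inr (Or.inl ⟨by simp, hj⟩)
    · simp only [shiftG, Function.update_of_ne hja] at hj
      exact Or.inl ⟨by simp [hja], hj⟩
  | a :: b :: l, _, j, g, hj => by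
    by_cases hja : j = a
    · subst hja
      simp only [shiftG, Function.update_self] at hj
      refine Or.inr (Or.inr ⟨0, by simp, by simp, by simpa using hj⟩)
    · simp only [shiftG, Function.update_of_ne hja] at hj
      rcases shiftG_vchar μ e (b :: l) (by simp) j g hj with h1 | h2 | h3
      · exact Or.inl ⟨by simp [hja, h1.1], h1.2⟩
      · exact Or.inr (Or.inl ⟨by rw [h2.1, List.getLast_cons (by simp : (b :: l) ≠ [])], h2.2⟩)
      · obtain ⟨k, hk, hjk, hgk⟩ := h3
        refine Or.inr (Or.inr ⟨k + 1, by simpa using Nat.succ_lt_succ hk, ?_, ?_⟩)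
        · simpa using hjk
        · simpa using hgk




set_option linter.unusedSectionVars false
set_option maxHeartbeats 1000000

variable {n : ℕ} {ι : Type*} [Fintype ι] [DecidableEq ι]

lemma shiftG_valid {R : Finset ι} {μ : Fin n → Option ι} (hμ : ValidM R μ) (e : Option ι)
    (L : List (Fin n)) (h : L ≠ []) (hnd : L.Nodup)
    (heR : ∀ g, e = some g → g ∈ R)
    (heC : ∀ g, e = some g → ∀ j, μ j = some g → j = L.head h) :
    ValidM R (shiftG μ e L) := by
  constructor
  · intro i g hig
    rcases shiftG_vchar μ e L h i g hig with h1 | h2 | h3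
    · exact hμ.1 i g h1.2
    · exact heR g h2.2
    · obtain ⟨k, hk, -, hg⟩ := h3
      exact hμ.1 _ g hg
  · intro i j g hig hjg
    have hmemget : ∀ (k : ℕ) (hk : k < L.length), L[k]'hk ∈ L := fun k hk => List.getElem_mem _
    have hhead : L.head h = L[0]'(List.length_pos_iff.2 h) := List.head_eq_getElem_zero h
    have hlast : L.getLast h = L[L.length - 1]'(by
      have := List.length_pos_iff.2 h; omega) := List.getLast_eq_getElem h
    rcases shiftG_vchar μ e L h i g hig with hi1 | hi2 | hi3 <;>
      rcases shiftG_vchar μ e L h j g hjg with hj1 | hj2 | hj3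
    · exact hμ.2 i j g hi1.2 hj1.2
    · -- i outside, j last with e
      exfalso
      have := heC g hj2.2 i hi1.2
      exact hi1.1 (this ▸ List.head_mem h)
    · -- i outside, j via successor
      exfalso
      obtain ⟨k, hk, -, hg⟩ := hj3
      have := hμ.2 i _ g hi1.2 hg
      exact hi1.1 (this ▸ hmemget (k+1) hk)
    · exfalso
      have := heC g hi2.2 j hj1.2
      exact hj1.1 (this ▸ List.head_mem h)
    · rw [hi2.1, hj2.1]
    · exfalso
      obtain ⟨k, hk, -, hg⟩ := hj3
      have hkh := heC g hi2.2 _ hg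
      rw [hhead] at hkh
      have : k + 1 = 0 := (hnd.getElem_inj_iff).1 hkh
      omega
    · exfalso
      obtain ⟨k, hk, -, hg⟩ := hi3
      have := hμ.2 _ j g hg hj1.2
      exact hj1.1 (this ▸ hmemget (k+1) hk)
    · exfalso
      obtain ⟨k, hk, -, hg⟩ := hi3
      have hkh := heC g hj2.2 _ hg
      rw [hhead] at hkh
      have : k + 1 = 0 := (hnd.getElem_inj_iff).1 hkh
      omega
    · obtain ⟨k, hk, hik, hg⟩ := hi3
      obtain ⟨k', hk', hjk, hg'⟩ := hj3
      have := hμ.2 _ _ g hg hg'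
      have hkk : k + 1 = k' + 1 := (hnd.getElem_inj_iff).1 this
      have : k = k' := by omega
      subst this
      rw [hik, hjk]

set_option linter.unusedSectionVars false
variable {n : ℕ} {ι : Type*} [Fintype ι] [DecidableEq ι]
lemma wt_update (v : Fin n → ι → ℝ) (F : Fin n → Option ι) (a : Fin n) (e : Option ι) :
    Wt v (Function.update F a e) = Wt v F - (F a).elim 0 (v a) + e.elim 0 (v a) := by
  have hfun : (fun i => ((Function.update F a e) i).elim 0 (v i)) =
      Function.update (fun i => (F i).elim 0 (v i)) a (e.elim 0 (v a)) := by
    funext i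
    by_cases hia : i = a
    · subst hia; simp
    · simp [Function.update_of_ne hia]
  unfold Wt
  rw [hfun, Finset.sum_update_of_mem (Finset.mem_univ a)]
  have herase : Finset.univ \ {a} = Finset.univ.erase a := by
    rw [Finset.sdiff_singleton_eq_erase]
  rw [herase]
  have := Finset.sum_erase_add Finset.univ (fun i => (F i).elim 0 (v i)) (Finset.mem_univ a)
  linarith

lemma shiftG_weight (v : Fin n → ι → ℝ) (μ : Fin n → Option ι) (e : Option ι) :
    ∀ (L : List (Fin n)) (h : L ≠ []) (hnd : L.Nodup),
      Wt v (shiftG μ e L) = Wt v μ - (∑ i ∈ L.toFinset, (μ i).elim 0 (v i))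
        + pw (fun i j => (μ j).elim 0 (v i)) L + e.elim 0 (v (L.getLast h))
  | [], h, _ => absurd rfl h
  | [a], _, _ => by
    show Wt v (Function.update μ a e) = _
    rw [wt_update]
    simp
  | a :: b :: l, _, hnd => by
    have hanbl : a ∉ b :: l := by
      intro hmem
      exact (List.nodup_cons.1 hnd).1 hmem
    have ih := shiftG_weight v μ e (b :: l) (by simp) (List.nodup_cons.1 hnd).2
    show Wt v (Function.update (shiftG μ e (b :: l)) a (μ b)) = _
    rw [wt_update, shiftG_notmem μ e (b :: l) a hanbl, ih]
    rw [show (a :: b :: l).toFinset = insert a (b :: l).toFinset from List.toFinset_cons,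
      Finset.sum_insert (fun hmem => hanbl (List.mem_toFinset.1 hmem))]
    rw [pw_cons₂, List.getLast_cons (by simp : (b :: l) ≠ [])]
    ring

lemma shiftG_valid_weight {v : Fin n → ι → ℝ} {R : Finset ι} {μ : Fin n → Option ι}
    (hμ : ValidM R μ) (e : Option ι)
    (L : List (Fin n)) (h : L ≠ []) (hnd : L.Nodup)
    (heR : ∀ g, e = some g → g ∈ R)
    (heC : ∀ g, e = some g → ∀ j, μ j = some g → j = L.head h) :
    ∃ F, ValidM R F ∧
      Wt v F = Wt v μ - (∑ i ∈ L.toFinset, (μ i).elim 0 (v i))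
        + pw (fun i j => (μ j).elim 0 (v i)) L + e.elim 0 (v (L.getLast h)) :=
  ⟨shiftG μ e L, shiftG_valid hμ e L h hnd heR heC, shiftG_weight v μ e L h hnd⟩

set_option linter.unusedSectionVars false
set_option maxHeartbeats 1000000

variable {n : ℕ} {ι : Type*} [Fintype ι] [DecidableEq ι]

/-- envy weight function of an allocation -/
def wP (v : Fin n → ι → ℝ) (P : Fin n → Finset ι) : Fin n → Fin n → ℝ :=
  fun i j => (∑ g ∈ P j, v i g) - ∑ g ∈ P i, v i g

lemma pool (v : Fin n → ι → ℝ) (hn : 0 < n) (hv0 : ∀ i g, 0 ≤ v i g) :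
    ∀ (N : ℕ) (R : Finset ι), R.card ≤ N →
    ∃ (P : Fin n → Finset ι) (wit : Fin n → Option ι),
      (∀ x, x ∈ R ↔ ∃ i, x ∈ P i) ∧
      (∀ i j, i ≠ j → ∀ x, x ∈ P i → x ∈ P j → False) ∧
      (∀ i g, wit i = some g → g ∈ R) ∧
      (∀ (L : List (Fin n)) (h : L ≠ []), L.Nodup → pw (wP v P) (L ++ [L.head h]) ≤ 0) ∧
      (∀ (L : List (Fin n)) (h : L ≠ []), L.Nodup →
        pw (wP v P) L ≤ (wit (L.getLast h)).elim 0 (v (L.getLast h))) := by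
  intro N
  induction N with
  | zero =>
    intro R hR
    have hRe : R = ∅ := Finset.card_eq_zero.1 (Nat.le_zero.1 hR)
    subst hRe
    have hz : ∀ i j : Fin n, wP v (fun _ => ∅) i j = 0 := by intro i j; simp [wP]
    exact ⟨fun _ => ∅, fun _ => none, by simp, by simp, by simp,
      fun L h hnd => le_of_eq (pw_zero hz _), fun L h hnd => by
        rw [pw_zero hz L]; simp⟩
  | succ N ih =>
    intro R hR
    classical
    let VS : Finset (Fin n → Option ι) := Finset.univ.filter (ValidM R)
    have hVSne : (fun _ => none : Fin n → Option ι) ∈ VS := by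
      refine Finset.mem_filter.2 ⟨Finset.mem_univ _, ⟨?_, ?_⟩⟩
      · intro i g h; cases h
      · intro i j g h; cases h
    obtain ⟨μ, hμVS, hμmax⟩ := Finset.exists_max_image VS (Wt v) ⟨_, hVSne⟩
    have hμval : ValidM R μ := (Finset.mem_filter.1 hμVS).2
    have hopt : ∀ F, ValidM R F → Wt v F ≤ Wt v μ := fun F hF =>
      hμmax F (Finset.mem_filter.2 ⟨Finset.mem_univ F, hF⟩)
    by_cases hmat : ∃ i g, μ i = some g
    · obtain ⟨i₁, g₁, hg₁⟩ := hmat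
      set R₂ := R.filter (fun g => ∀ i, μ i ≠ some g) with hR₂def
      have hR₂sub : R₂ ⊆ R := Finset.filter_subset _ _
      have hR₂lt : R₂.card < R.card := by
        apply Finset.card_lt_card
        refine ⟨hR₂sub, fun hsub => ?_⟩
        have h1 : g₁ ∈ R₂ := hsub (hμval.1 i₁ g₁ hg₁)
        rw [hR₂def, Finset.mem_filter] at h1
        exact h1.2 i₁ hg₁
      obtain ⟨Q, wit', hQcov, hQdis, hQwit, hQcyc, hQpath⟩ := ih R₂ (by omega)
      set o : Fin n → Finset ι := fun i => (μ i).elim ∅ (fun g => {g}) with hodef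
      set P : Fin n → Finset ι := fun i => Q i ∪ o i with hPdef
      have hoin : ∀ i x, x ∈ o i ↔ μ i = some x := by
        intro i x
        cases hμi : μ i <;> simp [hodef, hμi, eq_comm]
      have hQR₂ : ∀ i x, x ∈ Q i → x ∈ R₂ := fun i x hx => (hQcov x).2 ⟨i, hx⟩
      have hdisQo : ∀ i j, Disjoint (Q i) (o j) := by
        intro i j
        rw [Finset.disjoint_left]
        intro x hxQ hxo
        have hx2 := hQR₂ i x hxQ
        rw [hR₂def, Finset.mem_filter] at hx2
        exact hx2.2 j ((hoin j x).1 hxo)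
      set mval : Fin n → Fin n → ℝ := fun i j => (μ j).elim 0 (v i) with hmvaldef
      set bf : Fin n → ℝ := fun i => (μ i).elim 0 (v i) with hbfdef
      have hval : ∀ i j, (∑ g ∈ P j, v i g) = (∑ g ∈ Q j, v i g) + mval i j := by
        intro i j
        rw [hPdef]
        simp only []
        rw [Finset.sum_union (hdisQo j j)]
        congr 1
        cases hμj : μ j <;> simp [hodef, hμj, hmvaldef]
      have hwPsplit : ∀ i j, wP v P i j = wP v Q i j + (mval i j - bf i) := by
        intro i j
        simp only [wP, hval]
        have : bf i = mval i i := rfl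
        rw [this]; ring
      have hpwP : ∀ L : List (Fin n),
          pw (wP v P) L = pw (wP v Q) L + (pw mval L - (L.dropLast.map bf).sum) := by
        intro L
        rw [← pw_sub_dropLast mval bf L, ← pw_add]
        exact pw_congr hwPsplit L
      have hexch : ∀ (L : List (Fin n)) (h : L ≠ []) (hnd : L.Nodup) (e : Option ι),
          (∀ g, e = some g → g ∈ R) →
          (∀ g, e = some g → ∀ j, μ j = some g → j = L.head h) →
          pw mval L + e.elim 0 (v (L.getLast h)) ≤ ∑ i ∈ L.toFinset, bf i := by
        intro L h hnd e heR heC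
        obtain ⟨F, hFval, hFwt⟩ := shiftG_valid_weight hμval e L h hnd heR heC
        have := hopt F hFval
        rw [hFwt] at this
        linarith
      refine ⟨P, μ, ?_, ?_, fun i g hig => hμval.1 i g hig, ?_, ?_⟩
      · intro x
        constructor
        · intro hxR
          by_cases hxm : ∃ i, μ i = some x
          · obtain ⟨i, hi⟩ := hxm
            exact ⟨i, Finset.mem_union_right _ ((hoin i x).2 hi)⟩
          · push_neg at hxm
            obtain ⟨i, hi⟩ := (hQcov x).1 (Finset.mem_filter.2 ⟨hxR, hxm⟩)
            exact ⟨i, Finset.mem_union_left _ hi⟩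
        · rintro ⟨i, hx⟩
          rcases Finset.mem_union.1 hx with h | h
          · exact hR₂sub (hQR₂ i x h)
          · exact hμval.1 i x ((hoin i x).1 h)
      · intro i j hij x hxi hxj
        rcases Finset.mem_union.1 hxi with h1 | h1 <;> rcases Finset.mem_union.1 hxj with h2 | h2
        · exact hQdis i j hij x h1 h2
        · exact (Finset.disjoint_left.1 (hdisQo i j)) h1 h2
        · exact (Finset.disjoint_left.1 (hdisQo j i)) h2 h1
        · exact hij (hμval.2 i j x ((hoin i x).1 h1) ((hoin j x).1 h2))
      · -- cycles
        intro L h hnd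
        rw [hpwP (L ++ [L.head h])]
        have h1 : pw (wP v Q) (L ++ [L.head h]) ≤ 0 := hQcyc L h hnd
        have hdl : (L ++ [L.head h]).dropLast = L := by
          rw [List.dropLast_concat]
        have h2 : pw mval (L ++ [L.head h]) = pw mval L + mval (L.getLast h) (L.head h) :=
          pw_concat mval L h _
        have h3 : (L.map bf).sum = ∑ i ∈ L.toFinset, bf i := (List.sum_toFinset bf hnd).symm
        have h4 := hexch L h hnd (μ (L.head h)) (fun g hg => hμval.1 _ g hg)
          (fun g hg j hj => hμval.2 j (L.head h) g hj hg)
        have h5 : (μ (L.head h)).elim 0 (v (L.getLast h)) = mval (L.getLast h) (L.head h) := rfl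
        rw [hdl, h2]
        rw [h5] at h4
        linarith
      · -- paths
        intro L h hnd
        rw [hpwP L]
        have h1 := hQpath L h hnd
        have h4 := hexch L h hnd (wit' (L.getLast h))
          (fun g hg => hR₂sub (hQwit _ g hg))
          (fun g hg j hj => by
            exfalso
            have hgR₂ := hQwit _ g hg
            rw [hR₂def, Finset.mem_filter] at hgR₂
            exact hgR₂.2 j hj)
        have h5 : ∑ i ∈ L.toFinset, bf i = (L.dropLast.map bf).sum + bf (L.getLast h) := by
          rw [List.sum_toFinset bf hnd]
          conv_lhs => rw [← List.dropLast_append_getLast h]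
          rw [List.map_append, List.sum_append]
          simp
        have h6 : (μ (L.getLast h)).elim 0 (v (L.getLast h)) = bf (L.getLast h) := rfl
        rw [h6]
        linarith
    · -- no item matched: every value on R is zero
      push_neg at hmat
      have hμnone : ∀ i, μ i = none := by
        intro i
        cases hμi : μ i with
        | none => rfl
        | some g => exact absurd hμi (hmat i g)
      have hWμ : Wt v μ = 0 := by
        unfold Wt
        apply Finset.sum_eq_zero
        intro i _
        rw [hμnone i]
        rfl
      have hzero : ∀ g ∈ R, ∀ i, v i g = 0 := by
        intro g hg i
        refine le_antisymm ?_ (hv0 i g)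
        have hF : ValidM R (Function.update (fun _ => none) i (some g)) := by
          constructor
          · intro i' g' h'
            by_cases hii : i' = i
            · subst hii
              rw [Function.update_self] at h'
              rw [← Option.some_injective _ h']
              exact hg
            · rw [Function.update_of_ne hii] at h'
              cases h'
          · intro i' j' g' h1 h2
            by_cases hii : i' = i
            · by_cases hjj : j' = i
              · rw [hii, hjj]
              · rw [Function.update_of_ne hjj] at h2; cases h2
            · rw [Function.update_of_ne hii] at h1; cases h1
        have hle := hopt _ hF
        have hWF : Wt v (Function.update (fun _ => none) i (some g)) = v i g := by
          rw [wt_update]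
          have : Wt v (fun _ => none : Fin n → Option ι) = 0 := by
            unfold Wt; apply Finset.sum_eq_zero; intro j _; rfl
          rw [this]
          simp
        rw [hWF, hWμ] at hle
        exact hle
      refine ⟨fun k => if k = (⟨0, hn⟩ : Fin n) then R else ∅, fun _ => none, ?_, ?_, by simp, ?_, ?_⟩
      · intro x
        constructor
        · intro hx
          exact ⟨⟨0, hn⟩, by simp [hx]⟩
        · rintro ⟨i, hi⟩
          simp only [] at hi
          by_cases h0 : i = (⟨0, hn⟩ : Fin n)
          · rw [if_pos h0] at hi; exact hi
          · rw [if_neg h0] at hi; cases hi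
      · intro i j hij x hxi hxj
        simp only [] at hxi hxj
        by_cases h0 : i = (⟨0, hn⟩ : Fin n)
        · have hj0 : j ≠ (⟨0, hn⟩ : Fin n) := h0 ▸ hij.symm
          rw [if_neg hj0] at hxj; cases hxj
        · rw [if_neg h0] at hxi; cases hxi
      · intro L h hnd
        have hz : ∀ i j : Fin n,
            wP v (fun k => if k = (⟨0, hn⟩ : Fin n) then R else ∅) i j = 0 := by
          intro i j
          have hs : ∀ (i' : Fin n) (S : Finset ι), S = R ∨ S = ∅ → (∑ g ∈ S, v i' g) = 0 := by
            rintro i' S (rfl | rfl)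
            · exact Finset.sum_eq_zero (fun g hg => hzero g hg i')
            · simp
          simp only [wP]
          rw [hs i _ (by split <;> simp), hs i _ (by split <;> simp)]
          ring
        exact le_of_eq (pw_zero hz _)
      · intro L h hnd
        have hz : ∀ i j : Fin n,
            wP v (fun k => if k = (⟨0, hn⟩ : Fin n) then R else ∅) i j = 0 := by
          intro i j
          have hs : ∀ (i' : Fin n) (S : Finset ι), S = R ∨ S = ∅ → (∑ g ∈ S, v i' g) = 0 := by
            rintro i' S (rfl | rfl)
            · exact Finset.sum_eq_zero (fun g hg => hzero g hg i')
            · simp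
          simp only [wP]
          rw [hs i _ (by split <;> simp), hs i _ (by split <;> simp)]
          ring
        rw [pw_zero hz L]
        simp

set_option linter.unusedSectionVars false
set_option maxHeartbeats 1000000

variable {n : ℕ} {ι : Type*} [Fintype ι] [DecidableEq ι]

lemma trim (v : Fin n → ι → ℝ) (hv1 : ∀ i g, v i g ≤ 1) (i : Fin n) (τ : ℝ) (hτ : 0 ≤ τ)
    (T : Finset ι) :
    ∃ S : Finset ι, S ⊆ T ∧ (∑ g ∈ S, v i g) ≤ τ + 1 ∧ (τ ≤ ∑ g ∈ S, v i g ∨ S = T) := by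
  classical
  induction T using Finset.induction_on with
  | empty => exact ⟨∅, Finset.Subset.refl _, by simp; linarith, Or.inr rfl⟩
  | @insert a T' ha ih =>
    obtain ⟨S, hS1, hS2, hS3⟩ := ih
    rcases hS3 with hτS | hST
    · exact ⟨S, hS1.trans (Finset.subset_insert _ _), hS2, Or.inl hτS⟩
    · subst hST
      by_cases hτT : τ ≤ ∑ g ∈ S, v i g
      · exact ⟨S, hS1.trans (Finset.subset_insert _ _), hS2, Or.inl hτT⟩
      · refine ⟨insert a S, Finset.Subset.refl _, ?_, Or.inr rfl⟩
        rw [Finset.sum_insert ha]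
        push_neg at hτT
        have := hv1 i a
        linarith

lemma itemwise (v : Fin n → ι → ℝ) (Astar : Fin n → Finset ι)
    (hpart : ∀ x : ι, ∃! i, x ∈ Astar i)
    (hopt : ∀ B : Fin n → Finset ι, (∀ x : ι, ∃! i, x ∈ B i) →
      ∑ i, ∑ g ∈ B i, v i g ≤ ∑ i, ∑ g ∈ Astar i, v i g) :
    ∀ (j : Fin n) (g : ι), g ∈ Astar j → ∀ i, v i g ≤ v j g := by
  classical
  intro j g hg i
  by_cases hij : i = j
  · subst hij; exact le_refl _
  · have howner : ∀ k, g ∈ Astar k → k = j := by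
      intro k hk
      obtain ⟨k₀, hk₀, hu⟩ := hpart g
      rw [hu k hk, hu j hg]
    have hgi : g ∉ Astar i := fun hgi => hij (howner i hgi)
    set B : Fin n → Finset ι :=
      Function.update (Function.update Astar j ((Astar j).erase g)) i (insert g (Astar i))
      with hB
    have hBi : B i = insert g (Astar i) := by rw [hB, Function.update_self]
    have hBj : B j = (Astar j).erase g := by
      rw [hB, Function.update_of_ne (Ne.symm hij), Function.update_self]
    have hBk : ∀ k, k ≠ i → k ≠ j → B k = Astar k := by
      intro k hki hkj
      rw [hB, Function.update_of_ne hki, Function.update_of_ne hkj]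
    have hBpart : ∀ x : ι, ∃! k, x ∈ B k := by
      intro x
      by_cases hxg : x = g
      · subst hxg
        refine ⟨i, by show x ∈ B i; rw [hBi]; exact Finset.mem_insert_self _ _, ?_⟩
        intro k hk
        by_cases hki : k = i
        · exact hki
        · exfalso
          by_cases hkj : k = j
          · subst hkj; rw [hBj] at hk; exact (Finset.notMem_erase _ _) hk
          · rw [hBk k hki hkj] at hk
            exact hkj (howner k hk)
      · have hmem : ∀ k, x ∈ B k ↔ x ∈ Astar k := by
          intro k
          by_cases hki : k = i
          · subst hki; rw [hBi, Finset.mem_insert]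
            constructor
            · rintro (h | h)
              · exact absurd h hxg
              · exact h
            · exact Or.inr
          · by_cases hkj : k = j
            · subst hkj; rw [hBj, Finset.mem_erase]
              constructor
              · exact And.right
              · exact fun h => ⟨hxg, h⟩
            · rw [hBk k hki hkj]
        obtain ⟨k₀, hk₀, hu⟩ := hpart x
        exact ⟨k₀, (hmem k₀).2 hk₀, fun y hy => hu y ((hmem y).1 hy)⟩
    have hsum := hopt B hBpart
    have hkey : ∀ k, (∑ x ∈ B k, v k x) = (∑ x ∈ Astar k, v k x)
        + (if k = i then v i g else 0) - (if k = j then v j g else 0) := by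
      intro k
      by_cases hki : k = i
      · subst hki
        rw [hBi, Finset.sum_insert hgi, if_pos rfl, if_neg hij]
        ring
      · by_cases hkj : k = j
        · subst hkj
          rw [hBj, if_neg hki, if_pos rfl]
          have := Finset.sum_erase_add (Astar k) (v k) hg
          linarith
        · rw [hBk k hki hkj, if_neg hki, if_neg hkj]
          ring
    have htot : ∑ k, ∑ x ∈ B k, v k x
        = (∑ k, ∑ x ∈ Astar k, v k x) + v i g - v j g := by
      rw [Finset.sum_congr rfl (fun k _ => hkey k)]
      rw [Finset.sum_sub_distrib, Finset.sum_add_distrib]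
      rw [Finset.sum_ite_eq' Finset.univ i (fun _ => v i g),
        Finset.sum_ite_eq' Finset.univ j (fun _ => v j g)]
      simp
    rw [htot] at hsum
    linarith


end Stmt14


/-- For additive valuations with item values in `[0,1]` and any
`α ∈ (0,1]`, there is an envy-free allocation with transfers `(A,t)` with
`SW(A,t) ≥ α·SW(A*)` and total transfer at most `n(α·max_i v_i(A*_i) + 2)`. -/
theorem stmt14 {n : ℕ} (hn : 0 < n) {ι : Type*} [Fintype ι] [DecidableEq ι]
    (α : ℝ) (hα0 : 0 < α) (hα1 : α ≤ 1)
    (v : Fin n → ι → ℝ) (hv : ∀ i g, 0 ≤ v i g ∧ v i g ≤ 1)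
    (Astar : Fin n → Finset ι)
    (hpart : ∀ x : ι, ∃! i, x ∈ Astar i)
    (hopt : ∀ B : Fin n → Finset ι, (∀ x : ι, ∃! i, x ∈ B i) →
      ∑ i, ∑ g ∈ B i, v i g ≤ ∑ i, ∑ g ∈ Astar i, v i g) :
    ∃ (A : Fin n → Finset ι) (t : Fin n → ℝ),
      (∀ x : ι, ∃! i, x ∈ A i) ∧
      ∑ i, t i = 0 ∧
      (∀ i j, (∑ g ∈ A i, v i g) + t i ≥ (∑ g ∈ A j, v i g) + t j) ∧
      (∑ i, ∑ g ∈ A i, v i g) ≥ α * ∑ i, ∑ g ∈ Astar i, v i g ∧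
      ∑ i, |t i| ≤ (n : ℝ) *
        (α * (Finset.univ.sup' ⟨⟨0, hn⟩, Finset.mem_univ _⟩
          fun i => ∑ g ∈ Astar i, v i g) + 2) := by
  classical
  open Stmt14 in
  set M : ℝ := Finset.univ.sup' ⟨⟨0, hn⟩, Finset.mem_univ _⟩
    (fun i => ∑ g ∈ Astar i, v i g) with hM
  have hMub : ∀ i, (∑ g ∈ Astar i, v i g) ≤ M := fun i =>
    Finset.le_sup' (fun i => ∑ g ∈ Astar i, v i g) (Finset.mem_univ i)
  have hv0 : ∀ i g, 0 ≤ v i g := fun i g => (hv i g).1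
  have hv1 : ∀ i g, v i g ≤ 1 := fun i g => (hv i g).2
  have hsumnn : ∀ (i : Fin n) (T : Finset ι), 0 ≤ ∑ g ∈ T, v i g := fun i T =>
    Finset.sum_nonneg (fun g _ => hv0 i g)
  have hM0 : (0:ℝ) ≤ M := le_trans (hsumnn ⟨0, hn⟩ (Astar ⟨0, hn⟩)) (hMub ⟨0, hn⟩)
  have hτ : (0:ℝ) ≤ α * M := mul_nonneg hα0.le hM0
  have htrim := fun i => Stmt14.trim v hv1 i (α * M) hτ (Astar i)
  choose S hSsub hSle hSge using htrim
  have hitem := Stmt14.itemwise v Astar hpart hopt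
  have hAdis : ∀ i j, i ≠ j → ∀ x, x ∈ Astar i → x ∈ Astar j → False := by
    intro i j hij x hxi hxj
    obtain ⟨k, hk, hu⟩ := hpart x
    exact hij ((hu i hxi).trans (hu j hxj).symm)
  set R : Finset ι := Finset.univ \ Finset.univ.biUnion S with hR
  obtain ⟨P, wit, hPcov, hPdis, hwitR, hcyc, hpath⟩ := Stmt14.pool v hn hv0 R.card R le_rfl
  obtain ⟨d, hd, hdw⟩ :=
    Stmt14.exists_potential (wP v P) (fun i => (wit i).elim 0 (v i)) hcyc hpath
  have hd1 : ∀ i, d i ≤ 1 := by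
    intro i
    refine le_trans (hd i).2 ?_
    cases hwi : wit i with
    | none => norm_num
    | some g => simpa using hv1 i g
  set A : Fin n → Finset ι := fun i => S i ∪ P i with hA
  have hPR : ∀ i x, x ∈ P i → x ∈ R := fun i x hx => (hPcov x).2 ⟨i, hx⟩
  have hSx : ∀ i x, x ∈ S i → x ∈ Finset.univ.biUnion S := fun i x hx =>
    Finset.mem_biUnion.2 ⟨i, Finset.mem_univ i, hx⟩
  have hdisSP : ∀ i j x, x ∈ S i → x ∈ P j → False := by
    intro i j x hxS hxP
    have hmem := hPR j x hxP
    rw [hR, Finset.mem_sdiff] at hmem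
    exact hmem.2 (hSx i x hxS)
  have hexu : ∀ x : ι, ∃! i, x ∈ A i := by
    intro x
    by_cases hx : x ∈ Finset.univ.biUnion S
    · obtain ⟨i, -, hxi⟩ := Finset.mem_biUnion.1 hx
      refine ⟨i, by show x ∈ A i; exact Finset.mem_union_left _ hxi, ?_⟩
      intro k hk
      rcases Finset.mem_union.1 hk with hk' | hk'
      · by_contra hki
        exact hAdis k i hki x (hSsub k hk') (hSsub i hxi)
      · exact (hdisSP i k x hxi hk').elim
    · have hxR : x ∈ R := by rw [hR, Finset.mem_sdiff]; exact ⟨Finset.mem_univ x, hx⟩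
      obtain ⟨i, hxi⟩ := (hPcov x).1 hxR
      refine ⟨i, by show x ∈ A i; exact Finset.mem_union_right _ hxi, ?_⟩
      intro k hk
      rcases Finset.mem_union.1 hk with hk' | hk'
      · exact (hx (hSx k x hk')).elim
      · by_contra hki
        exact hPdis k i hki x hk' hxi
  set x' : Fin n → ℝ := fun i => (∑ g ∈ S i, v i g) + d i with hx'
  set K : ℝ := (∑ j, x' j) / n with hK
  set t : Fin n → ℝ := fun i => K - x' i with ht
  have hsplit : ∀ i j, (∑ g ∈ A j, v i g) = (∑ g ∈ S j, v i g) + (∑ g ∈ P j, v i g) := by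
    intro i j
    rw [hA]
    exact Finset.sum_union (Finset.disjoint_left.2 fun x hx h'x => (hdisSP j j x hx h'x).elim)
  have hncast : (0:ℝ) < (n:ℝ) := Nat.cast_pos.2 hn
  refine ⟨A, t, hexu, ?_, ?_, ?_, ?_⟩
  · rw [Finset.sum_sub_distrib, Finset.sum_const, Finset.card_univ, Fintype.card_fin,
      nsmul_eq_mul, hK]
    rw [mul_div_assoc', mul_div_cancel_left₀ _ hncast.ne', sub_self]
  · intro i j
    have hSij : (∑ g ∈ S j, v i g) ≤ ∑ g ∈ S j, v j g :=
      Finset.sum_le_sum (fun g hg => hitem j g (hSsub j hg) i)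
    have hwij : wP v P i j ≤ d j - d i := by
      by_cases hij : i = j
      · subst hij; simp [wP]
      · exact hdw i j hij
    have hwPd : wP v P i j = (∑ g ∈ P j, v i g) - ∑ g ∈ P i, v i g := rfl
    rw [ge_iff_le, hsplit i i, hsplit i j, ht]
    simp only [hx']
    linarith
  · have hper : ∀ i, α * (∑ g ∈ Astar i, v i g) ≤ ∑ g ∈ A i, v i g := by
      intro i
      have h1 : (∑ g ∈ S i, v i g) ≤ ∑ g ∈ A i, v i g := by
        rw [hsplit i i]
        linarith [hsumnn i (P i)]
      rcases hSge i with h | h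
      · calc α * (∑ g ∈ Astar i, v i g) ≤ α * M := by
              exact mul_le_mul_of_nonneg_left (hMub i) hα0.le
          _ ≤ ∑ g ∈ S i, v i g := h
          _ ≤ _ := h1
      · calc α * (∑ g ∈ Astar i, v i g) ≤ ∑ g ∈ Astar i, v i g :=
              mul_le_of_le_one_left (hsumnn i (Astar i)) hα1
          _ = ∑ g ∈ S i, v i g := by rw [h]
          _ ≤ _ := h1
    rw [ge_iff_le, Finset.mul_sum]
    exact Finset.sum_le_sum (fun i _ => hper i)
  · have hx'0 : ∀ i, 0 ≤ x' i := fun i => add_nonneg (hsumnn i (S i)) (hd i).1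
    have hx'ub : ∀ i, x' i ≤ α * M + 2 := by
      intro i
      have h1 := hSle i
      have h2 := hd1 i
      rw [hx']
      simp only []
      linarith
    have hK0 : 0 ≤ K := by
      rw [hK]
      exact div_nonneg (Finset.sum_nonneg fun i _ => hx'0 i) hncast.le
    have hKub : K ≤ α * M + 2 := by
      rw [hK, div_le_iff₀ hncast]
      calc ∑ j, x' j ≤ ∑ _j : Fin n, (α * M + 2) := Finset.sum_le_sum (fun i _ => hx'ub i)
        _ = (α * M + 2) * n := by
            rw [Finset.sum_const, Finset.card_univ, Fintype.card_fin, nsmul_eq_mul]; ring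
    have habs : ∀ i, |t i| ≤ α * M + 2 := by
      intro i
      rw [ht, abs_le]
      constructor
      · simp only []
        linarith [hx'ub i]
      · simp only []
        linarith [hx'0 i]
    calc ∑ i, |t i| ≤ ∑ _i : Fin n, (α * M + 2) := Finset.sum_le_sum (fun i _ => habs i)
      _ = (n:ℝ) * (α * M + 2) := by
          rw [Finset.sum_const, Finset.card_univ, Fintype.card_fin, nsmul_eq_mul]
end

section
/- Let A* be a welfare-maximizing allocation under additive valuations, and for each agent i let X_i ⊆ A*_i be a minimal subset with v_i(X_i) ≥ α·v_i(A*_i). Then the partial allocation X = (X_1,...,X_n) is envy-freeable, and the maximum weight of any directed path in its envy-graph is at most α·max_i v_i(A*_i) + 1. -/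
lemma pathWeight_le {β : Type*} (w : β → β → ℝ) (f : β → ℝ)
    (hw : ∀ i j, w i j ≤ f j - f i) :
    ∀ (p : List β) (a : β), pathWeight w (a :: p) ≤
      f ((a :: p).getLast (List.cons_ne_nil _ _)) - f a := by
  intro p
  induction p with
  | nil => intro a; simp [pathWeight]
  | cons b l ih =>
    intro a
    have h1 : pathWeight w (a :: b :: l) = w a b + pathWeight w (b :: l) := rfl
    have h2 := ih b
    have h3 : (a :: b :: l).getLast (List.cons_ne_nil _ _) =
        (b :: l).getLast (List.cons_ne_nil _ _) := List.getLast_cons _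
    rw [h1, h3]
    have := hw a b
    linarith

/-- For additive valuations with item values in `[0,1]`, if `A*` is
welfare-maximizing and each `X_i ⊆ A*_i` is inclusion-minimal with
`v_i(X_i) ≥ α·v_i(A*_i)`, then `X` is envy-freeable and every directed simple path in
its envy-graph has weight at most `α·max_i v_i(A*_i) + 1`. -/
theorem stmt15 {n : ℕ} (hn : 0 < n) {ι : Type*} [Fintype ι] [DecidableEq ι]
    (α : ℝ) (hα0 : 0 < α) (hα1 : α ≤ 1)
    (v : Fin n → ι → ℝ) (hv : ∀ i g, 0 ≤ v i g ∧ v i g ≤ 1)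
    (Astar : Fin n → Finset ι)
    (hpart : ∀ x : ι, ∃! i, x ∈ Astar i)
    (hopt : ∀ B : Fin n → Finset ι, (∀ x : ι, ∃! i, x ∈ B i) →
      ∑ i, ∑ g ∈ B i, v i g ≤ ∑ i, ∑ g ∈ Astar i, v i g)
    (X : Fin n → Finset ι)
    (hXsub : ∀ i, X i ⊆ Astar i)
    (hXval : ∀ i, (∑ g ∈ X i, v i g) ≥ α * ∑ g ∈ Astar i, v i g)
    (hXmin : ∀ i, ∀ Y ⊆ X i, (∑ g ∈ Y, v i g) ≥ α * (∑ g ∈ Astar i, v i g) → Y = X i) :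
    (∀ π : Equiv.Perm (Fin n),
      ∑ i, ∑ g ∈ X (π i), v i g ≤ ∑ i, ∑ g ∈ X i, v i g) ∧
    (∀ p : List (Fin n), p.Nodup →
      pathWeight (fun i j => (∑ g ∈ X j, v i g) - ∑ g ∈ X i, v i g) p ≤
        α * (Finset.univ.sup' ⟨⟨0, hn⟩, Finset.mem_univ _⟩
          fun i => ∑ g ∈ Astar i, v i g) + 1) := by
  set M := Finset.univ.sup' ⟨⟨0, hn⟩, Finset.mem_univ _⟩
      (fun i => ∑ g ∈ Astar i, v i g) with hM
  have hA0 : ∀ i, 0 ≤ ∑ g ∈ Astar i, v i g :=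
    fun i => Finset.sum_nonneg fun g _ => (hv i g).1
  have hMge : ∀ i, ∑ g ∈ Astar i, v i g ≤ M := by
    intro i
    rw [hM]
    exact Finset.le_sup' (fun i => ∑ g ∈ Astar i, v i g) (Finset.mem_univ i)
  have hM0 : 0 ≤ M := le_trans (hA0 ⟨0, hn⟩) (hMge _)
  -- each item goes to a highest-valuing agent
  have hdom : ∀ i j g, g ∈ Astar i → v j g ≤ v i g := by
    intro i j g hg
    rcases eq_or_ne j i with rfl | hij
    · exact le_refl _
    · -- swap item g from i to j
      set B : Fin n → Finset ι := fun k =>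
        if k = i then (Astar i).erase g else if k = j then insert g (Astar j) else Astar k
        with hB
      have hgj : g ∉ Astar j := fun h => hij ((hpart g).unique h hg)
      have hBpart : ∀ x : ι, ∃! k, x ∈ B k := by
        intro x
        rcases eq_or_ne x g with rfl | hx
        · refine ⟨j, ?_, ?_⟩
          · simp [hB, hij, Finset.mem_insert]
          · intro k hk
            by_contra hkj
            rcases eq_or_ne k i with rfl | hki
            · simp [hB] at hk
            · simp [hB, hki, hkj] at hk
              exact hki ((hpart x).unique hk hg)
        · obtain ⟨m, hm, hmu⟩ := hpart x
          refine ⟨m, ?_, ?_⟩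
          · rcases eq_or_ne m i with rfl | hmi
            · simp [hB, Finset.mem_erase, hx, hm]
            · rcases eq_or_ne m j with rfl | hmj
              · simp [hB, hmi, Finset.mem_insert, hm]
              · simp [hB, hmi, hmj, hm]
          · intro k hk
            rcases eq_or_ne k i with rfl | hki
            · simp [hB, Finset.mem_erase] at hk
              exact hmu _ hk.2
            · rcases eq_or_ne k j with rfl | hkj
              · simp [hB, hki, Finset.mem_insert, hx] at hk
                exact hmu _ hk
              · simp [hB, hki, hkj] at hk
                exact hmu _ hk
      have hsum : ∑ k, ∑ x ∈ B k, v k x =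
          (∑ k, ∑ x ∈ Astar k, v k x) + (v j g - v i g) := by
        have hcong : ∀ k, ∑ x ∈ B k, v k x = (∑ x ∈ Astar k, v k x) +
            ((if k = i then -(v i g) else 0) + (if k = j then v j g else 0)) := by
          intro k
          rcases eq_or_ne k i with rfl | hki
          · have : ∑ x ∈ (Astar k).erase g, v k x = (∑ x ∈ Astar k, v k x) - v k g :=
              Finset.sum_erase_eq_sub hg
            simp [hB, hij.symm, this]
            ring
          · rcases eq_or_ne k j with rfl | hkj
            · simp [hB, hki, Finset.sum_insert hgj]
              ring
            · simp [hB, hki, hkj]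
        rw [Finset.sum_congr rfl fun k _ => hcong k]
        rw [Finset.sum_add_distrib, Finset.sum_add_distrib]
        simp [Finset.sum_ite_eq']
        ring
      have := hopt B hBpart
      rw [hsum] at this
      linarith
  -- value of X j to i is at most its value to j
  have hXdom : ∀ i j, (∑ g ∈ X j, v i g) ≤ ∑ g ∈ X j, v j g := by
    intro i j
    exact Finset.sum_le_sum fun g hg => hdom j i g (hXsub j hg)
  set f : Fin n → ℝ := fun i => ∑ g ∈ X i, v i g with hf
  have hf0 : ∀ i, 0 ≤ f i := fun i => Finset.sum_nonneg fun g _ => (hv i g).1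
  have hfub : ∀ i, f i ≤ α * M + 1 := by
    intro i
    rcases Finset.eq_empty_or_nonempty (X i) with h | ⟨g, hg⟩
    · have : f i = 0 := by simp [hf, h]
      rw [this]
      nlinarith
    · have hsub : (X i).erase g ⊆ X i := Finset.erase_subset _ _
      have hne : (X i).erase g ≠ X i := by
        intro h
        have := h ▸ Finset.notMem_erase g (X i)
        exact this hg
      have hlt : ∑ x ∈ (X i).erase g, v i x < α * ∑ x ∈ Astar i, v i x := by
        by_contra h
        exact hne (hXmin i _ hsub (not_lt.1 h))
      have heq : ∑ x ∈ (X i).erase g, v i x = f i - v i g :=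
        Finset.sum_erase_eq_sub hg
      have h1 : v i g ≤ 1 := (hv i g).2
      have h2 : α * ∑ x ∈ Astar i, v i x ≤ α * M :=
        mul_le_mul_of_nonneg_left (hMge i) hα0.le
      rw [heq] at hlt
      linarith
  constructor
  · intro π
    calc ∑ i, ∑ g ∈ X (π i), v i g ≤ ∑ i, ∑ g ∈ X (π i), v (π i) g :=
          Finset.sum_le_sum fun i _ => hXdom i (π i)
      _ = ∑ i, ∑ g ∈ X i, v i g := Equiv.sum_comp π (fun j => ∑ g ∈ X j, v j g)
  · intro p _
    match p with
    | [] => simpa [pathWeight] using by nlinarith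
    | a :: l =>
      have hw : ∀ i j, (∑ g ∈ X j, v i g) - ∑ g ∈ X i, v i g ≤ f j - f i := by
        intro i j
        have := hXdom i j
        simp only [hf]
        linarith
      have := pathWeight_le _ f hw l a
      have h1 := hfub ((a :: l).getLast (List.cons_ne_nil _ _))
      have h2 := hf0 a
      linarith
end

section
/- For general monotone valuations (items with marginal value at most 1) and any α ∈ (0, 1/3], there exists an envy-free allocation with transfers (A,t) such that SW(A,t) ≥ α·SW(A*) and ∑_i |t_i| ≤ 2n²(3α·max_i v_i(A*_i) + 2). -/
namespace Stmt16Aux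

variable {n : ℕ}

/-- Path weight of a list of agents under edge weights `w`. -/
def pw (w : Fin n → Fin n → ℝ) : List (Fin n) → ℝ
  | [] => 0
  | [_] => 0
  | a :: b :: t => w a b + pw w (b :: t)

@[simp] lemma pw_nil (w : Fin n → Fin n → ℝ) : pw w [] = 0 := rfl
@[simp] lemma pw_single (w : Fin n → Fin n → ℝ) (a : Fin n) : pw w [a] = 0 := rfl
@[simp] lemma pw_cons_cons (w : Fin n → Fin n → ℝ) (a b : Fin n) (t : List (Fin n)) :
    pw w (a :: b :: t) = w a b + pw w (b :: t) := rfl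

lemma pw_concat (w : Fin n → Fin n → ℝ) :
    ∀ (l : List (Fin n)) (hl : l ≠ []) (x : Fin n),
      pw w (l ++ [x]) = pw w l + w (l.getLast hl) x
  | [], hl, _ => absurd rfl hl
  | [a], _, x => by simp
  | a :: b :: t, _, x => by
    have := pw_concat w (b :: t) (List.cons_ne_nil _ _) x
    simp only [List.cons_append, pw_cons_cons, List.getLast_cons (List.cons_ne_nil b t)] at *
    rw [this]; ring

lemma pw_splice (w : Fin n → Fin n → ℝ) :
    ∀ (p : List (Fin n)) (hp : p ≠ []) (i : Fin n) (q : List (Fin n)),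
      pw w (p ++ i :: q) = pw w (p ++ [i]) + pw w (i :: q)
  | [], hp, _, _ => absurd rfl hp
  | [a], _, i, q => by simp
  | a :: b :: t, _, i, q => by
    have := pw_splice w (b :: t) (List.cons_ne_nil _ _) i q
    simp only [List.cons_append, pw_cons_cons] at *
    rw [this]; ring

/-- Cycle sum identity. -/
lemma pw_cycle (w : Fin n → Fin n → ℝ) :
    ∀ (t : List (Fin n)) (a : Fin n), (a :: t).Nodup →
      pw w ((a :: t) ++ [a]) = ∑ x ∈ (a :: t).toFinset, w x ((a :: t).formPerm x)
  | [], a, _ => by simp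
  | b :: t2, a, hnd => by
    classical
    set l2 : List (Fin n) := b :: t2 with hl2
    have hl2ne : l2 ≠ [] := List.cons_ne_nil _ _
    have hndl2 : l2.Nodup := hnd.of_cons
    have hanotin : a ∉ l2 := by
      intro h; exact (List.nodup_cons.mp hnd).1 h
    have IH := pw_cycle w t2 b hndl2
    set last := l2.getLast hl2ne with hlast
    have hlastmem : last ∈ l2 := List.getLast_mem hl2ne
    -- formPerm facts
    have hFa : (a :: l2).formPerm a = b := List.formPerm_apply_head a b t2 hnd
    have hflast : l2.formPerm last = b := by
      have := List.formPerm_apply_getLast b t2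
      simpa [hl2, hlast] using this
    have hFlast : (a :: l2).formPerm last = a := by
      have := List.formPerm_apply_getLast a l2
      have hlasteq : (a :: l2).getLast (List.cons_ne_nil _ _) = last := by
        rw [hlast, List.getLast_cons hl2ne]
      rwa [hlasteq] at this
    have hFz : ∀ z ∈ l2, z ≠ last → (a :: l2).formPerm z = l2.formPerm z := by
      intro z hz hzne
      have hfz_mem : l2.formPerm z ∈ l2 := List.formPerm_apply_mem_of_mem hz
      have hfz_ne_b : l2.formPerm z ≠ b := by
        intro h
        exact hzne ((l2.formPerm).injective (h.trans hflast.symm))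
      have hfz_ne_a : l2.formPerm z ≠ a := fun h => hanotin (h ▸ hfz_mem)
      rw [hl2, List.formPerm_cons_cons, Equiv.Perm.mul_apply,
        Equiv.swap_apply_of_ne_of_ne hfz_ne_a hfz_ne_b]
    -- sums
    have htoF : (a :: l2).toFinset = insert a l2.toFinset := by simp
    have hainot : a ∉ l2.toFinset := by simpa using hanotin
    rw [htoF, Finset.sum_insert hainot, hFa]
    have hsplit2 : ∑ x ∈ l2.toFinset, w x ((a :: l2).formPerm x)
        = ∑ x ∈ l2.toFinset.erase last, w x (l2.formPerm x) + w last a := by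
      rw [← Finset.add_sum_erase _ _ (List.mem_toFinset.mpr hlastmem), hFlast]
      rw [add_comm]
      congr 1
      apply Finset.sum_congr rfl
      intro z hz
      have hzl := Finset.mem_of_mem_erase hz
      have hzne := Finset.ne_of_mem_erase hz
      rw [hFz z (List.mem_toFinset.mp hzl) hzne]
    have hsplitIH : ∑ x ∈ l2.toFinset, w x (l2.formPerm x)
        = ∑ x ∈ l2.toFinset.erase last, w x (l2.formPerm x) + w last b := by
      rw [← Finset.add_sum_erase _ _ (List.mem_toFinset.mpr hlastmem), hflast, add_comm]
    have hIH' : pw w (l2 ++ [b]) = ∑ x ∈ l2.toFinset, w x (l2.formPerm x) := IH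
    have hconc_b : pw w (l2 ++ [b]) = pw w l2 + w last b := pw_concat w l2 hl2ne b
    have herase : ∑ x ∈ l2.toFinset.erase last, w x (l2.formPerm x) = pw w l2 := by
      have h1 : pw w l2 + w last b
          = ∑ x ∈ l2.toFinset.erase last, w x (l2.formPerm x) + w last b := by
        rw [← hconc_b, hIH', hsplitIH]
      linarith
    have hLHS : pw w ((a :: l2) ++ [a]) = w a b + (pw w l2 + w last a) := by
      have : (a :: l2) ++ [a] = a :: (l2 ++ [a]) := rfl
      rw [this]
      have h2 : pw w (a :: (l2 ++ [a])) = w a b + pw w (l2 ++ [a]) := by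
        simp [hl2]
      rw [h2, pw_concat w l2 hl2ne a]
    rw [hLHS, hsplit2, herase]


lemma pw_le_sums (w γ δ : Fin n → Fin n → ℝ → ℝ) : True := trivial

lemma pw_le_nodup (w : Fin n → Fin n → ℝ) (γ δ : Fin n → ℝ)
    (hγ : ∀ j, 0 ≤ γ j) (hδ : ∀ i, 0 ≤ δ i)
    (hedge : ∀ a b, w a b ≤ γ b + δ a) :
    ∀ l : List (Fin n), l.Nodup →
      pw w l ≤ ∑ x ∈ l.tail.toFinset, γ x + ∑ x ∈ l.toFinset, δ x
  | [], _ => by simp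
  | [a], _ => by
    simpa using hδ a
  | a :: b :: t, hnd => by
    classical
    have IH := pw_le_nodup w γ δ hγ hδ hedge (b :: t) hnd.of_cons
    have hbt : b ∉ t := (List.nodup_cons.mp hnd.of_cons).1
    have ha : a ∉ (b :: t) := (List.nodup_cons.mp hnd).1
    have h1 : ∑ x ∈ (b :: t).toFinset, γ x = γ b + ∑ x ∈ t.toFinset, γ x := by
      rw [List.toFinset_cons, Finset.sum_insert (by simpa using hbt)]
    have h2 : ∑ x ∈ (a :: b :: t).toFinset, δ x = δ a + ∑ x ∈ (b :: t).toFinset, δ x := by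
      rw [List.toFinset_cons (a := a), Finset.sum_insert (by simpa using ha)]
    have h3 := hedge a b
    simp only [pw_cons_cons, List.tail_cons] at *
    linarith

lemma exists_subsidy (hn : 0 < n) (u : Fin n → Fin n → ℝ)
    (h0 : ∀ i j, 0 ≤ u i j)
    (hperm : ∀ π : Equiv.Perm (Fin n), ∑ i, u i (π i) ≤ ∑ i, u i i)
    (γ δ : Fin n → ℝ) (hγ : ∀ j, 0 ≤ γ j) (hδ : ∀ i, 0 ≤ δ i)
    (hedge : ∀ i j, u i j - u i i ≤ γ j + δ i) :
    ∃ s : Fin n → ℝ, (∀ i, 0 ≤ s i) ∧ (∀ i j, u i j - u i i ≤ s i - s j) ∧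
      (∀ i, s i ≤ Finset.univ.sup' ⟨⟨0, hn⟩, Finset.mem_univ _⟩ (fun k => u k k)) ∧
      (∀ i, s i ≤ (∑ j, γ j) + ∑ j, δ j) := by
  classical
  set w : Fin n → Fin n → ℝ := fun i j => u i j - u i i with hw
  have hwdiag : ∀ i, w i i = 0 := fun i => by simp [hw]
  -- cycles are nonpositive
  have hcyc : ∀ (t : List (Fin n)) (a : Fin n), (a :: t).Nodup →
      pw w ((a :: t) ++ [a]) ≤ 0 := by
    intro t a hnd
    rw [pw_cycle w t a hnd]
    have hsub : ∑ x ∈ (a :: t).toFinset, w x ((a :: t).formPerm x)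
        = ∑ x ∈ Finset.univ, w x ((a :: t).formPerm x) := by
      refine Finset.sum_subset (f := fun x => w x ((a :: t).formPerm x))
          (Finset.subset_univ ((a :: t).toFinset)) ?_
      intro x _ hx
      have hx' : x ∉ (a :: t) := fun h => hx (List.mem_toFinset.mpr h)
      rw [List.formPerm_apply_of_notMem hx']
      exact hwdiag x
    rw [hsub]
    have := hperm ((a :: t).formPerm)
    have hsplit : ∑ x, w x ((a :: t).formPerm x)
        = (∑ x, u x ((a :: t).formPerm x)) - ∑ x, u x x := by
      simp [hw, Finset.sum_sub_distrib]
    rw [hsplit]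
    linarith
  -- the set of simple paths starting at i
  set S : Fin n → Finset {l : List (Fin n) // l.Nodup} :=
    fun i => Finset.univ.filter (fun l => l.1.head? = some i) with hS
  have hSmem : ∀ i (l : {l : List (Fin n) // l.Nodup}), l ∈ S i ↔ l.1.head? = some i := by
    intro i l; simp [hS]
  have hSne : ∀ i, (S i).Nonempty := by
    intro i
    exact ⟨⟨[i], List.nodup_singleton i⟩, by simp [hS]⟩
  set s : Fin n → ℝ := fun i => (S i).sup' (hSne i) (fun l => pw w l.1) with hsdef
  -- basic shape of members of S i
  have hshape : ∀ i (l : {l : List (Fin n) // l.Nodup}), l ∈ S i →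
      ∃ t : List (Fin n), l.1 = i :: t := by
    intro i l hl
    rw [hSmem] at hl
    cases hval : l.1 with
    | nil => rw [hval] at hl; simp at hl
    | cons a t =>
      rw [hval] at hl
      simp only [List.head?_cons, Option.some_inj] at hl
      exact ⟨t, by rw [hl]⟩
  have hs0 : ∀ i, 0 ≤ s i := by
    intro i
    have := Finset.le_sup' (f := fun l : {l : List (Fin n) // l.Nodup} => pw w l.1)
      (b := ⟨[i], List.nodup_singleton i⟩) ((hSmem i _).mpr (by simp))
    exact le_trans (le_of_eq (pw_single w i).symm) this
  have hEF : ∀ i j, w i j + s j ≤ s i := by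
    intro i j
    rcases eq_or_ne i j with rfl | hij
    · rw [hwdiag]; linarith
    obtain ⟨lj, hmemj, heqj⟩ := Finset.exists_mem_eq_sup' (hSne j)
      (fun l : {l : List (Fin n) // l.Nodup} => pw w l.1)
    replace heqj : s j = pw w lj.1 := heqj
    obtain ⟨tj, htj⟩ := hshape j lj hmemj
    by_cases hi : i ∈ lj.1
    · -- splice
      obtain ⟨p, q, hpq⟩ := List.append_of_mem hi
      have hndl := lj.2
      rw [hpq] at hndl
      obtain ⟨hnp, hniq, hdisj⟩ := List.nodup_append.mp hndl
      have hpne : p ≠ [] := by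
        intro h
        rw [h] at hpq
        rw [hpq] at htj
        simp at htj
        exact hij htj.1
      have hip : i ∉ p := fun h => hdisj i h i List.mem_cons_self rfl
      -- p starts with j
      obtain ⟨p', hp'⟩ : ∃ p', p = j :: p' := by
        cases hp : p with
        | nil => exact absurd hp hpne
        | cons a p' =>
          rw [hp] at hpq
          rw [hpq] at htj
          simp only [List.cons_append] at htj
          exact ⟨p', by rw [List.cons.injEq] at htj; rw [htj.1]⟩
      have hndip : (i :: p).Nodup := List.nodup_cons.mpr ⟨hip, hnp⟩
      have hcyc1 : pw w ((i :: p) ++ [i]) ≤ 0 := hcyc p i hndip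
      have hpwip : pw w ((i :: p) ++ [i]) = w i j + pw w (p ++ [i]) := by
        rw [hp']
        simp
      have hsplice : pw w lj.1 = pw w (p ++ [i]) + pw w (i :: q) := by
        rw [hpq]; exact pw_splice w p hpne i q
      have hiq : pw w (i :: q) ≤ s i := by
        have hm : (⟨i :: q, hniq⟩ : {l : List (Fin n) // l.Nodup}) ∈ S i :=
          (hSmem i _).mpr (by simp)
        exact Finset.le_sup' (f := fun l : {l : List (Fin n) // l.Nodup} => pw w l.1) hm
      rw [heqj, hsplice]
      rw [hpwip] at hcyc1
      linarith
    · have hnd' : (i :: lj.1).Nodup := List.nodup_cons.mpr ⟨hi, lj.2⟩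
      have hm : (⟨i :: lj.1, hnd'⟩ : {l : List (Fin n) // l.Nodup}) ∈ S i :=
        (hSmem i _).mpr (by simp)
      have hle := Finset.le_sup' (f := fun l : {l : List (Fin n) // l.Nodup} => pw w l.1) hm
      have hpweq : pw w (i :: lj.1) = w i j + pw w lj.1 := by
        rw [htj]; simp
      rw [hpweq] at hle
      rw [heqj]
      linarith
  -- diagonal bound
  have hdiag : ∀ i, s i ≤ Finset.univ.sup' ⟨⟨0, hn⟩, Finset.mem_univ _⟩ (fun k => u k k) := by
    intro i
    obtain ⟨li, hmemi, heqi⟩ := Finset.exists_mem_eq_sup' (hSne i)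
      (fun l : {l : List (Fin n) // l.Nodup} => pw w l.1)
    replace heqi : s i = pw w li.1 := heqi
    obtain ⟨t, ht⟩ := hshape i li hmemi
    have hlne : li.1 ≠ [] := by rw [ht]; exact List.cons_ne_nil _ _
    have hnd : (i :: t).Nodup := by rw [← ht]; exact li.2
    have hcyc1 : pw w ((i :: t) ++ [i]) ≤ 0 := hcyc t i hnd
    have hconc : pw w ((i :: t) ++ [i])
        = pw w (i :: t) + w ((i :: t).getLast (List.cons_ne_nil _ _)) i :=
      pw_concat w (i :: t) (List.cons_ne_nil _ _) i
    set k := (i :: t).getLast (List.cons_ne_nil _ _) with hk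
    have hwk : w k i = u k i - u k k := rfl
    have hle1 : pw w (i :: t) ≤ u k k - u k i := by
      rw [hconc, hwk] at hcyc1; linarith
    have hle2 : u k k ≤ Finset.univ.sup' ⟨⟨0, hn⟩, Finset.mem_univ _⟩ (fun k => u k k) :=
      Finset.le_sup' (f := fun k => u k k) (Finset.mem_univ k)
    have := h0 k i
    rw [heqi, ht]
    linarith
  -- edge-sum bound
  have hsumb : ∀ i, s i ≤ (∑ j, γ j) + ∑ j, δ j := by
    intro i
    obtain ⟨li, hmemi, heqi⟩ := Finset.exists_mem_eq_sup' (hSne i)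
      (fun l : {l : List (Fin n) // l.Nodup} => pw w l.1)
    replace heqi : s i = pw w li.1 := heqi
    have h1 := pw_le_nodup w γ δ hγ hδ (fun a b => hedge a b) li.1 li.2
    have h2 : ∑ x ∈ li.1.tail.toFinset, γ x ≤ ∑ j, γ j := by
      refine Finset.sum_le_sum_of_subset_of_nonneg (Finset.subset_univ _) ?_
      intro j _ _; exact hγ j
    have h3 : ∑ x ∈ li.1.toFinset, δ x ≤ ∑ j, δ j := by
      refine Finset.sum_le_sum_of_subset_of_nonneg (Finset.subset_univ _) ?_
      intro j _ _; exact hδ j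
    rw [heqi]
    linarith
  exact ⟨s, hs0, fun i j => by have := hEF i j; simp only [hw] at this ⊢; linarith,
    hdiag, hsumb⟩

section Alloc

variable {ι : Type*} [Fintype ι] [DecidableEq ι] (v : Fin n → Finset ι → ℝ)

lemma trunc (hv0 : ∀ i, v i ∅ = 0)
    (hmarg : ∀ i (S : Finset ι) (g : ι), v i (insert g S) - v i S ≤ 1)
    (θ : ℝ) (hθ : 0 ≤ θ) :
    ∀ S : Finset ι, (∃ i, θ ≤ v i S) →
      ∃ T, T ⊆ S ∧ (∃ i₀, θ ≤ v i₀ T) ∧ ∀ i, v i T ≤ θ + 1 := by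
  intro S
  induction S using Finset.strongInductionOn with
  | _ S IH =>
  intro hex
  by_cases hcap : ∀ i, v i S ≤ θ + 1
  · exact ⟨S, Finset.Subset.refl S, hex, hcap⟩
  · push_neg at hcap
    obtain ⟨k, hk⟩ := hcap
    have hSne : S ≠ ∅ := by
      intro h; rw [h, hv0 k] at hk; linarith
    obtain ⟨g, hg⟩ := Finset.nonempty_iff_ne_empty.mpr hSne
    have herase : S.erase g ⊂ S := Finset.erase_ssubset hg
    have hmarg' := hmarg k (S.erase g) g
    rw [Finset.insert_erase hg] at hmarg'
    have hnew : θ ≤ v k (S.erase g) := by linarith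
    obtain ⟨T, hTsub, hTex, hTcap⟩ := IH (S.erase g) herase ⟨k, hnew⟩
    exact ⟨T, hTsub.trans (Finset.erase_subset g S), hTex, hTcap⟩


lemma exists_improving_rotation (hn : 0 < n) (A : Fin n → Finset ι)
    (hnosrc : ∀ σ : Fin n, ∃ i, v i (A i) < v i (A σ)) :
    ∃ ρ₀ : Equiv.Perm (Fin n),
      (∀ i, v i (A i) ≤ v i (A (ρ₀ i))) ∧ (∑ i, v i (A i) < ∑ i, v i (A (ρ₀ i))) := by
  classical
  choose f hf using hnosrc
  set x₀ : Fin n := ⟨0, hn⟩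
  obtain ⟨a, b, hab, heq⟩ := Fintype.exists_ne_map_eq_of_card_lt
    (fun i : Fin (n+1) => f^[i.1] x₀) (by simp)
  obtain ⟨a', b', hlt, heq'⟩ : ∃ a' b' : ℕ, a' < b' ∧ f^[a'] x₀ = f^[b'] x₀ := by
    rcases lt_or_gt_of_ne (fun h : a.1 = b.1 => hab (Fin.ext h)) with h | h
    · exact ⟨a.1, b.1, h, heq⟩
    · exact ⟨b.1, a.1, h, heq.symm⟩
  obtain ⟨y, hyper⟩ : ∃ y : Fin n, ∃ q, 0 < q ∧ f^[q] y = y := by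
    refine ⟨f^[a'] x₀, b' - a', by omega, ?_⟩
    rw [← Function.iterate_add_apply, Nat.sub_add_cancel (le_of_lt hlt)]
    exact heq'.symm
  set P := Nat.find hyper with hPdef
  obtain ⟨hP0, hPy⟩ := Nat.find_spec hyper
  set l : List (Fin n) := (List.range P).map (fun k => f^[k] y) with hl
  have hiter_inj : ∀ k ∈ List.range P, ∀ k' ∈ List.range P,
      f^[k] y = f^[k'] y → k = k' := by
    have key : ∀ c d : ℕ, c < d → d < P → f^[c] y = f^[d] y → False := by
      intro c d hcd hdP hcdEq
      have h2 : f^[P - d] (f^[c] y) = f^[P - d] (f^[d] y) := by rw [hcdEq]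
      rw [← Function.iterate_add_apply, ← Function.iterate_add_apply,
        Nat.sub_add_cancel (le_of_lt hdP), hPy] at h2
      have := Nat.find_min hyper (show P - d + c < P by omega)
      exact this ⟨by omega, h2⟩
    intro k hk k' hk' hkk'
    simp only [List.mem_range] at hk hk'
    by_contra hne
    rcases Nat.lt_or_ge k k' with h | h
    · exact key k k' h hk' hkk'
    · exact key k' k (by omega) hk hkk'.symm
  have hlnd : l.Nodup := List.Nodup.map_on hiter_inj (List.nodup_range (n := P))
  have hlen : l.length = P := by simp [hl]
  have hkey1 : ∀ k, k < P → l.formPerm (f^[k] y) = f^[k+1] y := by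
    intro k hk
    have hklen : k < l.length := by omega
    have h1 := List.formPerm_apply_getElem l hlnd k hklen
    have hgk : l[k]'hklen = f^[k] y := by simp [hl]
    have hmod : (k + 1) % l.length < l.length := Nat.mod_lt _ (by omega)
    have hgk1 : l[(k+1) % l.length]'hmod = f^[(k+1) % l.length] y := by simp [hl]
    rw [hgk, hgk1] at h1
    rw [h1]
    rcases Nat.lt_or_ge (k+1) P with h | h
    · rw [hlen, Nat.mod_eq_of_lt h]
    · have hkP : k + 1 = P := by omega
      rw [hlen, hkP, Nat.mod_self]
      simp only [Function.iterate_zero, id_eq]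
      exact hPy.symm
  have hkey2 : ∀ z ∈ l, l.formPerm z = f z := by
    intro z hz
    rw [hl, List.mem_map] at hz
    obtain ⟨k, hk, rfl⟩ := hz
    rw [List.mem_range] at hk
    show l.formPerm (f^[k] y) = f (f^[k] y)
    rw [hkey1 k hk, Function.iterate_succ_apply']
  set π := l.formPerm with hπ
  have hmain : ∀ i, i ∈ l → v i (A i) < v i (A (π⁻¹ i)) := by
    intro i hi
    have hz : π⁻¹ i ∈ l := by
      by_contra hno
      have h1 : π (π⁻¹ i) = π⁻¹ i := List.formPerm_apply_of_notMem hno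
      rw [show π (π⁻¹ i) = i from π.apply_symm_apply i] at h1
      rw [h1] at hi
      exact hno hi
    have hfz : f (π⁻¹ i) = i := by
      rw [← hkey2 _ hz]
      exact π.apply_symm_apply i
    have h2 := hf (π⁻¹ i)
    rw [hfz] at h2
    exact h2
  have hmono : ∀ i, v i (A i) ≤ v i (A (π⁻¹ i)) := by
    intro i
    by_cases hi : i ∈ l
    · exact le_of_lt (hmain i hi)
    · have h1 : π i = i := List.formPerm_apply_of_notMem hi
      have h2 : π⁻¹ i = i := by
        conv_lhs => rw [← h1]
        exact π.symm_apply_apply i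
      rw [h2]
  have hymem : y ∈ l := by
    rw [hl, List.mem_map]
    exact ⟨0, by rw [List.mem_range]; exact hP0, rfl⟩
  refine ⟨π⁻¹, hmono, ?_⟩
  exact Finset.sum_lt_sum (fun i _ => hmono i) ⟨y, Finset.mem_univ y, hmain y hymem⟩

lemma decycle (hn : 0 < n) :
    ∀ A : Fin n → Finset ι, ∃ ρ : Equiv.Perm (Fin n),
      (∀ i, v i (A i) ≤ v i (A (ρ i))) ∧ ∃ σ, ∀ i, v i (A (ρ σ)) ≤ v i (A (ρ i)) := by
  classical
  set SW : (Fin n → Finset ι) → ℝ := fun A => ∑ i, v i (A i) with hSW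
  set μ : (Fin n → Finset ι) → ℕ :=
    fun A => (Finset.univ.filter (fun B : Fin n → Finset ι => SW A < SW B)).card with hμ
  suffices h : ∀ (k : ℕ) (A : Fin n → Finset ι), μ A ≤ k →
      ∃ ρ : Equiv.Perm (Fin n),
        (∀ i, v i (A i) ≤ v i (A (ρ i))) ∧ ∃ σ, ∀ i, v i (A (ρ σ)) ≤ v i (A (ρ i)) by
    intro A; exact h (μ A) A le_rfl
  intro k
  induction k with
  | zero =>
    intro A hμA
    by_cases hsrc : ∃ σ, ∀ i, v i (A σ) ≤ v i (A i)
    · obtain ⟨σ, hσ⟩ := hsrc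
      exact ⟨1, fun i => le_refl _, σ, by simpa using hσ⟩
    · exfalso
      push_neg at hsrc
      obtain ⟨ρ₀, hρ₀, hstrict⟩ := exists_improving_rotation v hn A hsrc
      have hmem : (fun i => A (ρ₀ i)) ∈
          Finset.univ.filter (fun B : Fin n → Finset ι => SW A < SW B) := by
        simp only [Finset.mem_filter, Finset.mem_univ, true_and]
        exact hstrict
      have : 0 < μ A := by
        rw [hμ]
        exact Finset.card_pos.mpr ⟨_, hmem⟩
      omega
  | succ k IHk =>
    intro A hμA
    by_cases hsrc : ∃ σ, ∀ i, v i (A σ) ≤ v i (A i)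
    · obtain ⟨σ, hσ⟩ := hsrc
      exact ⟨1, fun i => le_refl _, σ, by simpa using hσ⟩
    · push_neg at hsrc
      obtain ⟨ρ₀, hρ₀, hstrict⟩ := exists_improving_rotation v hn A hsrc
      set B : Fin n → Finset ι := fun i => A (ρ₀ i) with hB
      have hμB : μ B < μ A := by
        rw [hμ]
        apply Finset.card_lt_card
        constructor
        · intro C hC
          simp only [Finset.mem_filter, Finset.mem_univ, true_and] at hC ⊢
          exact lt_trans hstrict hC
        · intro hcontra
          have hBmem : B ∈ Finset.univ.filter (fun C : Fin n → Finset ι => SW A < SW C) := by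
            simp only [Finset.mem_filter, Finset.mem_univ, true_and]
            exact hstrict
          have := hcontra hBmem
          simp only [Finset.mem_filter, Finset.mem_univ, true_and] at this
          exact lt_irrefl _ this
      obtain ⟨ρ', hρ', σ, hσ⟩ := IHk B (by omega)
      refine ⟨ρ'.trans ρ₀, fun i => ?_, σ, fun i => ?_⟩
      · exact le_trans (hρ₀ i) (hρ' i)
      · exact hσ i

lemma lipton (hn : 0 < n)
    (hvnonneg : ∀ i S, 0 ≤ v i S)
    (hmono : ∀ i (S T : Finset ι), S ⊆ T → v i S ≤ v i T)
    (hmarg : ∀ i (S : Finset ι) (g : ι), v i (insert g S) - v i S ≤ 1) :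
    ∀ (R : Finset ι) (c : Fin n → ℝ) (A : Fin n → Finset ι),
      (∀ j, 1 ≤ c j) →
      (∀ x : ι, x ∉ R → ∃! i, x ∈ A i) →
      (∀ i, ∀ x ∈ A i, x ∉ R) →
      (∀ i j, v i (A j) ≤ v i (A i) + c j) →
      ∃ (B : Fin n → Finset ι) (π : Equiv.Perm (Fin n)),
        (∀ x : ι, ∃! i, x ∈ B i) ∧
        (∀ i j, v i (B j) ≤ v i (B i) + c (π j)) ∧
        ∑ i, v i (A i) ≤ ∑ i, v i (B i) := by
  classical
  intro R
  induction R using Finset.strongInductionOn with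
  | _ R IH =>
  intro c A hc hp hdisj hinv
  rcases Finset.eq_empty_or_nonempty R with rfl | ⟨g, hg⟩
  · refine ⟨A, 1, fun x => hp x (by simp), fun i j => ?_, le_refl _⟩
    simpa using hinv i j
  · obtain ⟨ρ, hρmono, σ, hσ⟩ := decycle v hn A
    set A1 : Fin n → Finset ι := fun i => A (ρ i) with hA1
    set A2 : Fin n → Finset ι := fun i => if i = σ then insert g (A1 σ) else A1 i with hA2
    have hA2sub : ∀ i, A1 i ⊆ A2 i := by
      intro i
      by_cases hiσ : i = σ
      · subst hiσ
        show A1 i ⊆ A2 i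
        simp only [hA2, if_pos rfl]
        exact Finset.subset_insert g _
      · show A1 i ⊆ A2 i
        simp only [hA2, if_neg hiσ]
        exact Finset.Subset.refl _
    have hA2mono : ∀ i j, v i (A1 j) ≤ v i (A2 j) := fun i j => hmono i _ _ (hA2sub j)
    -- new partial partition property
    have hp2 : ∀ x : ι, x ∉ R.erase g → ∃! i, x ∈ A2 i := by
      intro x hx
      by_cases hxg : x = g
      · subst hxg
        refine ⟨σ, ?_, ?_⟩
        · show x ∈ A2 σ
          simp only [hA2, if_pos rfl]
          exact Finset.mem_insert_self x _
        · intro j hj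
          have hj' : x ∈ A2 j := hj
          simp only [hA2] at hj'
          by_cases hjσ : j = σ
          · exact hjσ
          · simp only [if_neg hjσ] at hj'
            exact absurd hg (hdisj (ρ j) x hj')
      · have hxR : x ∉ R := by
          intro hxR
          exact hx (Finset.mem_erase.mpr ⟨hxg, hxR⟩)
        obtain ⟨i0, hi0, hu0⟩ := hp x hxR
        have hmemA2 : ∀ j, x ∈ A2 j ↔ x ∈ A1 j := by
          intro j
          simp only [hA2]
          by_cases hjσ : j = σ
          · subst hjσ
            simp [Finset.mem_insert, hxg]
          · simp only [if_neg hjσ]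
        refine ⟨ρ.symm i0, ?_, ?_⟩
        · show x ∈ A2 (ρ.symm i0)
          rw [hmemA2]
          show x ∈ A (ρ (ρ.symm i0))
          simp only [Equiv.apply_symm_apply]
          exact hi0
        · intro j hj
          have hj' : x ∈ A2 j := hj
          rw [hmemA2] at hj'
          have hj'' : x ∈ A (ρ j) := hj'
          have h1 := hu0 (ρ j) hj''
          have h2 : ρ.symm (ρ j) = ρ.symm i0 := by rw [h1]
          simpa using h2
    have hdisj2 : ∀ i, ∀ x ∈ A2 i, x ∉ R.erase g := by
      intro i x hx
      simp only [hA2] at hx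
      by_cases hiσ : i = σ
      · rw [if_pos hiσ] at hx
        rcases Finset.mem_insert.mp hx with rfl | hx2
        · exact Finset.notMem_erase x R
        · intro hmem
          exact hdisj (ρ σ) x hx2 (Finset.mem_of_mem_erase hmem)
      · rw [if_neg hiσ] at hx
        intro hmem
        exact hdisj (ρ i) x hx (Finset.mem_of_mem_erase hmem)
    have hinv1 : ∀ i j, v i (A1 j) ≤ v i (A1 i) + c (ρ j) := by
      intro i j
      calc v i (A1 j) = v i (A (ρ j)) := rfl
        _ ≤ v i (A i) + c (ρ j) := hinv i (ρ j)
        _ ≤ v i (A1 i) + c (ρ j) := by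
            have := hρmono i
            rw [hA1]; linarith
    have hinv2 : ∀ i j, v i (A2 j) ≤ v i (A2 i) + c (ρ j) := by
      intro i j
      by_cases hjσ : j = σ
      · rw [hjσ]
        have h1 : v i (A2 σ) ≤ v i (A1 σ) + 1 := by
          simp only [hA2, if_pos rfl]
          have := hmarg i (A1 σ) g
          linarith
        have h2 : v i (A1 σ) ≤ v i (A1 i) := hσ i
        have h3 : v i (A1 i) ≤ v i (A2 i) := hA2mono i i
        have h4 : 1 ≤ c (ρ σ) := hc (ρ σ)
        linarith
      · have h1 : v i (A2 j) = v i (A1 j) := by simp only [hA2, if_neg hjσ]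
        have h2 := hinv1 i j
        have h3 : v i (A1 i) ≤ v i (A2 i) := hA2mono i i
        linarith
    have hss : R.erase g ⊂ R := Finset.erase_ssubset hg
    obtain ⟨B, π', hpart, hinvB, hSW⟩ :=
      IH (R.erase g) hss (fun j => c (ρ j)) A2 (fun j => hc (ρ j)) hp2 hdisj2 hinv2
    refine ⟨B, π'.trans ρ, hpart, fun i j => hinvB i j, ?_⟩
    have hs1 : ∑ i, v i (A i) ≤ ∑ i, v i (A1 i) :=
      Finset.sum_le_sum (fun i _ => hρmono i)
    have hs2 : ∑ i, v i (A1 i) ≤ ∑ i, v i (A2 i) :=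
      Finset.sum_le_sum (fun i _ => hA2mono i i)
    linarith

lemma perm_partition (A : Fin n → Finset ι) (hA : ∀ x : ι, ∃! i, x ∈ A i)
    (π : Equiv.Perm (Fin n)) : ∀ x : ι, ∃! i, x ∈ A (π i) := by
  intro x
  obtain ⟨j, hj, hu⟩ := hA x
  refine ⟨π.symm j, ?_, ?_⟩
  · show x ∈ A (π (π.symm j))
    simp only [Equiv.apply_symm_apply]
    exact hj
  · intro k hk
    have hk' : x ∈ A (π k) := hk
    have h1 := hu (π k) hk'
    have h2 : π.symm (π k) = π.symm j := by rw [h1]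
    simpa using h2

lemma merge_bound (hv0 : ∀ i, v i ∅ = 0)
    (hmono : ∀ i (S T : Finset ι), S ⊆ T → v i S ≤ v i T)
    (Astar : Fin n → Finset ι) (hpart : ∀ x : ι, ∃! i, x ∈ Astar i)
    (hopt : ∀ B : Fin n → Finset ι, (∀ x : ι, ∃! i, x ∈ B i) →
      ∑ i, v i (B i) ≤ ∑ i, v i (Astar i))
    (i j : Fin n) (hij : i ≠ j) :
    v i (Astar j) ≤ v i (Astar i) + v j (Astar j) := by
  classical
  set B : Fin n → Finset ι :=
    fun k => if k = i then Astar i ∪ Astar j else if k = j then ∅ else Astar k with hB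
  have hBpart : ∀ x : ι, ∃! k, x ∈ B k := by
    intro x
    obtain ⟨k₀, hk₀, hu⟩ := hpart x
    by_cases hk0 : k₀ = i ∨ k₀ = j
    · refine ⟨i, ?_, ?_⟩
      · show x ∈ B i
        simp only [hB, if_pos rfl]
        rcases hk0 with rfl | rfl
        · exact Finset.mem_union_left _ hk₀
        · exact Finset.mem_union_right _ hk₀
      · intro k hk
        have hk' : x ∈ B k := hk
        simp only [hB] at hk'
        by_cases h1 : k = i
        · exact h1
        · rw [if_neg h1] at hk'
          by_cases h2 : k = j
          · rw [if_pos h2] at hk'; simp at hk'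
          · rw [if_neg h2] at hk'
            have h3 := hu k hk'
            rcases hk0 with rfl | rfl
            · exact absurd h3 h1
            · exact absurd h3 h2
    · push_neg at hk0
      refine ⟨k₀, ?_, ?_⟩
      · show x ∈ B k₀
        simp only [hB, if_neg hk0.1, if_neg hk0.2]
        exact hk₀
      · intro k hk
        have hk' : x ∈ B k := hk
        simp only [hB] at hk'
        by_cases h1 : k = i
        · rw [if_pos h1] at hk'
          rcases Finset.mem_union.mp hk' with h | h
          · exact absurd (hu i h).symm hk0.1
          · exact absurd (hu j h).symm hk0.2
        · rw [if_neg h1] at hk'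
          by_cases h2 : k = j
          · rw [if_pos h2] at hk'; simp at hk'
          · rw [if_neg h2] at hk'
            exact hu k hk'
  have hle := hopt B hBpart
  have hjmem : j ∈ Finset.univ.erase i := Finset.mem_erase.mpr ⟨hij.symm, Finset.mem_univ j⟩
  have e1 : ∀ (f : Fin n → ℝ),
      ∑ k, f k = f i + (f j + ∑ k ∈ (Finset.univ.erase i).erase j, f k) := by
    intro f
    rw [Finset.add_sum_erase _ f hjmem, Finset.add_sum_erase _ f (Finset.mem_univ i)]
  have e2 : ∑ k ∈ (Finset.univ.erase i).erase j, v k (B k)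
      = ∑ k ∈ (Finset.univ.erase i).erase j, v k (Astar k) := by
    apply Finset.sum_congr rfl
    intro k hk
    have hkj := Finset.ne_of_mem_erase hk
    have hki := Finset.ne_of_mem_erase (Finset.mem_of_mem_erase hk)
    simp only [hB, if_neg hki, if_neg hkj]
  rw [e1 (fun k => v k (B k)), e1 (fun k => v k (Astar k)), e2] at hle
  have hBi : v i (B i) = v i (Astar i ∪ Astar j) := by simp only [hB, if_pos rfl]
  have hBj : v j (B j) = 0 := by
    have : B j = ∅ := by simp [hB, Ne.symm hij]
    rw [this]; exact hv0 j
  rw [hBi, hBj] at hle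
  have hmono1 : v i (Astar j) ≤ v i (Astar i ∪ Astar j) :=
    hmono i _ _ Finset.subset_union_right
  linarith

lemma assemble (hn : 0 < n) (C : Fin n → Finset ι) (s : Fin n → ℝ) (hs0 : ∀ i, 0 ≤ s i)
    (hsEF : ∀ i j, v i (C j) - v i (C i) ≤ s i - s j) (Z : ℝ) (hsle : ∀ i, s i ≤ Z) :
    ∃ t : Fin n → ℝ, ∑ i, t i = 0 ∧ (∀ i j, v i (C i) + t i ≥ v i (C j) + t j) ∧
      ∑ i, |t i| ≤ 2 * n * Z := by
  have hn' : (0:ℝ) < n := by exact_mod_cast hn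
  set T := ∑ k, s k with hT
  have hT0 : 0 ≤ T := Finset.sum_nonneg (fun i _ => hs0 i)
  have hTle : T ≤ n * Z := by
    calc T ≤ ∑ _k : Fin n, Z := Finset.sum_le_sum (fun i _ => hsle i)
    _ = n * Z := by rw [Finset.sum_const, Finset.card_univ, Fintype.card_fin, nsmul_eq_mul]
  refine ⟨fun i => s i - T / n, ?_, ?_, ?_⟩
  · rw [Finset.sum_sub_distrib, Finset.sum_const, Finset.card_univ, Fintype.card_fin,
      nsmul_eq_mul]
    field_simp
    linarith [hT]
  · intro i j
    have := hsEF i j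
    simp only [ge_iff_le]
    linarith
  · have habs : ∀ i, |s i - T / n| ≤ s i + T / n := by
      intro i
      have h1 : 0 ≤ T / n := div_nonneg hT0 hn'.le
      have h2 := hs0 i
      exact abs_le.mpr ⟨by linarith, by linarith⟩
    calc ∑ i, |s i - T / n| ≤ ∑ i, (s i + T / n) := Finset.sum_le_sum (fun i _ => habs i)
    _ = T + n * (T / n) := by
        rw [Finset.sum_add_distrib, Finset.sum_const, Finset.card_univ, Fintype.card_fin,
          nsmul_eq_mul, hT]
    _ = 2 * T := by field_simp; ring
    _ ≤ 2 * (n * Z) := by linarith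
    _ = 2 * n * Z := by ring

end Alloc

end Stmt16Aux

open Stmt16Aux

/-- For general monotone valuations with marginal values at most 1 and
any `α ∈ (0, 1/3]`, there is an envy-free allocation with transfers `(A,t)` with
`SW(A,t) ≥ α·SW(A*)` and total transfer at most `2n²(3α·max_i v_i(A*_i) + 2)`. -/
theorem stmt16 {n : ℕ} (hn : 0 < n) {ι : Type*} [Fintype ι] [DecidableEq ι]
    (α : ℝ) (hα0 : 0 < α) (hα1 : α ≤ 1 / 3)
    (v : Fin n → Finset ι → ℝ)
    (hv0 : ∀ i, v i ∅ = 0)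
    (hvnonneg : ∀ i S, 0 ≤ v i S)
    (hmono : ∀ i (S T : Finset ι), S ⊆ T → v i S ≤ v i T)
    (hmarg : ∀ i (S : Finset ι) (g : ι), v i (insert g S) - v i S ≤ 1)
    (Astar : Fin n → Finset ι)
    (hpart : ∀ x : ι, ∃! i, x ∈ Astar i)
    (hopt : ∀ B : Fin n → Finset ι, (∀ x : ι, ∃! i, x ∈ B i) →
      ∑ i, v i (B i) ≤ ∑ i, v i (Astar i)) :
    ∃ (A : Fin n → Finset ι) (t : Fin n → ℝ),
      (∀ x : ι, ∃! i, x ∈ A i) ∧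
      ∑ i, t i = 0 ∧
      (∀ i j, v i (A i) + t i ≥ v i (A j) + t j) ∧
      (∑ i, v i (A i)) ≥ α * ∑ i, v i (Astar i) ∧
      ∑ i, |t i| ≤ 2 * (n : ℝ) ^ 2 *
        (3 * α * (Finset.univ.sup' ⟨⟨0, hn⟩, Finset.mem_univ _⟩
          fun i => v i (Astar i)) + 2) := by
  classical
  have hn' : (0:ℝ) < n := by exact_mod_cast hn
  set M : ℝ := Finset.univ.sup' ⟨⟨0, hn⟩, Finset.mem_univ _⟩ (fun i => v i (Astar i)) with hM
  have hMle : ∀ i, v i (Astar i) ≤ M :=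
    fun i => Finset.le_sup' (f := fun i => v i (Astar i)) (Finset.mem_univ i)
  have hM0 : 0 ≤ M :=
    le_trans (hvnonneg ⟨0, hn⟩ (Astar ⟨0, hn⟩)) (hMle ⟨0, hn⟩)
  set OPT : ℝ := ∑ i, v i (Astar i) with hOPT
  have hOPT0 : 0 ≤ OPT := Finset.sum_nonneg (fun i _ => hvnonneg i _)
  have hOPTle : OPT ≤ n * M := by
    calc OPT ≤ ∑ _i : Fin n, M := Finset.sum_le_sum (fun i _ => hMle i)
    _ = n * M := by rw [Finset.sum_const, Finset.card_univ, Fintype.card_fin, nsmul_eq_mul]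
  by_cases hcase : 1 ≤ 3 * α * n
  · -- Case 1: use the optimal allocation itself
    have hperm : ∀ π : Equiv.Perm (Fin n),
        ∑ i, (fun i j => v i (Astar j)) i (π i) ≤ ∑ i, (fun i j => v i (Astar j)) i i :=
      fun π => hopt (fun i => Astar (π i)) (perm_partition Astar hpart π)
    have hedge : ∀ i j, (fun i j => v i (Astar j)) i j - (fun i j => v i (Astar j)) i i
        ≤ (fun j => v j (Astar j)) j + (fun _ : Fin n => (0:ℝ)) i := by
      intro i j
      simp only
      rcases eq_or_ne i j with rfl | hij
      · have := hvnonneg i (Astar i); linarith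
      · have := merge_bound v hv0 hmono Astar hpart hopt i j hij
        linarith
    obtain ⟨s, hs0, hsEF, hsdiag, -⟩ := exists_subsidy hn (fun i j => v i (Astar j))
      (fun i j => hvnonneg i _) hperm (fun j => v j (Astar j)) (fun _ => (0:ℝ))
      (fun j => hvnonneg j _) (fun i => le_refl 0) hedge
    have hsM : ∀ i, s i ≤ M := fun i => hsdiag i
    obtain ⟨t, ht0, htEF, htbound⟩ := assemble v hn Astar s hs0 hsEF M hsM
    refine ⟨Astar, t, hpart, ht0, htEF, ?_, ?_⟩
    · nlinarith
    · have key : 2 * (n:ℝ) * M ≤ 2 * (n:ℝ)^2 * (3 * α * M + 2) := by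
        have h1 : 2 * (n:ℝ) * M * 1 ≤ 2 * n * M * (3 * α * n) := by
          apply mul_le_mul_of_nonneg_left hcase
          positivity
        nlinarith [sq_nonneg (n:ℝ), hn', hM0]
      linarith
  · -- Case 2: seeded Lipton-style allocation
    push_neg at hcase
    set θ : ℝ := α * OPT with hθdef
    have hθ0 : 0 ≤ θ := mul_nonneg hα0.le hOPT0
    have hθM : θ ≤ α * n * M := by
      have := mul_le_mul_of_nonneg_left hOPTle hα0.le
      rw [hθdef]; linarith [this]
    have hθltM : θ ≤ M := by nlinarith
    -- the agent attaining the max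
    obtain ⟨istar, -, histar⟩ := Finset.exists_mem_eq_sup'
      (⟨⟨0, hn⟩, Finset.mem_univ _⟩ : (Finset.univ : Finset (Fin n)).Nonempty)
      (fun i => v i (Astar i))
    have hMstar : θ ≤ v istar (Astar istar) := by
      have hMe : M = v istar (Astar istar) := histar
      linarith [hθltM]
    obtain ⟨Sstar, hSsub, ⟨i₀, hi₀⟩, hScap⟩ :=
      trunc v hv0 hmarg θ hθ0 (Astar istar) ⟨istar, hMstar⟩
    set A0 : Fin n → Finset ι := fun j => if j = i₀ then Sstar else ∅ with hA0
    set c : Fin n → ℝ := fun j => if j = i₀ then θ + 1 else 1 with hcdef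
    have hc1 : ∀ j, 1 ≤ c j := by
      intro j
      simp only [hcdef]
      split
      · linarith
      · linarith
    set R : Finset ι := Finset.univ \ Sstar with hR
    have hp0 : ∀ x : ι, x ∉ R → ∃! i, x ∈ A0 i := by
      intro x hx
      have hxS : x ∈ Sstar := by
        by_contra hxS
        exact hx (by simp [hR, hxS])
      refine ⟨i₀, ?_, ?_⟩
      · show x ∈ A0 i₀
        simp [hA0, hxS]
      · intro k hk
        have hk' : x ∈ A0 k := hk
        simp only [hA0] at hk'
        by_cases h : k = i₀
        · exact h
        · rw [if_neg h] at hk'; simp at hk'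
    have hdisj0 : ∀ i, ∀ x ∈ A0 i, x ∉ R := by
      intro i x hx
      simp only [hA0] at hx
      by_cases h : i = i₀
      · rw [if_pos h] at hx
        simp [hR, hx]
      · rw [if_neg h] at hx; simp at hx
    have hinv0 : ∀ i j, v i (A0 j) ≤ v i (A0 i) + c j := by
      intro i j
      have hnn := hvnonneg i (A0 i)
      by_cases h : j = i₀
      · have h1 : v i (A0 j) ≤ θ + 1 := by
          have : A0 j = Sstar := by simp [hA0, h]
          rw [this]; exact hScap i
        have h2 : c j = θ + 1 := by simp [hcdef, h]
        linarith
      · have h1 : v i (A0 j) = 0 := by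
          have : A0 j = ∅ := by simp [hA0, h]
          rw [this]; exact hv0 i
        have h2 : c j = 1 := by simp [hcdef, h]
        linarith
    obtain ⟨B, π, hBpart, hinvB, hSWB⟩ :=
      lipton v hn hvnonneg hmono hmarg R c A0 hc1 hp0 hdisj0 hinv0
    -- the welfare of B
    have hSWB' : θ ≤ ∑ i, v i (B i) := by
      have h1 : v i₀ (A0 i₀) = v i₀ Sstar := by simp [hA0]
      have h2 : θ ≤ v i₀ (A0 i₀) := by rw [h1]; exact hi₀
      have h3 : v i₀ (A0 i₀) ≤ ∑ i, v i (A0 i) :=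
        Finset.single_le_sum (fun i _ => hvnonneg i _) (Finset.mem_univ i₀)
      linarith
    -- optimal permutation of the bundles of B
    obtain ⟨σ, -, hσmax⟩ := Finset.exists_max_image (Finset.univ : Finset (Equiv.Perm (Fin n)))
      (fun σ => ∑ i, v i (B (σ i))) ⟨1, Finset.mem_univ 1⟩
    set C : Fin n → Finset ι := fun i => B (σ i) with hC
    have hCpart : ∀ x : ι, ∃! i, x ∈ C i := perm_partition B hBpart σ
    have hCSW : ∑ i, v i (B i) ≤ ∑ i, v i (C i) := by
      have := hσmax 1 (Finset.mem_univ 1)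
      simpa using this
    have hperm2 : ∀ ρ : Equiv.Perm (Fin n),
        ∑ i, (fun i j => v i (C j)) i (ρ i) ≤ ∑ i, (fun i j => v i (C j)) i i := by
      intro ρ
      have := hσmax (ρ.trans σ) (Finset.mem_univ _)
      simpa using this
    set γ : Fin n → ℝ := fun j => c (π (σ j)) with hγdef
    set δ : Fin n → ℝ := fun i => max (v i (B i) - v i (C i)) 0 with hδdef
    have hγ0 : ∀ j, 0 ≤ γ j := fun j => le_trans zero_le_one (hc1 (π (σ j)))
    have hδ0 : ∀ i, 0 ≤ δ i := fun i => le_max_right _ _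
    have hedge2 : ∀ i j, (fun i j => v i (C j)) i j - (fun i j => v i (C j)) i i
        ≤ γ j + δ i := by
      intro i j
      have h1 : v i (C j) ≤ v i (B i) + c (π (σ j)) := hinvB i (σ j)
      have h2 : v i (B i) - v i (C i) ≤ δ i := le_max_left _ _
      simp only [hγdef]
      linarith
    obtain ⟨s, hs0, hsEF, -, hsbound⟩ := exists_subsidy hn (fun i j => v i (C j))
      (fun i j => hvnonneg i _) hperm2 γ δ hγ0 hδ0 hedge2
    -- bounding the sums of γ and δ
    have hsumc : ∑ j, c j = θ + n := by
      have h1 : ∀ j, c j = (if j = i₀ then θ else 0) + 1 := by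
        intro j
        simp only [hcdef]
        split <;> ring
      rw [Finset.sum_congr rfl (fun j _ => h1 j), Finset.sum_add_distrib]
      rw [Finset.sum_ite_eq' Finset.univ i₀ (fun _ => θ)]
      simp [Finset.card_univ]
    have hsumγ : ∑ j, γ j = θ + n := by
      have h1 : ∑ j, γ j = ∑ j, c j := Equiv.sum_comp (σ.trans π) c
      rw [h1, hsumc]
    have hsumδ : ∑ i, δ i ≤ θ + n := by
      have hδle : ∀ i, δ i ≤ (v i (B i) - v i (C i)) + c (π (σ i)) := by
        intro i
        have h1 : v i (C i) ≤ v i (B i) + c (π (σ i)) := hinvB i (σ i)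
        have h2 : (0:ℝ) ≤ (v i (B i) - v i (C i)) + c (π (σ i)) := by linarith
        exact max_le (by linarith [le_trans zero_le_one (hc1 (π (σ i)))]) h2
      calc ∑ i, δ i ≤ ∑ i, ((v i (B i) - v i (C i)) + c (π (σ i))) :=
            Finset.sum_le_sum (fun i _ => hδle i)
      _ = (∑ i, v i (B i) - ∑ i, v i (C i)) + ∑ i, c (π (σ i)) := by
          rw [Finset.sum_add_distrib, Finset.sum_sub_distrib]
      _ ≤ 0 + (θ + n) := by
          have hcomp : ∑ i, c (π (σ i)) = ∑ i, c i := Equiv.sum_comp (σ.trans π) c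
          rw [hcomp, hsumc]
          linarith
      _ = θ + n := by ring
    have hsZ : ∀ i, s i ≤ 2 * (θ + n) := by
      intro i
      have := hsbound i
      linarith
    obtain ⟨t, ht0, htEF, htbound⟩ := assemble v hn C s hs0 hsEF (2 * (θ + n)) hsZ
    refine ⟨C, t, hCpart, ht0, htEF, ?_, ?_⟩
    · have h1 : θ ≤ ∑ i, v i (C i) := le_trans hSWB' hCSW
      have h2 : θ = α * OPT := hθdef
      rw [ge_iff_le]
      linarith
    · have key : 2 * (n:ℝ) * (2 * (θ + n)) ≤ 2 * (n:ℝ)^2 * (3 * α * M + 2) := by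
        have h1 : θ ≤ α * n * M := hθM
        have h2 : 0 ≤ α * M := mul_nonneg hα0.le hM0
        nlinarith [hn', sq_nonneg (n:ℝ)]
      linarith
end

section
/- In the greedy covering argument: let A* be an allocation with agents ordered so v_{π(1)}(A*_{π(1)}) ≥ ... ≥ v_{π(n)}(A*_{π(n)}), and suppose a partial allocation X satisfies: for every round k, either some newly served agent receives value at least 3α·v_{π(k)}(A*_{π(k)}), or (agent π(k) or some earlier-served agent) already holds a bundle of value at least 3α·v_{π(k)}(A*_{π(k)}). Then 3·∑_i v_i(X_i) ≥ 3α·∑_i v_i(A*_i), i.e., SW(X) ≥ α·SW(A*). -/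
/-- The greedy covering argument: agents are ordered by `π` so the values
`v_{π(k)}(A*_{π(k)})` are decreasing; `S` is the set of rounds in which a new bundle of
value at least `3α·v_{π(k)}(A*_{π(k)})` is allocated (to recipient `g k`, distinct
recipients for distinct rounds); for every other round a witness (`f k`, distinct over
such rounds, or `π k` itself) already holds value at least `3α·v_{π(k )}(A*_{π(k)})`.
Then `SW(X) ≥ α·SW(A*)`. -/
theorem stmt17 {n : ℕ} {ι : Type*} [Fintype ι]
    (v : Fin n → Finset ι → ℝ) (hv : ∀ i S, 0 ≤ v i S)
    (α : ℝ) (hα : 0 < α)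
    (Astar X : Fin n → Finset ι)
    (π : Equiv.Perm (Fin n))
    (hsort : ∀ k l : Fin n, k ≤ l →
      v (π l) (Astar (π l)) ≤ v (π k) (Astar (π k)))
    (S : Finset (Fin n))
    (g : Fin n → Fin n) (hg : Set.InjOn g ↑S)
    (hgval : ∀ k ∈ S, v (g k) (X (g k)) ≥ 3 * α * v (π k) (Astar (π k)))
    (f : Fin n → Fin n) (hf : Set.InjOn f ↑(Sᶜ))
    (hfval : ∀ k ∉ S,
      v (f k) (X (f k)) ≥ 3 * α * v (π k) (Astar (π k)) ∨
      v (π k) (X (π k)) ≥ 3 * α * v (π k) (Astar (π k))) :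
    ∑ i, v i (X i) ≥ α * ∑ i, v i (Astar i) := by

  classical
  have key : ∀ (T : Finset (Fin n)) (u : Fin n → Fin n), Set.InjOn u ↑T →
      ∑ k ∈ T, v (u k) (X (u k)) ≤ ∑ j, v j (X j) := by
    intro T u hu
    have heq : ∑ j ∈ T.image u, v j (X j) = ∑ k ∈ T, v (u k) (X (u k)) :=
      Finset.sum_image (fun a ha b hb => hu ha hb)
    rw [← heq]
    exact Finset.sum_le_sum_of_subset_of_nonneg (Finset.subset_univ _)
      (fun i _ _ => hv i _)
  set P : Fin n → Prop := fun k => v (f k) (X (f k)) ≥ 3 * α * v (π k) (Astar (π k)) with hP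
  have h1 : ∑ k ∈ S, 3 * α * v (π k) (Astar (π k)) ≤ ∑ j, v j (X j) :=
    le_trans (Finset.sum_le_sum (fun k hk => hgval k hk)) (key S g hg)
  have h2 : ∑ k ∈ Sᶜ.filter P, 3 * α * v (π k) (Astar (π k)) ≤ ∑ j, v j (X j) := by
    refine le_trans (Finset.sum_le_sum (fun k hk => ?_))
      (key _ f (hf.mono (by intro x hx; simpa using (Finset.mem_filter.mp hx).1)))
    exact (Finset.mem_filter.mp hk).2
  have h3 : ∑ k ∈ Sᶜ.filter (fun k => ¬ P k), 3 * α * v (π k) (Astar (π k)) ≤ ∑ j, v j (X j) := by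
    refine le_trans (Finset.sum_le_sum (fun k hk => ?_))
      (key _ π (π.injective.injOn))
    obtain ⟨hk1, hk2⟩ := Finset.mem_filter.mp hk
    rcases hfval k (Finset.mem_compl.mp hk1) with h | h
    · exact absurd h hk2
    · exact h
  have hsplit : ∑ k, 3 * α * v (π k) (Astar (π k)) =
      ∑ k ∈ S, 3 * α * v (π k) (Astar (π k)) +
      (∑ k ∈ Sᶜ.filter P, 3 * α * v (π k) (Astar (π k)) +
       ∑ k ∈ Sᶜ.filter (fun k => ¬ P k), 3 * α * v (π k) (Astar (π k))) := by
    rw [Finset.sum_filter_add_sum_filter_not, Finset.sum_add_sum_compl]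
  have hperm : ∑ k, 3 * α * v (π k) (Astar (π k)) = 3 * α * ∑ i, v i (Astar i) := by
    rw [← Finset.mul_sum]
    congr 1
    exact Equiv.sum_comp π (fun i => v i (Astar i))
  have : 3 * α * ∑ i, v i (Astar i) ≤ 3 * ∑ j, v j (X j) := by
    rw [← hperm, hsplit]; linarith
  linarith
end
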